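/- arXiv:1311.3737 — 3 statements merged into one kernel-verified Lean document; each statement's English description precedes it below -/
import Mathlib

section
/- Let p₀, μ > 0, T > 0, let x : [0,T] → ℝ and w : [0,T] → ℝ be C¹, set Ω₋ = {(t,y) : 0 < t < T, y < x(t)} and Ω₊ = {(t,y) : 0 < t < T, y > x(t)}, and let (ρ₋,u₋) and (ρ₊,u₊) be bounded C¹ functions on the closures of Ω₋ and Ω₊ respectively, with ρ± > 0, each solving the Chaplygin gas system ∂_t ρ + ∂_x(ρu) = 0, ∂_t(ρu) + ∂_x(ρu² + p₀ − μ²/ρ) = 0 in its region. Define ρ̂(t,y) = ρ₋(t,y) for y < x(t) and ρ̂(t,y) = ρ₊(t,y) for y > x(t), and û similarly, and write [h](t) := h₊(t,x(t)) − h₋(t,x(t)). If the first generalized Rankine–Hugoniot condition holds, d/dt ( w(t) √(1 + ẋ(t)²) ) = ẋ(t)[ρ](t) − [ρu](t) for all t ∈ (0,T), then for every smooth φ with compact support in (0,T) × ℝ: ∬ (ρ̂ ∂_t φ + ρ̂ û ∂_x φ) dy dt + ∫₀^T w(t) √(1 + ẋ(t)²) (∂_t φ + ẋ(t) ∂_x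 φ)(t, x(t)) dt = 0. -/
open Set MeasureTheory

/-- Partial derivative with respect to the first (time) variable. -/
noncomputable def pt (f : ℝ × ℝ → ℝ) (q : ℝ × ℝ) : ℝ := deriv (fun s => f (s, q.2)) q.1

/-- Partial derivative with respect to the second (space) variable. -/
noncomputable def px (f : ℝ × ℝ → ℝ) (q : ℝ × ℝ) : ℝ := deriv (fun y => f (q.1, y)) q.2

/-- The piecewise state glued along the discontinuity curve `x(t)`. -/
noncomputable def glue (x : ℝ → ℝ) (fm fp : ℝ × ℝ → ℝ) (q : ℝ × ℝ) : ℝ :=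
  if q.2 < x q.1 then fm q else fp q

lemma pt_hasDerivAt {f : ℝ × ℝ → ℝ} {q : ℝ × ℝ} (h : DifferentiableAt ℝ f q) :
    HasDerivAt (fun s => f (s, q.2)) (fderiv ℝ f q (1, 0)) q.1 := by
  have h2 : HasDerivAt (fun s : ℝ => (s, q.2)) ((1:ℝ), (0:ℝ)) q.1 :=
    (hasDerivAt_id q.1).prodMk (hasDerivAt_const q.1 q.2)
  exact (h.hasFDerivAt.comp_hasDerivAt q.1 h2)

lemma px_hasDerivAt {f : ℝ × ℝ → ℝ} {q : ℝ × ℝ} (h : DifferentiableAt ℝ f q) :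
    HasDerivAt (fun y => f (q.1, y)) (fderiv ℝ f q (0, 1)) q.2 := by
  have h2 : HasDerivAt (fun y : ℝ => (q.1, y)) ((0:ℝ), (1:ℝ)) q.2 :=
    (hasDerivAt_const q.2 q.1).prodMk (hasDerivAt_id q.2)
  exact (h.hasFDerivAt.comp_hasDerivAt q.2 h2)

lemma pt_eq {f : ℝ × ℝ → ℝ} {q : ℝ × ℝ} (h : DifferentiableAt ℝ f q) :
    pt f q = fderiv ℝ f q (1, 0) := (pt_hasDerivAt h).deriv

lemma px_eq {f : ℝ × ℝ → ℝ} {q : ℝ × ℝ} (h : DifferentiableAt ℝ f q) :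
    px f q = fderiv ℝ f q (0, 1) := (px_hasDerivAt h).deriv

lemma pt_zero {f : ℝ × ℝ → ℝ} {q : ℝ × ℝ} (h : q ∉ tsupport f) : pt f q = 0 := by
  have hf : f =ᶠ[nhds q] 0 := notMem_tsupport_iff_eventuallyEq.1 h
  have h2 : (fun s => f (s, q.2)) =ᶠ[nhds q.1] (fun _ => (0:ℝ)) := by
    have hc : Filter.Tendsto (fun s : ℝ => (s, q.2)) (nhds q.1) (nhds q) := by
      have := (Continuous.prodMk continuous_id (continuous_const : Continuous fun _ : ℝ => q.2)).continuousAt (x := q.1)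
      exact this
    exact hc.eventually hf
  rw [pt, h2.deriv_eq]; simp

lemma px_zero {f : ℝ × ℝ → ℝ} {q : ℝ × ℝ} (h : q ∉ tsupport f) : px f q = 0 := by
  have hf : f =ᶠ[nhds q] 0 := notMem_tsupport_iff_eventuallyEq.1 h
  have h2 : (fun y => f (q.1, y)) =ᶠ[nhds q.2] (fun _ => (0:ℝ)) := by
    have hc : Filter.Tendsto (fun y : ℝ => (q.1, y)) (nhds q.2) (nhds q) := by
      have := ((continuous_const : Continuous fun _ : ℝ => q.1).prodMk continuous_id).continuousAt (x := q.2)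
      exact this
    exact hc.eventually hf
  rw [px, h2.deriv_eq]; simp

lemma span_top_of_pair {s : Set (ℝ × ℝ)} {q : ℝ × ℝ} {d e c : ℝ} (hd : d ≠ 0) (hc : c ≠ 0)
    (h1 : ((0:ℝ), c) ∈ tangentConeAt ℝ s q) (h2 : (d, e) ∈ tangentConeAt ℝ s q) :
    Submodule.span ℝ (tangentConeAt ℝ s q) = ⊤ := by
  rw [Submodule.eq_top_iff']
  intro v
  have hv : v = ((v.2 - (v.1/d) * e)/c) • (((0:ℝ), c) : ℝ × ℝ) + (v.1/d) • ((d, e) : ℝ × ℝ) := by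
    ext
    · simp only [Prod.fst_add, Prod.smul_fst, smul_eq_mul]
      field_simp
      ring
    · simp only [Prod.snd_add, Prod.smul_snd, smul_eq_mul]
      field_simp
      ring
  rw [hv]
  exact add_mem (Submodule.smul_mem _ _ (Submodule.subset_span h1))
    (Submodule.smul_mem _ _ (Submodule.subset_span h2))

lemma segment_mem_aux {q p : ℝ × ℝ} {s : Set (ℝ × ℝ)}
    (h : ∀ θ : ℝ, θ ∈ Icc (0:ℝ) 1 → q + θ • (p - q) ∈ s) : segment ℝ q p ⊆ s := by
  intro r hr
  rw [segment_eq_image'] at hr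
  obtain ⟨θ, hθ, rfl⟩ := hr
  exact h θ hθ

lemma uniqueDiffOn_subgraph {a b V : ℝ} {x : ℝ → ℝ} (hab : a < b)
    (hlip : ∀ s ∈ Icc a b, ∀ t ∈ Icc a b, |x s - x t| ≤ V * |s - t|) :
    UniqueDiffOn ℝ {q : ℝ × ℝ | q.1 ∈ Icc a b ∧ q.2 ≤ x q.1} := by
  set s : Set (ℝ × ℝ) := {q : ℝ × ℝ | q.1 ∈ Icc a b ∧ q.2 ≤ x q.1} with hs
  intro q hq
  obtain ⟨ht, hy⟩ := hq
  have h1 : ((0:ℝ), (-1:ℝ)) ∈ tangentConeAt ℝ s q := by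
    have hseg : segment ℝ q (q + ((0:ℝ), (-1:ℝ))) ⊆ s := by
      refine segment_mem_aux (fun θ hθ => ?_)
      have e1 : (q + θ • ((q + ((0:ℝ), (-1:ℝ))) - q)).1 = q.1 := by
        simp
      have e2 : (q + θ • ((q + ((0:ℝ), (-1:ℝ))) - q)).2 = q.2 - θ := by
        simp [Prod.smul_snd]; ring
      refine ⟨?_, ?_⟩
      · rw [e1]; exact ht
      · rw [e1, e2]; linarith [hθ.1]
    simpa using mem_tangentConeAt_of_segment_subset hseg
  have key : ∀ dd : ℝ, dd ≠ 0 → q.1 + dd ∈ Icc a b →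
      ((dd, -|dd| * (V+1)) : ℝ × ℝ) ∈ tangentConeAt ℝ s q := by
    intro dd hdd hmem
    have hseg : segment ℝ q (q + ((dd, -|dd| * (V+1)) : ℝ × ℝ)) ⊆ s := by
      refine segment_mem_aux (fun θ hθ => ?_)
      have hθ0 := hθ.1
      have hθ1 := hθ.2
      have e1 : (q + θ • ((q + ((dd, -|dd| * (V+1)) : ℝ × ℝ)) - q)).1 = q.1 + θ * dd := by
        simp [Prod.smul_fst]
      have e2 : (q + θ • ((q + ((dd, -|dd| * (V+1)) : ℝ × ℝ)) - q)).2
          = q.2 - θ * |dd| * (V+1) := by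
        simp [Prod.smul_snd]; ring
      have hmem1 : q.1 + θ * dd ∈ Icc a b := by
        rw [mem_Icc]
        rcases le_or_gt 0 dd with hd0 | hd0
        · constructor
          · have : a ≤ q.1 := ht.1; nlinarith
          · have : q.1 + dd ≤ b := hmem.2; nlinarith
        · constructor
          · have : a ≤ q.1 + dd := hmem.1; nlinarith
          · have : q.1 ≤ b := ht.2; nlinarith
      refine ⟨?_, ?_⟩
      · rw [e1]; exact hmem1
      · rw [e1, e2]
        have hl := hlip (q.1 + θ * dd) hmem1 q.1 ht
        have habs : |q.1 + θ * dd - q.1| = θ * |dd| := by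
          rw [add_sub_cancel_left, abs_mul, abs_of_nonneg hθ.1]
        rw [habs] at hl
        have hx2 : x q.1 - V * (θ * |dd|) ≤ x (q.1 + θ * dd) := by
          have := abs_le.1 hl
          linarith [this.1, this.2]
        have hVd : 0 ≤ θ * |dd| := mul_nonneg hθ.1 (abs_nonneg _)
        nlinarith [hy]
    simpa using mem_tangentConeAt_of_segment_subset hseg
  constructor
  · rcases lt_or_ge q.1 b with hb | hb
    · have h2 := key (b - q.1) (by linarith)
        (by rw [mem_Icc]; constructor <;> linarith [ht.1, ht.2])
      rw [span_top_of_pair (by linarith : b - q.1 ≠ 0) (by norm_num : (-1:ℝ) ≠ 0) h1 h2]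
      simp [dense_univ]
    · have hqb : q.1 = b := le_antisymm ht.2 hb
      have h2 := key (a - q.1) (by rw [hqb]; intro h; linarith [sub_eq_zero.1 h])
        (by rw [mem_Icc]; constructor <;> linarith [ht.1, ht.2])
      rw [span_top_of_pair (by rw [hqb]; intro h; linarith [sub_eq_zero.1 h] : a - q.1 ≠ 0)
        (by norm_num : (-1:ℝ) ≠ 0) h1 h2]
      simp [dense_univ]
  · exact subset_closure ⟨ht, hy⟩

lemma uniqueDiffOn_supgraph {a b V : ℝ} {x : ℝ → ℝ} (hab : a < b)
    (hlip : ∀ s ∈ Icc a b, ∀ t ∈ Icc a b, |x s - x t| ≤ V * |s - t|) :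
    UniqueDiffOn ℝ {q : ℝ × ℝ | q.1 ∈ Icc a b ∧ x q.1 ≤ q.2} := by
  set s : Set (ℝ × ℝ) := {q : ℝ × ℝ | q.1 ∈ Icc a b ∧ x q.1 ≤ q.2} with hs
  intro q hq
  obtain ⟨ht, hy⟩ := hq
  have h1 : ((0:ℝ), (1:ℝ)) ∈ tangentConeAt ℝ s q := by
    have hseg : segment ℝ q (q + ((0:ℝ), (1:ℝ))) ⊆ s := by
      refine segment_mem_aux (fun θ hθ => ?_)
      have e1 : (q + θ • ((q + ((0:ℝ), (1:ℝ))) - q)).1 = q.1 := by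
        simp
      have e2 : (q + θ • ((q + ((0:ℝ), (1:ℝ))) - q)).2 = q.2 + θ := by
        simp [Prod.smul_snd]
      refine ⟨?_, ?_⟩
      · rw [e1]; exact ht
      · rw [e1, e2]; linarith [hθ.1]
    simpa using mem_tangentConeAt_of_segment_subset hseg
  have key : ∀ dd : ℝ, dd ≠ 0 → q.1 + dd ∈ Icc a b →
      ((dd, |dd| * (V+1)) : ℝ × ℝ) ∈ tangentConeAt ℝ s q := by
    intro dd hdd hmem
    have hseg : segment ℝ q (q + ((dd, |dd| * (V+1)) : ℝ × ℝ)) ⊆ s := by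
      refine segment_mem_aux (fun θ hθ => ?_)
      have hθ0 := hθ.1
      have hθ1 := hθ.2
      have e1 : (q + θ • ((q + ((dd, |dd| * (V+1)) : ℝ × ℝ)) - q)).1 = q.1 + θ * dd := by
        simp [Prod.smul_fst]
      have e2 : (q + θ • ((q + ((dd, |dd| * (V+1)) : ℝ × ℝ)) - q)).2
          = q.2 + θ * |dd| * (V+1) := by
        simp [Prod.smul_snd]; ring
      have hmem1 : q.1 + θ * dd ∈ Icc a b := by
        rw [mem_Icc]
        rcases le_or_gt 0 dd with hd0 | hd0
        · constructor
          · have : a ≤ q.1 := ht.1; nlinarith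
          · have : q.1 + dd ≤ b := hmem.2; nlinarith
        · constructor
          · have : a ≤ q.1 + dd := hmem.1; nlinarith
          · have : q.1 ≤ b := ht.2; nlinarith
      refine ⟨?_, ?_⟩
      · rw [e1]; exact hmem1
      · rw [e1, e2]
        have hl := hlip (q.1 + θ * dd) hmem1 q.1 ht
        have habs : |q.1 + θ * dd - q.1| = θ * |dd| := by
          rw [add_sub_cancel_left, abs_mul, abs_of_nonneg hθ.1]
        rw [habs] at hl
        have hx2 : x (q.1 + θ * dd) ≤ x q.1 + V * (θ * |dd|) := by
          have := abs_le.1 hl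
          linarith [this.1, this.2]
        have hVd : 0 ≤ θ * |dd| := mul_nonneg hθ.1 (abs_nonneg _)
        nlinarith [hy]
    simpa using mem_tangentConeAt_of_segment_subset hseg
  constructor
  · rcases lt_or_ge q.1 b with hb | hb
    · have h2 := key (b - q.1) (by intro h; linarith [sub_eq_zero.1 h])
        (by rw [mem_Icc]; constructor <;> linarith [ht.1, ht.2])
      rw [span_top_of_pair (by intro h; linarith [sub_eq_zero.1 h] : b - q.1 ≠ 0)
        (by norm_num : (1:ℝ) ≠ 0) h1 h2]
      simp [dense_univ]
    · have hqb : q.1 = b := le_antisymm ht.2 hb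
      have h2 := key (a - q.1) (by rw [hqb]; intro h; linarith [sub_eq_zero.1 h])
        (by rw [mem_Icc]; constructor <;> linarith [ht.1, ht.2])
      rw [span_top_of_pair (by rw [hqb]; intro h; linarith [sub_eq_zero.1 h] : a - q.1 ≠ 0)
        (by norm_num : (1:ℝ) ≠ 0) h1 h2]
      simp [dense_univ]
  · exact subset_closure ⟨ht, hy⟩

lemma isClosed_sub {a b : ℝ} {x : ℝ → ℝ} (hxc : ContinuousOn x (Icc a b)) :
    IsClosed {q : ℝ × ℝ | q.1 ∈ Icc a b ∧ q.2 ≤ x q.1} := by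
  have h1 : ContinuousOn (fun q : ℝ × ℝ => q.2 - x q.1) (Icc a b ×ˢ (univ : Set ℝ)) := by
    apply ContinuousOn.sub continuousOn_snd
    exact hxc.comp continuousOn_fst (fun q hq => hq.1)
  have h2 : {q : ℝ × ℝ | q.1 ∈ Icc a b ∧ q.2 ≤ x q.1}
      = (Icc a b ×ˢ (univ : Set ℝ)) ∩ (fun q : ℝ × ℝ => q.2 - x q.1) ⁻¹' (Iic 0) := by
    ext q; simp [sub_nonpos]
  rw [h2]
  exact h1.preimage_isClosed_of_isClosed ((isClosed_Icc).prod isClosed_univ) isClosed_Iic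

lemma isClosed_sup {a b : ℝ} {x : ℝ → ℝ} (hxc : ContinuousOn x (Icc a b)) :
    IsClosed {q : ℝ × ℝ | q.1 ∈ Icc a b ∧ x q.1 ≤ q.2} := by
  have h1 : ContinuousOn (fun q : ℝ × ℝ => x q.1 - q.2) (Icc a b ×ˢ (univ : Set ℝ)) := by
    apply ContinuousOn.sub _ continuousOn_snd
    exact hxc.comp continuousOn_fst (fun q hq => hq.1)
  have h2 : {q : ℝ × ℝ | q.1 ∈ Icc a b ∧ x q.1 ≤ q.2}
      = (Icc a b ×ˢ (univ : Set ℝ)) ∩ (fun q : ℝ × ℝ => x q.1 - q.2) ⁻¹' (Iic 0) := by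
    ext q; simp [sub_nonpos]
  rw [h2]
  exact h1.preimage_isClosed_of_isClosed ((isClosed_Icc).prod isClosed_univ) isClosed_Iic

lemma integrableOn_piece {s' E W : Set (ℝ × ℝ)} {g : ℝ × ℝ → ℝ}
    (hs' : IsClosed s') (hW : IsCompact W) (hg : ContinuousOn g s')
    (hE : MeasurableSet E) (hEs : E ⊆ s') (hEW : E ⊆ W) : IntegrableOn g E := by
  have hK : IsCompact (s' ∩ W) := hW.inter_left hs'
  obtain ⟨C, hC⟩ := hK.exists_bound_of_continuousOn (hg.mono inter_subset_left)
  refine Integrable.mono' (g := fun _ => C) ?_ ?_ ?_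
  · exact integrableOn_const (lt_of_le_of_lt (measure_mono hEW) hW.measure_lt_top).ne
  · exact (hg.mono hEs).aestronglyMeasurable hE
  · refine (ae_restrict_iff' hE).2 (Filter.Eventually.of_forall fun q hq => ?_)
    exact hC q ⟨hEs hq, hEW hq⟩

lemma mem_nhds_lt {a b : ℝ} {x : ℝ → ℝ} (hxc : ContinuousOn x (Icc a b)) {q : ℝ × ℝ}
    (h1 : q.1 ∈ Ioo a b) (h2 : q.2 < x q.1) :
    {p : ℝ × ℝ | p.1 ∈ Icc a b ∧ p.2 ≤ x p.1} ∈ nhds q := by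
  have hx1 : ContinuousAt x q.1 := hxc.continuousAt (Icc_mem_nhds h1.1 h1.2)
  have hc : ContinuousAt (fun p : ℝ × ℝ => x p.1 - p.2) q :=
    (hx1.comp continuousAt_fst).sub continuousAt_snd
  have h3 : (fun p : ℝ × ℝ => x p.1 - p.2) ⁻¹' (Ioi 0) ∈ nhds q :=
    hc (Ioi_mem_nhds (by simp only; linarith))
  have h4 : (Prod.fst : ℝ × ℝ → ℝ) ⁻¹' (Icc a b) ∈ nhds q :=
    continuousAt_fst (Icc_mem_nhds h1.1 h1.2)
  filter_upwards [h3, h4] with p hp3 hp4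
  refine ⟨hp4, ?_⟩
  have : (0:ℝ) < x p.1 - p.2 := hp3
  linarith

lemma mem_nhds_gt {a b : ℝ} {x : ℝ → ℝ} (hxc : ContinuousOn x (Icc a b)) {q : ℝ × ℝ}
    (h1 : q.1 ∈ Ioo a b) (h2 : x q.1 < q.2) :
    {p : ℝ × ℝ | p.1 ∈ Icc a b ∧ x p.1 ≤ p.2} ∈ nhds q := by
  have hx1 : ContinuousAt x q.1 := hxc.continuousAt (Icc_mem_nhds h1.1 h1.2)
  have hc : ContinuousAt (fun p : ℝ × ℝ => p.2 - x p.1) q :=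
    continuousAt_snd.sub (hx1.comp continuousAt_fst)
  have h3 : (fun p : ℝ × ℝ => p.2 - x p.1) ⁻¹' (Ioi 0) ∈ nhds q :=
    hc (Ioi_mem_nhds (by simp only; linarith))
  have h4 : (Prod.fst : ℝ × ℝ → ℝ) ⁻¹' (Icc a b) ∈ nhds q :=
    continuousAt_fst (Icc_mem_nhds h1.1 h1.2)
  filter_upwards [h3, h4] with p hp3 hp4
  refine ⟨hp4, ?_⟩
  have : (0:ℝ) < p.2 - x p.1 := hp3
  linarith

lemma subset_closure_lt {T a b : ℝ} {x : ℝ → ℝ} (ha : 0 < a) (hbT : b < T) :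
    {q : ℝ × ℝ | q.1 ∈ Icc a b ∧ q.2 ≤ x q.1} ⊆
      closure {q : ℝ × ℝ | 0 < q.1 ∧ q.1 < T ∧ q.2 < x q.1} := by
  rintro ⟨t, y⟩ ⟨ht, hy⟩
  have htend : Filter.Tendsto (fun n : ℕ => ((t, y - 1/(n+1)) : ℝ × ℝ)) Filter.atTop
      (nhds ((t, y) : ℝ × ℝ)) := by
    refine Filter.Tendsto.prodMk_nhds tendsto_const_nhds ?_
    have h0 : Filter.Tendsto (fun n : ℕ => 1/((n:ℝ)+1)) Filter.atTop (nhds 0) :=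
      tendsto_one_div_add_atTop_nhds_zero_nat
    simpa using tendsto_const_nhds.sub h0
  refine mem_closure_of_tendsto htend (Filter.Eventually.of_forall fun n => ?_)
  have hpos : (0:ℝ) < 1/((n:ℝ)+1) := by positivity
  refine ⟨lt_of_lt_of_le ha ht.1, lt_of_le_of_lt ht.2 hbT, ?_⟩
  show y - 1/((n:ℝ)+1) < x t
  linarith [hy]

lemma subset_closure_gt {T a b : ℝ} {x : ℝ → ℝ} (ha : 0 < a) (hbT : b < T) :
    {q : ℝ × ℝ | q.1 ∈ Icc a b ∧ x q.1 ≤ q.2} ⊆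
      closure {q : ℝ × ℝ | 0 < q.1 ∧ q.1 < T ∧ x q.1 < q.2} := by
  rintro ⟨t, y⟩ ⟨ht, hy⟩
  have htend : Filter.Tendsto (fun n : ℕ => ((t, y + 1/(n+1)) : ℝ × ℝ)) Filter.atTop
      (nhds ((t, y) : ℝ × ℝ)) := by
    refine Filter.Tendsto.prodMk_nhds tendsto_const_nhds ?_
    have h0 : Filter.Tendsto (fun n : ℕ => 1/((n:ℝ)+1)) Filter.atTop (nhds 0) :=
      tendsto_one_div_add_atTop_nhds_zero_nat
    simpa using tendsto_const_nhds.add h0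
  refine mem_closure_of_tendsto htend (Filter.Eventually.of_forall fun n => ?_)
  have hpos : (0:ℝ) < 1/((n:ℝ)+1) := by positivity
  refine ⟨lt_of_lt_of_le ha ht.1, lt_of_le_of_lt ht.2 hbT, ?_⟩
  show x t < y + 1/((n:ℝ)+1)
  linarith [hy]

lemma fderiv_apply_pair {f : ℝ × ℝ → ℝ} {P : ℝ × ℝ} (h : DifferentiableAt ℝ f P) (s v : ℝ) :
    fderiv ℝ f P (s, v) = s * pt f P + v * px f P := by
  have hsv : ((s, v) : ℝ × ℝ) = s • (((1:ℝ), (0:ℝ)) : ℝ × ℝ) + v • (((0:ℝ), (1:ℝ)) : ℝ × ℝ) := by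
    simp [Prod.ext_iff]
  rw [hsv]
  simp only [map_add, _root_.map_smul, smul_eq_mul]
  rw [pt_eq h, px_eq h]

lemma side_minus (T a b c d c₂ : ℝ) (x : ℝ → ℝ) (ρ u φ : ℝ × ℝ → ℝ)
    (ha : 0 < a) (hab : a < b) (hbT : b < T) (hc₂ : c₂ ≤ 0)
    (hx : ContDiffOn ℝ 1 x (Icc 0 T))
    (hρ : ContDiffOn ℝ 1 ρ {q : ℝ × ℝ | q.1 ∈ Icc a b ∧ q.2 ≤ x q.1})
    (hu : ContDiffOn ℝ 1 u {q : ℝ × ℝ | q.1 ∈ Icc a b ∧ q.2 ≤ x q.1})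
    (mass : ∀ q : ℝ × ℝ, q.1 ∈ Ioo a b → q.2 < x q.1 →
      pt ρ q + px (fun p => ρ p * u p) q = 0)
    (hφ : ContDiff ℝ (⊤ : ℕ∞) φ)
    (hsupp : tsupport φ ⊆ Ioo a b ×ˢ Ioo c d)
    (hc₂x : ∀ t ∈ Icc a b, c₂ + x t < c) :
    ∫ q in {q : ℝ × ℝ | q.1 ∈ Icc a b ∧ q.2 < x q.1 ∧ q.2 ∈ Ioo c d},
        (ρ q * pt φ q + ρ q * u q * px φ q)
      = ∫ t in a..b, (ρ (t, x t) * u (t, x t) - deriv x t * ρ (t, x t)) * φ (t, x t) := by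
  have hT0 : (0:ℝ) < T := by linarith
  have hIccIcc : Icc a b ⊆ Icc (0:ℝ) T := Icc_subset_Icc (le_of_lt ha) (le_of_lt hbT)
  have hIccIoo : Icc a b ⊆ Ioo (0:ℝ) T :=
    fun t ht => ⟨lt_of_lt_of_le ha ht.1, lt_of_le_of_lt ht.2 hbT⟩
  have hxc : ContinuousOn x (Icc a b) := hx.continuousOn.mono hIccIcc
  -- the derivative of x
  set dx : ℝ → ℝ := fun t => derivWithin x (Icc 0 T) t with hdxdef
  have hdxc : ContinuousOn dx (Icc 0 T) :=
    hx.continuousOn_derivWithin (uniqueDiffOn_Icc hT0) le_rfl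
  have hxder : ∀ t ∈ Icc a b, HasDerivAt x (dx t) t := by
    intro t ht
    have h1 : DifferentiableWithinAt ℝ x (Icc 0 T) t := (hx.differentiableOn one_ne_zero) t (hIccIcc ht)
    exact h1.hasDerivWithinAt.hasDerivAt (Icc_mem_nhds (hIccIoo ht).1 (hIccIoo ht).2)
  have hderiv_eq : ∀ t ∈ Icc a b, deriv x t = dx t := fun t ht => (hxder t ht).deriv
  -- Lipschitz bound for x
  obtain ⟨V, hV⟩ := isCompact_Icc.exists_bound_of_continuousOn hdxc
  have hlip : ∀ s ∈ Icc a b, ∀ t ∈ Icc a b, |x s - x t| ≤ V * |s - t| := by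
    intro s hs t ht
    have := (convex_Icc (0:ℝ) T).norm_image_sub_le_of_norm_hasDerivWithin_le
      (f := x) (f' := dx)
      (fun r hr => ((hx.differentiableOn one_ne_zero) r hr).hasDerivWithinAt) hV
      (hIccIcc ht) (hIccIcc hs)
    simpa [Real.norm_eq_abs] using this
  set s' : Set (ℝ × ℝ) := {q : ℝ × ℝ | q.1 ∈ Icc a b ∧ q.2 ≤ x q.1} with hs'def
  have hUD : UniqueDiffOn ℝ s' := uniqueDiffOn_subgraph hab hlip
  have hs'cl : IsClosed s' := isClosed_sub hxc
  have hρc : ContinuousOn ρ s' := hρ.continuousOn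
  have huc : ContinuousOn u s' := hu.continuousOn
  set Cρ : ℝ × ℝ → (ℝ × ℝ →L[ℝ] ℝ) := fderivWithin ℝ ρ s' with hCρdef
  have hCρc : ContinuousOn Cρ s' := hρ.continuousOn_fderivWithin hUD le_rfl
  have hφ1 : ContDiff ℝ 1 φ := hφ.of_le (by simp)
  have hφd : Differentiable ℝ φ := hφ1.differentiable one_ne_zero
  have hφcont : Continuous φ := hφ1.continuous
  have hptφc : Continuous (pt φ) := by
    have h1 : pt φ = fun q => fderiv ℝ φ q (((1:ℝ), (0:ℝ)) : ℝ × ℝ) :=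
      funext fun q => pt_eq (hφd q)
    rw [h1]
    exact (hφ1.continuous_fderiv one_ne_zero).clm_apply continuous_const
  have hpxφc : Continuous (px φ) := by
    have h1 : px φ = fun q => fderiv ℝ φ q (((0:ℝ), (1:ℝ)) : ℝ × ℝ) :=
      funext fun q => px_eq (hφd q)
    rw [h1]
    exact (hφ1.continuous_fderiv one_ne_zero).clm_apply continuous_const
  -- interior differentiability facts
  have hnh : ∀ q : ℝ × ℝ, q.1 ∈ Ioo a b → q.2 < x q.1 → s' ∈ nhds q :=
    fun q h1 h2 => mem_nhds_lt hxc h1 h2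
  have hρd : ∀ q : ℝ × ℝ, q.1 ∈ Ioo a b → q.2 < x q.1 → DifferentiableAt ℝ ρ q :=
    fun q h1 h2 => (hρ.contDiffAt (Filter.mem_of_superset (hnh q h1 h2) (fun p hp => hp))).differentiableAt one_ne_zero
  have hud : ∀ q : ℝ × ℝ, q.1 ∈ Ioo a b → q.2 < x q.1 → DifferentiableAt ℝ u q :=
    fun q h1 h2 => (hu.contDiffAt (Filter.mem_of_superset (hnh q h1 h2) (fun p hp => hp))).differentiableAt one_ne_zero
  have hfw : ∀ q : ℝ × ℝ, q.1 ∈ Ioo a b → q.2 < x q.1 → Cρ q = fderiv ℝ ρ q :=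
    fun q h1 h2 => fderivWithin_of_mem_nhds (hnh q h1 h2)
  -- the rectangle
  set R : Set (ℝ × ℝ) := Icc a b ×ˢ Icc c₂ 0 with hRdef
  have hRIcc : Icc ((a, c₂) : ℝ × ℝ) ((b, 0) : ℝ × ℝ) = R := Icc_prod_eq _ _
  have hRmeas : MeasurableSet R := measurableSet_Icc.prod measurableSet_Icc
  have hRcomp : IsCompact R := isCompact_Icc.prod isCompact_Icc
  have hΦc : ContinuousOn (fun q : ℝ × ℝ => ((q.1, q.2 + x q.1) : ℝ × ℝ)) R := by
    apply ContinuousOn.prodMk continuousOn_fst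
    exact continuousOn_snd.add (hxc.comp continuousOn_fst (fun q hq => hq.1))
  have hΦmaps : ∀ q ∈ R, ((q.1, q.2 + x q.1) : ℝ × ℝ) ∈ s' := by
    intro q hq
    refine ⟨hq.1, ?_⟩
    have h2 := hq.2.2
    show q.2 + x q.1 ≤ x q.1
    linarith
  -- derivative of the shear map
  have hΦd : ∀ q : ℝ × ℝ, q.1 ∈ Icc a b →
      HasFDerivAt (fun p : ℝ × ℝ => ((p.1, p.2 + x p.1) : ℝ × ℝ))
        ((ContinuousLinearMap.fst ℝ ℝ ℝ).prod ((ContinuousLinearMap.snd ℝ ℝ ℝ) +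
          ((1 : ℝ →L[ℝ] ℝ).smulRight (dx q.1)).comp (ContinuousLinearMap.fst ℝ ℝ ℝ))) q := by
    intro q hq
    exact (hasFDerivAt_fst).prodMk
      ((hasFDerivAt_snd).add (((hxder q.1 hq).hasFDerivAt).comp q hasFDerivAt_fst))
  have hL10 : ∀ t : ℝ, ((ContinuousLinearMap.fst ℝ ℝ ℝ).prod ((ContinuousLinearMap.snd ℝ ℝ ℝ) +
      ((1 : ℝ →L[ℝ] ℝ).smulRight (dx t)).comp (ContinuousLinearMap.fst ℝ ℝ ℝ)))
        (((1:ℝ), (0:ℝ)) : ℝ × ℝ) = (((1:ℝ), dx t) : ℝ × ℝ) := by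
    intro t
    simp [ContinuousLinearMap.prod_apply, Prod.ext_iff]
  have hL01 : ∀ t : ℝ, ((ContinuousLinearMap.fst ℝ ℝ ℝ).prod ((ContinuousLinearMap.snd ℝ ℝ ℝ) +
      ((1 : ℝ →L[ℝ] ℝ).smulRight (dx t)).comp (ContinuousLinearMap.fst ℝ ℝ ℝ)))
        (((0:ℝ), (1:ℝ)) : ℝ × ℝ) = (((0:ℝ), (1:ℝ)) : ℝ × ℝ) := by
    intro t
    simp [ContinuousLinearMap.prod_apply, Prod.ext_iff]
  -- the two integrands in sheared coordinates
  set D2 : ℝ × ℝ → ℝ := fun q => ρ (q.1, q.2 + x q.1) * pt φ (q.1, q.2 + x q.1)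
      + ρ (q.1, q.2 + x q.1) * u (q.1, q.2 + x q.1) * px φ (q.1, q.2 + x q.1) with hD2def
  set D3 : ℝ × ℝ → ℝ := fun q => dx q.1 * ((Cρ (q.1, q.2 + x q.1)) (((0:ℝ),(1:ℝ)) : ℝ × ℝ)
      * φ (q.1, q.2 + x q.1) + ρ (q.1, q.2 + x q.1) * px φ (q.1, q.2 + x q.1)) with hD3def
  have hρΦc : ContinuousOn (fun q : ℝ × ℝ => ρ (q.1, q.2 + x q.1)) R := hρc.comp hΦc hΦmaps
  have huΦc : ContinuousOn (fun q : ℝ × ℝ => u (q.1, q.2 + x q.1)) R := huc.comp hΦc hΦmaps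
  have hφΦc : ContinuousOn (fun q : ℝ × ℝ => φ (q.1, q.2 + x q.1)) R :=
    hφcont.comp_continuousOn hΦc
  have hptφΦc : ContinuousOn (fun q : ℝ × ℝ => pt φ (q.1, q.2 + x q.1)) R :=
    hptφc.comp_continuousOn hΦc
  have hpxφΦc : ContinuousOn (fun q : ℝ × ℝ => px φ (q.1, q.2 + x q.1)) R :=
    hpxφc.comp_continuousOn hΦc
  have hCρΦc : ContinuousOn (fun q : ℝ × ℝ =>
      (Cρ (q.1, q.2 + x q.1)) (((0:ℝ),(1:ℝ)) : ℝ × ℝ)) R :=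
    (hCρc.comp hΦc hΦmaps).clm_apply continuousOn_const
  have hdxRc : ContinuousOn (fun q : ℝ × ℝ => dx q.1) R :=
    hdxc.comp continuousOn_fst (fun q hq => hIccIcc hq.1)
  have hD2c : ContinuousOn D2 R := (hρΦc.mul hptφΦc).add ((hρΦc.mul huΦc).mul hpxφΦc)
  have hD3c : ContinuousOn D3 R := hdxRc.mul ((hCρΦc.mul hφΦc).add (hρΦc.mul hpxφΦc))
  have hD2i : IntegrableOn D2 R := hD2c.integrableOn_compact hRcomp
  have hD3i : IntegrableOn D3 R := hD3c.integrableOn_compact hRcomp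
  -- pointwise divergence identity on the open rectangle
  have hdivval : ∀ q : ℝ × ℝ, q.1 ∈ Ioo a b → q.2 ∈ Ioo c₂ 0 →
      fderiv ℝ (fun p : ℝ × ℝ => ρ (p.1, p.2 + x p.1) * φ (p.1, p.2 + x p.1)) q
          (((1:ℝ),(0:ℝ)) : ℝ × ℝ)
        + fderiv ℝ (fun p : ℝ × ℝ => ρ (p.1, p.2 + x p.1) * u (p.1, p.2 + x p.1)
            * φ (p.1, p.2 + x p.1)) q (((0:ℝ),(1:ℝ)) : ℝ × ℝ)
      = D2 q + D3 q := by
    intro q hq1 hq2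
    have hqIcc : q.1 ∈ Icc a b := Ioo_subset_Icc_self hq1
    set P : ℝ × ℝ := (q.1, q.2 + x q.1) with hPdef
    have hPlt : P.2 < x P.1 := by
      show q.2 + x q.1 < x q.1
      linarith [hq2.2]
    have hP1 : P.1 ∈ Ioo a b := hq1
    have hρP : DifferentiableAt ℝ ρ P := hρd P hP1 hPlt
    have huP : DifferentiableAt ℝ u P := hud P hP1 hPlt
    have hφP : DifferentiableAt ℝ φ P := hφd P
    have hΦq := hΦd q hqIcc
    have hρΦ : HasFDerivAt (fun p : ℝ × ℝ => ρ (p.1, p.2 + x p.1))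
        ((fderiv ℝ ρ P).comp ((ContinuousLinearMap.fst ℝ ℝ ℝ).prod
          ((ContinuousLinearMap.snd ℝ ℝ ℝ) +
          ((1 : ℝ →L[ℝ] ℝ).smulRight (dx q.1)).comp (ContinuousLinearMap.fst ℝ ℝ ℝ)))) q :=
      (hρP.hasFDerivAt).comp q hΦq
    have huΦ : HasFDerivAt (fun p : ℝ × ℝ => u (p.1, p.2 + x p.1))
        ((fderiv ℝ u P).comp ((ContinuousLinearMap.fst ℝ ℝ ℝ).prod
          ((ContinuousLinearMap.snd ℝ ℝ ℝ) +
          ((1 : ℝ →L[ℝ] ℝ).smulRight (dx q.1)).comp (ContinuousLinearMap.fst ℝ ℝ ℝ)))) q :=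
      (huP.hasFDerivAt).comp q hΦq
    have hφΦ : HasFDerivAt (fun p : ℝ × ℝ => φ (p.1, p.2 + x p.1))
        ((fderiv ℝ φ P).comp ((ContinuousLinearMap.fst ℝ ℝ ℝ).prod
          ((ContinuousLinearMap.snd ℝ ℝ ℝ) +
          ((1 : ℝ →L[ℝ] ℝ).smulRight (dx q.1)).comp (ContinuousLinearMap.fst ℝ ℝ ℝ)))) q :=
      (hφP.hasFDerivAt).comp q hΦq
    have hF : HasFDerivAt (fun p : ℝ × ℝ => ρ (p.1, p.2 + x p.1) * φ (p.1, p.2 + x p.1)) _ q :=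
      hρΦ.mul hφΦ
    have hG : HasFDerivAt (fun p : ℝ × ℝ => ρ (p.1, p.2 + x p.1) * u (p.1, p.2 + x p.1)
        * φ (p.1, p.2 + x p.1)) _ q := (hρΦ.mul huΦ).mul hφΦ
    rw [hF.fderiv, hG.fderiv]
    simp only [ContinuousLinearMap.add_apply, ContinuousLinearMap.coe_smul', Pi.smul_apply,
      ContinuousLinearMap.coe_comp', Function.comp_apply, smul_eq_mul, hL10 q.1, hL01 q.1]
    rw [fderiv_apply_pair hρP 1 (dx q.1), fderiv_apply_pair hφP 1 (dx q.1),
      fderiv_apply_pair hφP 0 1, fderiv_apply_pair hρP 0 1, fderiv_apply_pair huP 0 1]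
    have hmass0 := mass P hP1 hPlt
    have hpxmul : px (fun p => ρ p * u p) P = ρ P * px u P + u P * px ρ P := by
      have hdm : DifferentiableAt ℝ (fun p => ρ p * u p) P := hρP.mul huP
      have hmulP : HasFDerivAt (fun p => ρ p * u p) _ P := hρP.hasFDerivAt.mul huP.hasFDerivAt
      rw [px_eq hdm, hmulP.fderiv]
      simp only [ContinuousLinearMap.add_apply, ContinuousLinearMap.coe_smul', Pi.smul_apply,
        smul_eq_mul]
      rw [← px_eq hρP, ← px_eq huP]
    rw [hpxmul] at hmass0
    have hfwP : Cρ P = fderiv ℝ ρ P := hfw P hP1 hPlt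
    simp only [hD2def, hD3def, ← hPdef, hfwP, Pi.mul_apply]
    rw [fderiv_apply_pair hρP 0 1]
    linear_combination φ P * hmass0
  -- apply the divergence theorem
  have hFc : ContinuousOn (fun p : ℝ × ℝ => ρ (p.1, p.2 + x p.1) * φ (p.1, p.2 + x p.1))
      (Icc ((a, c₂) : ℝ × ℝ) ((b, 0) : ℝ × ℝ)) := by
    rw [hRIcc]; exact hρΦc.mul hφΦc
  have hGc : ContinuousOn (fun p : ℝ × ℝ => ρ (p.1, p.2 + x p.1) * u (p.1, p.2 + x p.1)
      * φ (p.1, p.2 + x p.1)) (Icc ((a, c₂) : ℝ × ℝ) ((b, 0) : ℝ × ℝ)) := by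
    rw [hRIcc]; exact (hρΦc.mul huΦc).mul hφΦc
  have hdiffF : ∀ q ∈ (Ioo a b ×ˢ Ioo c₂ 0 : Set (ℝ × ℝ)) \ (∅ : Set (ℝ × ℝ)),
      HasFDerivAt (fun p : ℝ × ℝ => ρ (p.1, p.2 + x p.1) * φ (p.1, p.2 + x p.1))
        (fderiv ℝ (fun p : ℝ × ℝ => ρ (p.1, p.2 + x p.1) * φ (p.1, p.2 + x p.1)) q) q := by
    rintro q ⟨⟨hq1, hq2⟩, -⟩
    have hqIcc : q.1 ∈ Icc a b := Ioo_subset_Icc_self hq1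
    have hPlt : (q.2 + x q.1) < x q.1 := by linarith [hq2.2]
    have hΦdiff : DifferentiableAt ℝ (fun p : ℝ × ℝ => ((p.1, p.2 + x p.1) : ℝ × ℝ)) q :=
      (hΦd q hqIcc).differentiableAt
    exact (((hρd (q.1, q.2 + x q.1) hq1 hPlt).comp q hΦdiff).mul
      ((hφd (q.1, q.2 + x q.1)).comp q hΦdiff)).hasFDerivAt
  have hdiffG : ∀ q ∈ (Ioo a b ×ˢ Ioo c₂ 0 : Set (ℝ × ℝ)) \ (∅ : Set (ℝ × ℝ)),
      HasFDerivAt (fun p : ℝ × ℝ => ρ (p.1, p.2 + x p.1) * u (p.1, p.2 + x p.1)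
          * φ (p.1, p.2 + x p.1))
        (fderiv ℝ (fun p : ℝ × ℝ => ρ (p.1, p.2 + x p.1) * u (p.1, p.2 + x p.1)
          * φ (p.1, p.2 + x p.1)) q) q := by
    rintro q ⟨⟨hq1, hq2⟩, -⟩
    have hqIcc : q.1 ∈ Icc a b := Ioo_subset_Icc_self hq1
    have hPlt : (q.2 + x q.1) < x q.1 := by linarith [hq2.2]
    have hΦdiff : DifferentiableAt ℝ (fun p : ℝ × ℝ => ((p.1, p.2 + x p.1) : ℝ × ℝ)) q :=
      (hΦd q hqIcc).differentiableAt
    exact ((((hρd (q.1, q.2 + x q.1) hq1 hPlt).comp q hΦdiff).mul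
      ((hud (q.1, q.2 + x q.1) hq1 hPlt).comp q hΦdiff)).mul
      ((hφd (q.1, q.2 + x q.1)).comp q hΦdiff)).hasFDerivAt
  -- a.e. identification of the divergence with D2 + D3 on R
  have hnull : volume (R \ (Ioo a b ×ˢ Ioo c₂ 0 : Set (ℝ × ℝ))) = 0 := by
    have hn1 : volume {q : ℝ × ℝ | q.1 = a} = 0 := by
      have he : {q : ℝ × ℝ | q.1 = a} = ({a} : Set ℝ) ×ˢ (univ : Set ℝ) := by
        ext q; rw [Set.mem_prod]; simp
      rw [he, Measure.volume_eq_prod, Measure.prod_prod]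
      simp [measure_singleton]
    have hn2 : volume {q : ℝ × ℝ | q.1 = b} = 0 := by
      have he : {q : ℝ × ℝ | q.1 = b} = ({b} : Set ℝ) ×ˢ (univ : Set ℝ) := by
        ext q; rw [Set.mem_prod]; simp
      rw [he, Measure.volume_eq_prod, Measure.prod_prod]
      simp [measure_singleton]
    have hn3 : volume {q : ℝ × ℝ | q.2 = c₂} = 0 := by
      have he : {q : ℝ × ℝ | q.2 = c₂} = (univ : Set ℝ) ×ˢ ({c₂} : Set ℝ) := by
        ext q; rw [Set.mem_prod]; simp
      rw [he, Measure.volume_eq_prod, Measure.prod_prod]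
      simp [measure_singleton]
    have hn4 : volume {q : ℝ × ℝ | q.2 = 0} = 0 := by
      have he : {q : ℝ × ℝ | q.2 = 0} = (univ : Set ℝ) ×ˢ ({0} : Set ℝ) := by
        ext q; rw [Set.mem_prod]; simp
      rw [he, Measure.volume_eq_prod, Measure.prod_prod]
      simp [measure_singleton]
    refine measure_mono_null ?_ (measure_union_null (measure_union_null
      (measure_union_null hn1 hn2) hn3) hn4)
    rintro ⟨t, z⟩ ⟨⟨ht, hz⟩, hn⟩
    rcases eq_or_lt_of_le ht.1 with h | h1
    · exact Or.inl (Or.inl (Or.inl h.symm))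
    rcases eq_or_lt_of_le ht.2 with h | h2
    · exact Or.inl (Or.inl (Or.inr h))
    rcases eq_or_lt_of_le hz.1 with h | h3
    · exact Or.inl (Or.inr h.symm)
    rcases eq_or_lt_of_le hz.2 with h | h4
    · exact Or.inr h
    exact absurd ⟨⟨h1, h2⟩, ⟨h3, h4⟩⟩ hn
  have haeR : ∀ᵐ q : ℝ × ℝ, q ∈ R → q ∈ (Ioo a b ×ˢ Ioo c₂ 0 : Set (ℝ × ℝ)) := by
    have h0 : ∀ᵐ q : ℝ × ℝ, q ∉ R \ (Ioo a b ×ˢ Ioo c₂ 0 : Set (ℝ × ℝ)) :=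
      measure_eq_zero_iff_ae_notMem.1 hnull
    filter_upwards [h0] with q hq hqR
    by_contra hno
    exact hq ⟨hqR, hno⟩
  have haediv : (fun q : ℝ × ℝ =>
        fderiv ℝ (fun p : ℝ × ℝ => ρ (p.1, p.2 + x p.1) * φ (p.1, p.2 + x p.1)) q
          (((1:ℝ),(0:ℝ)) : ℝ × ℝ)
        + fderiv ℝ (fun p : ℝ × ℝ => ρ (p.1, p.2 + x p.1) * u (p.1, p.2 + x p.1)
            * φ (p.1, p.2 + x p.1)) q (((0:ℝ),(1:ℝ)) : ℝ × ℝ))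
      =ᵐ[volume.restrict R] (fun q => D2 q + D3 q) := by
    rw [Filter.EventuallyEq, ae_restrict_iff' hRmeas]
    filter_upwards [haeR] with q hq hqR
    exact hdivval q (hq hqR).1 (hq hqR).2
  have hIi : IntegrableOn (fun q : ℝ × ℝ =>
      fderiv ℝ (fun p : ℝ × ℝ => ρ (p.1, p.2 + x p.1) * φ (p.1, p.2 + x p.1)) q
        (((1:ℝ),(0:ℝ)) : ℝ × ℝ)
      + fderiv ℝ (fun p : ℝ × ℝ => ρ (p.1, p.2 + x p.1) * u (p.1, p.2 + x p.1)
          * φ (p.1, p.2 + x p.1)) q (((0:ℝ),(1:ℝ)) : ℝ × ℝ))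
      (Icc ((a, c₂) : ℝ × ℝ) ((b, 0) : ℝ × ℝ)) := by
    rw [hRIcc]
    exact (hD2i.add hD3i).congr haediv.symm
  have hdivthm := integral_divergence_prod_Icc_of_hasFDerivAt_off_countable_of_le
    (fun p : ℝ × ℝ => ρ (p.1, p.2 + x p.1) * φ (p.1, p.2 + x p.1))
    (fun p : ℝ × ℝ => ρ (p.1, p.2 + x p.1) * u (p.1, p.2 + x p.1) * φ (p.1, p.2 + x p.1))
    (fun q => fderiv ℝ (fun p : ℝ × ℝ => ρ (p.1, p.2 + x p.1) * φ (p.1, p.2 + x p.1)) q)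
    (fun q => fderiv ℝ (fun p : ℝ × ℝ => ρ (p.1, p.2 + x p.1) * u (p.1, p.2 + x p.1)
      * φ (p.1, p.2 + x p.1)) q)
    ((a, c₂) : ℝ × ℝ) ((b, 0) : ℝ × ℝ) (Prod.mk_le_mk.2 ⟨hab.le, hc₂⟩)
    ∅ countable_empty hFc hGc hdiffF hdiffG hIi
  -- simplify the boundary terms
  have hbdry1 : (∫ t in a..b, ρ (t, c₂ + x t) * u (t, c₂ + x t) * φ (t, c₂ + x t)) = 0 := by
    have hzz : EqOn (fun t => ρ (t, c₂ + x t) * u (t, c₂ + x t) * φ (t, c₂ + x t))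
        (fun _ => (0:ℝ)) (uIcc a b) := by
      intro t ht
      rw [uIcc_of_le hab.le] at ht
      have hnm : ((t, c₂ + x t) : ℝ × ℝ) ∉ tsupport φ := by
        intro hmem
        have := (hsupp hmem).2.1
        exact absurd (hc₂x t ht) (not_lt.2 this.le)
      show ρ (t, c₂ + x t) * u (t, c₂ + x t) * φ (t, c₂ + x t) = 0
      rw [image_eq_zero_of_notMem_tsupport hnm, mul_zero]
    rw [intervalIntegral.integral_congr hzz, intervalIntegral.integral_zero]
  have hbdry2 : (∫ z in c₂..(0:ℝ), ρ (b, z + x b) * φ (b, z + x b)) = 0 := by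
    have hzz : EqOn (fun z => ρ (b, z + x b) * φ (b, z + x b)) (fun _ => (0:ℝ)) (uIcc c₂ 0) := by
      intro z hz
      have hnm : ((b, z + x b) : ℝ × ℝ) ∉ tsupport φ := by
        intro hmem
        exact absurd (hsupp hmem).1.2 (lt_irrefl b)
      show ρ (b, z + x b) * φ (b, z + x b) = 0
      rw [image_eq_zero_of_notMem_tsupport hnm, mul_zero]
    rw [intervalIntegral.integral_congr hzz, intervalIntegral.integral_zero]
  have hbdry3 : (∫ z in c₂..(0:ℝ), ρ (a, z + x a) * φ (a, z + x a)) = 0 := by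
    have hzz : EqOn (fun z => ρ (a, z + x a) * φ (a, z + x a)) (fun _ => (0:ℝ)) (uIcc c₂ 0) := by
      intro z hz
      have hnm : ((a, z + x a) : ℝ × ℝ) ∉ tsupport φ := by
        intro hmem
        exact absurd (hsupp hmem).1.1 (lt_irrefl a)
      show ρ (a, z + x a) * φ (a, z + x a) = 0
      rw [image_eq_zero_of_notMem_tsupport hnm, mul_zero]
    rw [intervalIntegral.integral_congr hzz, intervalIntegral.integral_zero]
  have hkey1 : (∫ q in R, D2 q) + (∫ q in R, D3 q)
      = ∫ t in a..b, ρ (t, x t) * u (t, x t) * φ (t, x t) := by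
    have e1 : ∫ q in Icc ((a, c₂) : ℝ × ℝ) ((b, 0) : ℝ × ℝ), (fderiv ℝ
        (fun p : ℝ × ℝ => ρ (p.1, p.2 + x p.1) * φ (p.1, p.2 + x p.1)) q
          (((1:ℝ),(0:ℝ)) : ℝ × ℝ)
        + fderiv ℝ (fun p : ℝ × ℝ => ρ (p.1, p.2 + x p.1) * u (p.1, p.2 + x p.1)
            * φ (p.1, p.2 + x p.1)) q (((0:ℝ),(1:ℝ)) : ℝ × ℝ))
        = (∫ q in R, D2 q) + (∫ q in R, D3 q) := by
      rw [hRIcc, integral_congr_ae haediv]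
      exact integral_add hD2i hD3i
    dsimp only at hdivthm
    rw [e1] at hdivthm
    rw [hbdry1, hbdry2, hbdry3, sub_zero, add_zero, sub_zero] at hdivthm
    rw [hdivthm]
    apply intervalIntegral.integral_congr
    intro t ht
    simp only [zero_add]
  -- Fubini for D3 with inner fundamental theorem of calculus
  have hD3iprod : IntegrableOn D3 (Icc a b ×ˢ Icc c₂ 0) ((volume : Measure ℝ).prod volume) := by
    rw [← Measure.volume_eq_prod, ← hRdef]
    exact hD3i
  have hfub3 : ∫ q in R, D3 q = ∫ t in Icc a b, (∫ z in Icc c₂ 0, D3 (t, z)) := by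
    rw [hRdef, Measure.volume_eq_prod]
    exact setIntegral_prod D3 hD3iprod
  have hinner3 : ∀ t ∈ Icc a b, (∫ z in Icc c₂ 0, D3 (t, z))
      = dx t * (ρ (t, x t) * φ (t, x t)) := by
    intro t ht
    by_cases htin : t ∈ Ioo a b
    · have hcur : ContinuousOn (fun z : ℝ => ((t, z + x t) : ℝ × ℝ)) (Icc c₂ 0) :=
        continuousOn_const.prodMk (continuousOn_id.add continuousOn_const)
      have hmapsz : ∀ z ∈ Icc c₂ 0, ((t, z + x t) : ℝ × ℝ) ∈ s' := by
        intro z hz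
        refine ⟨ht, ?_⟩
        show z + x t ≤ x t
        linarith [hz.2]
      have hgcont : ContinuousOn (fun z : ℝ => ρ (t, z + x t) * φ (t, z + x t)) (Icc c₂ 0) :=
        (hρc.comp hcur hmapsz).mul (hφcont.comp_continuousOn hcur)
      have hgder : ∀ z ∈ Ioo c₂ 0, HasDerivAt (fun z : ℝ => ρ (t, z + x t) * φ (t, z + x t))
          ((Cρ (t, z + x t)) (((0:ℝ),(1:ℝ)) : ℝ × ℝ) * φ (t, z + x t)
            + ρ (t, z + x t) * px φ (t, z + x t)) z := by
        intro z hz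
        have hyz : z + x t < x t := by linarith [hz.2]
        have hρP : DifferentiableAt ℝ ρ (t, z + x t) := hρd (t, z + x t) htin hyz
        have hcurve : HasDerivAt (fun z : ℝ => ((t, z + x t) : ℝ × ℝ))
            (((0:ℝ), (1:ℝ)) : ℝ × ℝ) z :=
          (hasDerivAt_const z t).prodMk ((hasDerivAt_id z).add_const (x t))
        have h1 : HasDerivAt (fun z : ℝ => ρ (t, z + x t))
            (fderiv ℝ ρ (t, z + x t) (((0:ℝ),(1:ℝ)) : ℝ × ℝ)) z :=
          hρP.hasFDerivAt.comp_hasDerivAt z hcurve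
        have h2 : HasDerivAt (fun z : ℝ => φ (t, z + x t)) (px φ (t, z + x t)) z := by
          rw [px_eq (hφd (t, z + x t))]
          exact (hφd (t, z + x t)).hasFDerivAt.comp_hasDerivAt z hcurve
        have h4 := h1.mul h2
        rw [hfw (t, z + x t) htin hyz]
        exact h4
      have hgint : IntervalIntegrable (fun z : ℝ => (Cρ (t, z + x t)) (((0:ℝ),(1:ℝ)) : ℝ × ℝ)
          * φ (t, z + x t) + ρ (t, z + x t) * px φ (t, z + x t)) volume c₂ 0 := by
        apply ContinuousOn.intervalIntegrable
        rw [uIcc_of_le hc₂]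
        exact (((hCρc.comp hcur hmapsz).clm_apply continuousOn_const).mul
          (hφcont.comp_continuousOn hcur)).add ((hρc.comp hcur hmapsz).mul
          (hpxφc.comp_continuousOn hcur))
      have hftc := intervalIntegral.integral_eq_sub_of_hasDeriv_right_of_le hc₂ hgcont
        (fun z hz => (hgder z hz).hasDerivWithinAt) hgint
      have hcz : φ (t, c₂ + x t) = 0 := by
        apply image_eq_zero_of_notMem_tsupport
        intro hmem
        exact absurd (hc₂x t ht) (not_lt.2 (hsupp hmem).2.1.le)
      have hIccIoc : (∫ z in Icc c₂ 0, D3 (t, z)) = ∫ z in c₂..(0:ℝ), D3 (t, z) := by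
        rw [intervalIntegral.integral_of_le hc₂,
          setIntegral_congr_set (Ioc_ae_eq_Icc (μ := (volume : Measure ℝ)))]
      rw [hIccIoc]
      have hD3eq : (fun z : ℝ => D3 (t, z)) = fun z : ℝ =>
          dx t * ((Cρ (t, z + x t)) (((0:ℝ),(1:ℝ)) : ℝ × ℝ) * φ (t, z + x t)
            + ρ (t, z + x t) * px φ (t, z + x t)) := rfl
      rw [hD3eq, intervalIntegral.integral_const_mul, hftc]
      simp only [zero_add, hcz, mul_zero, sub_zero]
    · have hnmem : ∀ y : ℝ, ((t, y) : ℝ × ℝ) ∉ tsupport φ :=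
        fun y hmem => htin (hsupp hmem).1
      have h0 : ∀ z : ℝ, D3 (t, z) = 0 := by
        intro z
        show dx t * ((Cρ (t, z + x t)) (((0:ℝ),(1:ℝ)) : ℝ × ℝ) * φ (t, z + x t)
          + ρ (t, z + x t) * px φ (t, z + x t)) = 0
        rw [image_eq_zero_of_notMem_tsupport (hnmem _), px_zero (hnmem _), mul_zero, mul_zero,
          add_zero, mul_zero]
      have hφ0 : φ (t, x t) = 0 := image_eq_zero_of_notMem_tsupport (hnmem _)
      simp only [h0, hφ0, mul_zero]
      simp
  have hD3val : ∫ q in R, D3 q = ∫ t in a..b, dx t * (ρ (t, x t) * φ (t, x t)) := by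
    rw [hfub3, setIntegral_congr_fun measurableSet_Icc hinner3,
      intervalIntegral.integral_of_le hab.le,
      setIntegral_congr_set (Ioc_ae_eq_Icc (μ := (volume : Measure ℝ)))]
  -- the region integral equals the rectangle integral of D2
  have hEmeas : MeasurableSet {q : ℝ × ℝ | q.1 ∈ Icc a b ∧ q.2 < x q.1 ∧ q.2 ∈ Ioo c d} := by
    have hEeq : {q : ℝ × ℝ | q.1 ∈ Icc a b ∧ q.2 < x q.1 ∧ q.2 ∈ Ioo c d}
        = (s' \ {q : ℝ × ℝ | q.1 ∈ Icc a b ∧ x q.1 ≤ q.2})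
          ∩ ((univ : Set ℝ) ×ˢ Ioo c d) := by
      ext q
      constructor
      · rintro ⟨h1, h2, h3⟩
        exact ⟨⟨⟨h1, le_of_lt h2⟩, fun hcon => absurd h2 (not_lt.2 hcon.2)⟩, ⟨trivial, h3⟩⟩
      · rintro ⟨⟨⟨h1, h2⟩, h3⟩, ⟨-, h4⟩⟩
        refine ⟨h1, ?_, h4⟩
        rcases lt_or_eq_of_le h2 with h | h
        · exact h
        · exact absurd ⟨h1, le_of_eq h.symm⟩ h3
    rw [hEeq]
    exact (hs'cl.measurableSet.diff (isClosed_sup hxc).measurableSet).inter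
      (MeasurableSet.univ.prod measurableSet_Ioo)
  have hEs' : {q : ℝ × ℝ | q.1 ∈ Icc a b ∧ q.2 < x q.1 ∧ q.2 ∈ Ioo c d} ⊆ s' :=
    fun q hq => ⟨hq.1, le_of_lt hq.2.1⟩
  have hEW : {q : ℝ × ℝ | q.1 ∈ Icc a b ∧ q.2 < x q.1 ∧ q.2 ∈ Ioo c d}
      ⊆ Icc a b ×ˢ Icc c d := fun q hq => ⟨hq.1, Ioo_subset_Icc_self hq.2.2⟩
  have hf₀c : ContinuousOn (fun q : ℝ × ℝ => ρ q * pt φ q + ρ q * u q * px φ q) s' :=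
    (hρc.mul (hptφc.continuousOn)).add ((hρc.mul huc).mul (hpxφc.continuousOn))
  have hEi : IntegrableOn (fun q : ℝ × ℝ => ρ q * pt φ q + ρ q * u q * px φ q)
      {q : ℝ × ℝ | q.1 ∈ Icc a b ∧ q.2 < x q.1 ∧ q.2 ∈ Ioo c d} :=
    integrableOn_piece hs'cl (isCompact_Icc.prod isCompact_Icc) hf₀c hEmeas hEs' hEW
  have hEindint : Integrable
      ({q : ℝ × ℝ | q.1 ∈ Icc a b ∧ q.2 < x q.1 ∧ q.2 ∈ Ioo c d}.indicator
        (fun q : ℝ × ℝ => ρ q * pt φ q + ρ q * u q * px φ q))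
      ((volume : Measure ℝ).prod volume) := by
    rw [← Measure.volume_eq_prod]
    exact (integrable_indicator_iff hEmeas).2 hEi
  have hfubE : ∫ q in {q : ℝ × ℝ | q.1 ∈ Icc a b ∧ q.2 < x q.1 ∧ q.2 ∈ Ioo c d},
      (ρ q * pt φ q + ρ q * u q * px φ q)
      = ∫ t : ℝ, (∫ z : ℝ, {q : ℝ × ℝ | q.1 ∈ Icc a b ∧ q.2 < x q.1 ∧ q.2 ∈ Ioo c d}.indicator
          (fun q : ℝ × ℝ => ρ q * pt φ q + ρ q * u q * px φ q) (t, z)) := by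
    rw [← integral_indicator hEmeas, Measure.volume_eq_prod]
    exact integral_prod _ hEindint
  have hindt : ∀ t : ℝ, (∫ z : ℝ, {q : ℝ × ℝ | q.1 ∈ Icc a b ∧ q.2 < x q.1 ∧ q.2 ∈ Ioo c d}.indicator
        (fun q : ℝ × ℝ => ρ q * pt φ q + ρ q * u q * px φ q) (t, z))
      = (Icc a b).indicator
        (fun t => ∫ y in Iio (x t) ∩ Ioo c d, (ρ (t, y) * pt φ (t, y)
          + ρ (t, y) * u (t, y) * px φ (t, y))) t := by
    intro t
    by_cases ht : t ∈ Icc a b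
    · rw [indicator_of_mem ht]
      have heq : (fun z => {q : ℝ × ℝ | q.1 ∈ Icc a b ∧ q.2 < x q.1 ∧ q.2 ∈ Ioo c d}.indicator
            (fun q : ℝ × ℝ => ρ q * pt φ q + ρ q * u q * px φ q) (t, z))
          = (Iio (x t) ∩ Ioo c d).indicator
            (fun y => ρ (t, y) * pt φ (t, y) + ρ (t, y) * u (t, y) * px φ (t, y)) := by
        funext z
        by_cases hz : z ∈ Iio (x t) ∩ Ioo c d
        · rw [indicator_of_mem hz, indicator_of_mem]
          exact ⟨ht, hz.1, hz.2⟩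
        · rw [indicator_of_notMem hz, indicator_of_notMem]
          intro hmem
          exact hz ⟨hmem.2.1, hmem.2.2⟩
      rw [heq, integral_indicator (measurableSet_Iio.inter measurableSet_Ioo)]
    · rw [indicator_of_notMem ht]
      have heq : (fun z => {q : ℝ × ℝ | q.1 ∈ Icc a b ∧ q.2 < x q.1 ∧ q.2 ∈ Ioo c d}.indicator
            (fun q : ℝ × ℝ => ρ q * pt φ q + ρ q * u q * px φ q) (t, z)) = (fun _ => (0:ℝ)) := by
        funext z
        exact indicator_of_notMem (fun hmem => ht hmem.1) _
      rw [heq, integral_zero]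
  have hsliceval : ∀ t ∈ Icc a b, (∫ y in Iio (x t) ∩ Ioo c d,
        (ρ (t, y) * pt φ (t, y) + ρ (t, y) * u (t, y) * px φ (t, y)))
      = ∫ z in Icc c₂ 0, D2 (t, z) := by
    intro t ht
    have hsub1 : Iio (x t) ∩ Ioo c d ⊆ Ioo (c₂ + x t) (x t) := by
      intro y hy
      exact ⟨by linarith [hc₂x t ht, hy.2.1], hy.1⟩
    have hzero : ∀ y ∈ Ioo (c₂ + x t) (x t) \ (Iio (x t) ∩ Ioo c d),
        (ρ (t, y) * pt φ (t, y) + ρ (t, y) * u (t, y) * px φ (t, y)) = 0 := by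
      intro y hy
      have hns : ((t, y) : ℝ × ℝ) ∉ tsupport φ := by
        intro hmem
        exact hy.2 ⟨hy.1.2, (hsupp hmem).2⟩
      rw [pt_zero hns, px_zero hns, mul_zero, mul_zero, add_zero]
    have h1 : (∫ y in Ioo (c₂ + x t) (x t),
          (ρ (t, y) * pt φ (t, y) + ρ (t, y) * u (t, y) * px φ (t, y)))
        = ∫ y in Iio (x t) ∩ Ioo c d,
          (ρ (t, y) * pt φ (t, y) + ρ (t, y) * u (t, y) * px φ (t, y)) :=
      setIntegral_eq_of_subset_of_forall_diff_eq_zero measurableSet_Ioo hsub1 hzero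
    rw [← h1]
    have hle : c₂ + x t ≤ x t := by linarith
    rw [setIntegral_congr_set (Ioo_ae_eq_Ioc (μ := (volume : Measure ℝ))),
      ← intervalIntegral.integral_of_le hle]
    have h2 := intervalIntegral.integral_comp_add_right (a := c₂) (b := (0:ℝ))
      (fun y => ρ (t, y) * pt φ (t, y) + ρ (t, y) * u (t, y) * px φ (t, y)) (x t)
    rw [zero_add] at h2
    rw [← h2, intervalIntegral.integral_of_le hc₂,
      setIntegral_congr_set (Ioc_ae_eq_Icc (μ := (volume : Measure ℝ)))]
  have hEval : ∫ q in {q : ℝ × ℝ | q.1 ∈ Icc a b ∧ q.2 < x q.1 ∧ q.2 ∈ Ioo c d},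
      (ρ q * pt φ q + ρ q * u q * px φ q) = ∫ q in R, D2 q := by
    have hD2iprod : IntegrableOn D2 (Icc a b ×ˢ Icc c₂ 0) ((volume : Measure ℝ).prod volume) := by
      rw [← Measure.volume_eq_prod, ← hRdef]
      exact hD2i
    have hfubD2 : ∫ q in R, D2 q = ∫ t in Icc a b, (∫ z in Icc c₂ 0, D2 (t, z)) := by
      rw [hRdef, Measure.volume_eq_prod]
      exact setIntegral_prod D2 hD2iprod
    rw [hfubE, hfubD2]
    have hh : (fun t : ℝ => ∫ z : ℝ, {q : ℝ × ℝ | q.1 ∈ Icc a b ∧ q.2 < x q.1 ∧ q.2 ∈ Ioo c d}.indicator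
          (fun q : ℝ × ℝ => ρ q * pt φ q + ρ q * u q * px φ q) (t, z))
        = (Icc a b).indicator (fun t => ∫ y in Iio (x t) ∩ Ioo c d,
          (ρ (t, y) * pt φ (t, y) + ρ (t, y) * u (t, y) * px φ (t, y))) := funext hindt
    rw [hh, integral_indicator measurableSet_Icc]
    exact setIntegral_congr_fun measurableSet_Icc hsliceval
  -- final assembly
  have hcurve2 : ContinuousOn (fun t : ℝ => ((t, x t) : ℝ × ℝ)) (Icc a b) :=
    continuousOn_id.prodMk hxc
  have hmaps2 : ∀ t ∈ Icc a b, ((t, x t) : ℝ × ℝ) ∈ s' := fun t ht => ⟨ht, le_refl _⟩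
  have hABi1 : IntervalIntegrable (fun t => ρ (t, x t) * u (t, x t) * φ (t, x t)) volume a b := by
    apply ContinuousOn.intervalIntegrable
    rw [uIcc_of_le hab.le]
    exact ((hρc.comp hcurve2 hmaps2).mul (huc.comp hcurve2 hmaps2)).mul
      (hφcont.comp_continuousOn hcurve2)
  have hABi2 : IntervalIntegrable (fun t => dx t * (ρ (t, x t) * φ (t, x t))) volume a b := by
    apply ContinuousOn.intervalIntegrable
    rw [uIcc_of_le hab.le]
    exact (hdxc.mono hIccIcc).mul ((hρc.comp hcurve2 hmaps2).mul
      (hφcont.comp_continuousOn hcurve2))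
  rw [hEval]
  have hfin : ∫ q in R, D2 q = (∫ t in a..b, ρ (t, x t) * u (t, x t) * φ (t, x t))
      - ∫ t in a..b, dx t * (ρ (t, x t) * φ (t, x t)) := by
    rw [← hkey1, hD3val]
    ring
  rw [hfin, ← intervalIntegral.integral_sub hABi1 hABi2]
  apply intervalIntegral.integral_congr
  intro t ht
  rw [uIcc_of_le hab.le] at ht
  show ρ (t, x t) * u (t, x t) * φ (t, x t) - dx t * (ρ (t, x t) * φ (t, x t))
    = (ρ (t, x t) * u (t, x t) - deriv x t * ρ (t, x t)) * φ (t, x t)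
  rw [hderiv_eq t ht]
  ring


lemma side_plus (T a b c d d₂ : ℝ) (x : ℝ → ℝ) (ρ u φ : ℝ × ℝ → ℝ)
    (ha : 0 < a) (hab : a < b) (hbT : b < T) (hd₂ : 0 ≤ d₂)
    (hx : ContDiffOn ℝ 1 x (Icc 0 T))
    (hρ : ContDiffOn ℝ 1 ρ {q : ℝ × ℝ | q.1 ∈ Icc a b ∧ x q.1 ≤ q.2})
    (hu : ContDiffOn ℝ 1 u {q : ℝ × ℝ | q.1 ∈ Icc a b ∧ x q.1 ≤ q.2})
    (mass : ∀ q : ℝ × ℝ, q.1 ∈ Ioo a b → x q.1 < q.2 →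
      pt ρ q + px (fun p => ρ p * u p) q = 0)
    (hφ : ContDiff ℝ (⊤ : ℕ∞) φ)
    (hsupp : tsupport φ ⊆ Ioo a b ×ˢ Ioo c d)
    (hd₂x : ∀ t ∈ Icc a b, d < d₂ + x t) :
    ∫ q in {q : ℝ × ℝ | q.1 ∈ Icc a b ∧ x q.1 ≤ q.2 ∧ q.2 ∈ Ioo c d},
        (ρ q * pt φ q + ρ q * u q * px φ q)
      = ∫ t in a..b, (deriv x t * ρ (t, x t) - ρ (t, x t) * u (t, x t)) * φ (t, x t) := by
  have hT0 : (0:ℝ) < T := by linarith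
  have hIccIcc : Icc a b ⊆ Icc (0:ℝ) T := Icc_subset_Icc (le_of_lt ha) (le_of_lt hbT)
  have hIccIoo : Icc a b ⊆ Ioo (0:ℝ) T :=
    fun t ht => ⟨lt_of_lt_of_le ha ht.1, lt_of_le_of_lt ht.2 hbT⟩
  have hxc : ContinuousOn x (Icc a b) := hx.continuousOn.mono hIccIcc
  set dx : ℝ → ℝ := fun t => derivWithin x (Icc 0 T) t with hdxdef
  have hdxc : ContinuousOn dx (Icc 0 T) :=
    hx.continuousOn_derivWithin (uniqueDiffOn_Icc hT0) le_rfl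
  have hxder : ∀ t ∈ Icc a b, HasDerivAt x (dx t) t := by
    intro t ht
    have h1 : DifferentiableWithinAt ℝ x (Icc 0 T) t := (hx.differentiableOn one_ne_zero) t (hIccIcc ht)
    exact h1.hasDerivWithinAt.hasDerivAt (Icc_mem_nhds (hIccIoo ht).1 (hIccIoo ht).2)
  have hderiv_eq : ∀ t ∈ Icc a b, deriv x t = dx t := fun t ht => (hxder t ht).deriv
  obtain ⟨V, hV⟩ := isCompact_Icc.exists_bound_of_continuousOn hdxc
  have hlip : ∀ s ∈ Icc a b, ∀ t ∈ Icc a b, |x s - x t| ≤ V * |s - t| := by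
    intro s hs t ht
    have := (convex_Icc (0:ℝ) T).norm_image_sub_le_of_norm_hasDerivWithin_le
      (f := x) (f' := dx)
      (fun r hr => ((hx.differentiableOn one_ne_zero) r hr).hasDerivWithinAt) hV
      (hIccIcc ht) (hIccIcc hs)
    simpa [Real.norm_eq_abs] using this
  set s' : Set (ℝ × ℝ) := {q : ℝ × ℝ | q.1 ∈ Icc a b ∧ x q.1 ≤ q.2} with hs'def
  have hUD : UniqueDiffOn ℝ s' := uniqueDiffOn_supgraph hab hlip
  have hs'cl : IsClosed s' := isClosed_sup hxc
  have hρc : ContinuousOn ρ s' := hρ.continuousOn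
  have huc : ContinuousOn u s' := hu.continuousOn
  set Cρ : ℝ × ℝ → (ℝ × ℝ →L[ℝ] ℝ) := fderivWithin ℝ ρ s' with hCρdef
  have hCρc : ContinuousOn Cρ s' := hρ.continuousOn_fderivWithin hUD le_rfl
  have hφ1 : ContDiff ℝ 1 φ := hφ.of_le (by simp)
  have hφd : Differentiable ℝ φ := hφ1.differentiable one_ne_zero
  have hφcont : Continuous φ := hφ1.continuous
  have hptφc : Continuous (pt φ) := by
    have h1 : pt φ = fun q => fderiv ℝ φ q (((1:ℝ), (0:ℝ)) : ℝ × ℝ) :=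
      funext fun q => pt_eq (hφd q)
    rw [h1]
    exact (hφ1.continuous_fderiv one_ne_zero).clm_apply continuous_const
  have hpxφc : Continuous (px φ) := by
    have h1 : px φ = fun q => fderiv ℝ φ q (((0:ℝ), (1:ℝ)) : ℝ × ℝ) :=
      funext fun q => px_eq (hφd q)
    rw [h1]
    exact (hφ1.continuous_fderiv one_ne_zero).clm_apply continuous_const
  have hnh : ∀ q : ℝ × ℝ, q.1 ∈ Ioo a b → x q.1 < q.2 → s' ∈ nhds q :=
    fun q h1 h2 => mem_nhds_gt hxc h1 h2
  have hρd : ∀ q : ℝ × ℝ, q.1 ∈ Ioo a b → x q.1 < q.2 → DifferentiableAt ℝ ρ q :=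
    fun q h1 h2 => (hρ.contDiffAt (Filter.mem_of_superset (hnh q h1 h2)
      (fun p hp => hp))).differentiableAt one_ne_zero
  have hud : ∀ q : ℝ × ℝ, q.1 ∈ Ioo a b → x q.1 < q.2 → DifferentiableAt ℝ u q :=
    fun q h1 h2 => (hu.contDiffAt (Filter.mem_of_superset (hnh q h1 h2)
      (fun p hp => hp))).differentiableAt one_ne_zero
  have hfw : ∀ q : ℝ × ℝ, q.1 ∈ Ioo a b → x q.1 < q.2 → Cρ q = fderiv ℝ ρ q :=
    fun q h1 h2 => fderivWithin_of_mem_nhds (hnh q h1 h2)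
  set R : Set (ℝ × ℝ) := Icc a b ×ˢ Icc 0 d₂ with hRdef
  have hRIcc : Icc ((a, 0) : ℝ × ℝ) ((b, d₂) : ℝ × ℝ) = R := Icc_prod_eq _ _
  have hRmeas : MeasurableSet R := measurableSet_Icc.prod measurableSet_Icc
  have hRcomp : IsCompact R := isCompact_Icc.prod isCompact_Icc
  have hΦc : ContinuousOn (fun q : ℝ × ℝ => ((q.1, q.2 + x q.1) : ℝ × ℝ)) R := by
    apply ContinuousOn.prodMk continuousOn_fst
    exact continuousOn_snd.add (hxc.comp continuousOn_fst (fun q hq => hq.1))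
  have hΦmaps : ∀ q ∈ R, ((q.1, q.2 + x q.1) : ℝ × ℝ) ∈ s' := by
    intro q hq
    refine ⟨hq.1, ?_⟩
    have h2 := hq.2.1
    show x q.1 ≤ q.2 + x q.1
    linarith
  have hΦd : ∀ q : ℝ × ℝ, q.1 ∈ Icc a b →
      HasFDerivAt (fun p : ℝ × ℝ => ((p.1, p.2 + x p.1) : ℝ × ℝ))
        ((ContinuousLinearMap.fst ℝ ℝ ℝ).prod ((ContinuousLinearMap.snd ℝ ℝ ℝ) +
          ((1 : ℝ →L[ℝ] ℝ).smulRight (dx q.1)).comp (ContinuousLinearMap.fst ℝ ℝ ℝ))) q := by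
    intro q hq
    exact (hasFDerivAt_fst).prodMk
      ((hasFDerivAt_snd).add (((hxder q.1 hq).hasFDerivAt).comp q hasFDerivAt_fst))
  have hL10 : ∀ t : ℝ, ((ContinuousLinearMap.fst ℝ ℝ ℝ).prod ((ContinuousLinearMap.snd ℝ ℝ ℝ) +
      ((1 : ℝ →L[ℝ] ℝ).smulRight (dx t)).comp (ContinuousLinearMap.fst ℝ ℝ ℝ)))
        (((1:ℝ), (0:ℝ)) : ℝ × ℝ) = (((1:ℝ), dx t) : ℝ × ℝ) := by
    intro t
    simp [ContinuousLinearMap.prod_apply, Prod.ext_iff]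
  have hL01 : ∀ t : ℝ, ((ContinuousLinearMap.fst ℝ ℝ ℝ).prod ((ContinuousLinearMap.snd ℝ ℝ ℝ) +
      ((1 : ℝ →L[ℝ] ℝ).smulRight (dx t)).comp (ContinuousLinearMap.fst ℝ ℝ ℝ)))
        (((0:ℝ), (1:ℝ)) : ℝ × ℝ) = (((0:ℝ), (1:ℝ)) : ℝ × ℝ) := by
    intro t
    simp [ContinuousLinearMap.prod_apply, Prod.ext_iff]
  set D2 : ℝ × ℝ → ℝ := fun q => ρ (q.1, q.2 + x q.1) * pt φ (q.1, q.2 + x q.1)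
      + ρ (q.1, q.2 + x q.1) * u (q.1, q.2 + x q.1) * px φ (q.1, q.2 + x q.1) with hD2def
  set D3 : ℝ × ℝ → ℝ := fun q => dx q.1 * ((Cρ (q.1, q.2 + x q.1)) (((0:ℝ),(1:ℝ)) : ℝ × ℝ)
      * φ (q.1, q.2 + x q.1) + ρ (q.1, q.2 + x q.1) * px φ (q.1, q.2 + x q.1)) with hD3def
  have hρΦc : ContinuousOn (fun q : ℝ × ℝ => ρ (q.1, q.2 + x q.1)) R := hρc.comp hΦc hΦmaps
  have huΦc : ContinuousOn (fun q : ℝ × ℝ => u (q.1, q.2 + x q.1)) R := huc.comp hΦc hΦmaps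
  have hφΦc : ContinuousOn (fun q : ℝ × ℝ => φ (q.1, q.2 + x q.1)) R :=
    hφcont.comp_continuousOn hΦc
  have hptφΦc : ContinuousOn (fun q : ℝ × ℝ => pt φ (q.1, q.2 + x q.1)) R :=
    hptφc.comp_continuousOn hΦc
  have hpxφΦc : ContinuousOn (fun q : ℝ × ℝ => px φ (q.1, q.2 + x q.1)) R :=
    hpxφc.comp_continuousOn hΦc
  have hCρΦc : ContinuousOn (fun q : ℝ × ℝ =>
      (Cρ (q.1, q.2 + x q.1)) (((0:ℝ),(1:ℝ)) : ℝ × ℝ)) R :=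
    (hCρc.comp hΦc hΦmaps).clm_apply continuousOn_const
  have hdxRc : ContinuousOn (fun q : ℝ × ℝ => dx q.1) R :=
    hdxc.comp continuousOn_fst (fun q hq => hIccIcc hq.1)
  have hD2c : ContinuousOn D2 R := (hρΦc.mul hptφΦc).add ((hρΦc.mul huΦc).mul hpxφΦc)
  have hD3c : ContinuousOn D3 R := hdxRc.mul ((hCρΦc.mul hφΦc).add (hρΦc.mul hpxφΦc))
  have hD2i : IntegrableOn D2 R := hD2c.integrableOn_compact hRcomp
  have hD3i : IntegrableOn D3 R := hD3c.integrableOn_compact hRcomp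
  have hdivval : ∀ q : ℝ × ℝ, q.1 ∈ Ioo a b → q.2 ∈ Ioo 0 d₂ →
      fderiv ℝ (fun p : ℝ × ℝ => ρ (p.1, p.2 + x p.1) * φ (p.1, p.2 + x p.1)) q
          (((1:ℝ),(0:ℝ)) : ℝ × ℝ)
        + fderiv ℝ (fun p : ℝ × ℝ => ρ (p.1, p.2 + x p.1) * u (p.1, p.2 + x p.1)
            * φ (p.1, p.2 + x p.1)) q (((0:ℝ),(1:ℝ)) : ℝ × ℝ)
      = D2 q + D3 q := by
    intro q hq1 hq2
    have hqIcc : q.1 ∈ Icc a b := Ioo_subset_Icc_self hq1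
    set P : ℝ × ℝ := (q.1, q.2 + x q.1) with hPdef
    have hPlt : x P.1 < P.2 := by
      show x q.1 < q.2 + x q.1
      linarith [hq2.1]
    have hP1 : P.1 ∈ Ioo a b := hq1
    have hρP : DifferentiableAt ℝ ρ P := hρd P hP1 hPlt
    have huP : DifferentiableAt ℝ u P := hud P hP1 hPlt
    have hφP : DifferentiableAt ℝ φ P := hφd P
    have hΦq := hΦd q hqIcc
    have hρΦ : HasFDerivAt (fun p : ℝ × ℝ => ρ (p.1, p.2 + x p.1))
        ((fderiv ℝ ρ P).comp ((ContinuousLinearMap.fst ℝ ℝ ℝ).prod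
          ((ContinuousLinearMap.snd ℝ ℝ ℝ) +
          ((1 : ℝ →L[ℝ] ℝ).smulRight (dx q.1)).comp (ContinuousLinearMap.fst ℝ ℝ ℝ)))) q :=
      (hρP.hasFDerivAt).comp q hΦq
    have huΦ : HasFDerivAt (fun p : ℝ × ℝ => u (p.1, p.2 + x p.1))
        ((fderiv ℝ u P).comp ((ContinuousLinearMap.fst ℝ ℝ ℝ).prod
          ((ContinuousLinearMap.snd ℝ ℝ ℝ) +
          ((1 : ℝ →L[ℝ] ℝ).smulRight (dx q.1)).comp (ContinuousLinearMap.fst ℝ ℝ ℝ)))) q :=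
      (huP.hasFDerivAt).comp q hΦq
    have hφΦ : HasFDerivAt (fun p : ℝ × ℝ => φ (p.1, p.2 + x p.1))
        ((fderiv ℝ φ P).comp ((ContinuousLinearMap.fst ℝ ℝ ℝ).prod
          ((ContinuousLinearMap.snd ℝ ℝ ℝ) +
          ((1 : ℝ →L[ℝ] ℝ).smulRight (dx q.1)).comp (ContinuousLinearMap.fst ℝ ℝ ℝ)))) q :=
      (hφP.hasFDerivAt).comp q hΦq
    have hF : HasFDerivAt (fun p : ℝ × ℝ => ρ (p.1, p.2 + x p.1) * φ (p.1, p.2 + x p.1)) _ q :=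
      hρΦ.mul hφΦ
    have hG : HasFDerivAt (fun p : ℝ × ℝ => ρ (p.1, p.2 + x p.1) * u (p.1, p.2 + x p.1)
        * φ (p.1, p.2 + x p.1)) _ q := (hρΦ.mul huΦ).mul hφΦ
    rw [hF.fderiv, hG.fderiv]
    simp only [ContinuousLinearMap.add_apply, ContinuousLinearMap.coe_smul', Pi.smul_apply,
      ContinuousLinearMap.coe_comp', Function.comp_apply, smul_eq_mul, hL10 q.1, hL01 q.1]
    rw [fderiv_apply_pair hρP 1 (dx q.1), fderiv_apply_pair hφP 1 (dx q.1),
      fderiv_apply_pair hφP 0 1, fderiv_apply_pair hρP 0 1, fderiv_apply_pair huP 0 1]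
    have hmass0 := mass P hP1 hPlt
    have hpxmul : px (fun p => ρ p * u p) P = ρ P * px u P + u P * px ρ P := by
      have hdm : DifferentiableAt ℝ (fun p => ρ p * u p) P := hρP.mul huP
      have hmulP : HasFDerivAt (fun p => ρ p * u p) _ P := hρP.hasFDerivAt.mul huP.hasFDerivAt
      rw [px_eq hdm, hmulP.fderiv]
      simp only [ContinuousLinearMap.add_apply, ContinuousLinearMap.coe_smul', Pi.smul_apply,
        smul_eq_mul]
      rw [← px_eq hρP, ← px_eq huP]
    rw [hpxmul] at hmass0
    have hfwP : Cρ P = fderiv ℝ ρ P := hfw P hP1 hPlt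
    simp only [hD2def, hD3def, ← hPdef, hfwP, Pi.mul_apply]
    rw [fderiv_apply_pair hρP 0 1]
    linear_combination φ P * hmass0
  have hFc : ContinuousOn (fun p : ℝ × ℝ => ρ (p.1, p.2 + x p.1) * φ (p.1, p.2 + x p.1))
      (Icc ((a, 0) : ℝ × ℝ) ((b, d₂) : ℝ × ℝ)) := by
    rw [hRIcc]; exact hρΦc.mul hφΦc
  have hGc : ContinuousOn (fun p : ℝ × ℝ => ρ (p.1, p.2 + x p.1) * u (p.1, p.2 + x p.1)
      * φ (p.1, p.2 + x p.1)) (Icc ((a, 0) : ℝ × ℝ) ((b, d₂) : ℝ × ℝ)) := by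
    rw [hRIcc]; exact (hρΦc.mul huΦc).mul hφΦc
  have hdiffF : ∀ q ∈ (Ioo a b ×ˢ Ioo 0 d₂ : Set (ℝ × ℝ)) \ (∅ : Set (ℝ × ℝ)),
      HasFDerivAt (fun p : ℝ × ℝ => ρ (p.1, p.2 + x p.1) * φ (p.1, p.2 + x p.1))
        (fderiv ℝ (fun p : ℝ × ℝ => ρ (p.1, p.2 + x p.1) * φ (p.1, p.2 + x p.1)) q) q := by
    rintro q ⟨⟨hq1, hq2⟩, -⟩
    have hqIcc : q.1 ∈ Icc a b := Ioo_subset_Icc_self hq1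
    have hPlt : x q.1 < q.2 + x q.1 := by linarith [hq2.1]
    have hΦdiff : DifferentiableAt ℝ (fun p : ℝ × ℝ => ((p.1, p.2 + x p.1) : ℝ × ℝ)) q :=
      (hΦd q hqIcc).differentiableAt
    exact (((hρd (q.1, q.2 + x q.1) hq1 hPlt).comp q hΦdiff).mul
      ((hφd (q.1, q.2 + x q.1)).comp q hΦdiff)).hasFDerivAt
  have hdiffG : ∀ q ∈ (Ioo a b ×ˢ Ioo 0 d₂ : Set (ℝ × ℝ)) \ (∅ : Set (ℝ × ℝ)),
      HasFDerivAt (fun p : ℝ × ℝ => ρ (p.1, p.2 + x p.1) * u (p.1, p.2 + x p.1)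
          * φ (p.1, p.2 + x p.1))
        (fderiv ℝ (fun p : ℝ × ℝ => ρ (p.1, p.2 + x p.1) * u (p.1, p.2 + x p.1)
          * φ (p.1, p.2 + x p.1)) q) q := by
    rintro q ⟨⟨hq1, hq2⟩, -⟩
    have hqIcc : q.1 ∈ Icc a b := Ioo_subset_Icc_self hq1
    have hPlt : x q.1 < q.2 + x q.1 := by linarith [hq2.1]
    have hΦdiff : DifferentiableAt ℝ (fun p : ℝ × ℝ => ((p.1, p.2 + x p.1) : ℝ × ℝ)) q :=
      (hΦd q hqIcc).differentiableAt
    exact ((((hρd (q.1, q.2 + x q.1) hq1 hPlt).comp q hΦdiff).mul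
      ((hud (q.1, q.2 + x q.1) hq1 hPlt).comp q hΦdiff)).mul
      ((hφd (q.1, q.2 + x q.1)).comp q hΦdiff)).hasFDerivAt
  have hnull : volume (R \ (Ioo a b ×ˢ Ioo 0 d₂ : Set (ℝ × ℝ))) = 0 := by
    have hn1 : volume {q : ℝ × ℝ | q.1 = a} = 0 := by
      have he : {q : ℝ × ℝ | q.1 = a} = ({a} : Set ℝ) ×ˢ (univ : Set ℝ) := by
        ext q; rw [Set.mem_prod]; simp
      rw [he, Measure.volume_eq_prod, Measure.prod_prod]
      simp [measure_singleton]
    have hn2 : volume {q : ℝ × ℝ | q.1 = b} = 0 := by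
      have he : {q : ℝ × ℝ | q.1 = b} = ({b} : Set ℝ) ×ˢ (univ : Set ℝ) := by
        ext q; rw [Set.mem_prod]; simp
      rw [he, Measure.volume_eq_prod, Measure.prod_prod]
      simp [measure_singleton]
    have hn3 : volume {q : ℝ × ℝ | q.2 = 0} = 0 := by
      have he : {q : ℝ × ℝ | q.2 = 0} = (univ : Set ℝ) ×ˢ ({0} : Set ℝ) := by
        ext q; rw [Set.mem_prod]; simp
      rw [he, Measure.volume_eq_prod, Measure.prod_prod]
      simp [measure_singleton]
    have hn4 : volume {q : ℝ × ℝ | q.2 = d₂} = 0 := by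
      have he : {q : ℝ × ℝ | q.2 = d₂} = (univ : Set ℝ) ×ˢ ({d₂} : Set ℝ) := by
        ext q; rw [Set.mem_prod]; simp
      rw [he, Measure.volume_eq_prod, Measure.prod_prod]
      simp [measure_singleton]
    refine measure_mono_null ?_ (measure_union_null (measure_union_null
      (measure_union_null hn1 hn2) hn3) hn4)
    rintro ⟨t, z⟩ ⟨⟨ht, hz⟩, hn⟩
    rcases eq_or_lt_of_le ht.1 with h | h1
    · exact Or.inl (Or.inl (Or.inl h.symm))
    rcases eq_or_lt_of_le ht.2 with h | h2
    · exact Or.inl (Or.inl (Or.inr h))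
    rcases eq_or_lt_of_le hz.1 with h | h3
    · exact Or.inl (Or.inr h.symm)
    rcases eq_or_lt_of_le hz.2 with h | h4
    · exact Or.inr h
    exact absurd ⟨⟨h1, h2⟩, ⟨h3, h4⟩⟩ hn
  have haeR : ∀ᵐ q : ℝ × ℝ, q ∈ R → q ∈ (Ioo a b ×ˢ Ioo 0 d₂ : Set (ℝ × ℝ)) := by
    have h0 : ∀ᵐ q : ℝ × ℝ, q ∉ R \ (Ioo a b ×ˢ Ioo 0 d₂ : Set (ℝ × ℝ)) :=
      measure_eq_zero_iff_ae_notMem.1 hnull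
    filter_upwards [h0] with q hq hqR
    by_contra hno
    exact hq ⟨hqR, hno⟩
  have haediv : (fun q : ℝ × ℝ =>
        fderiv ℝ (fun p : ℝ × ℝ => ρ (p.1, p.2 + x p.1) * φ (p.1, p.2 + x p.1)) q
          (((1:ℝ),(0:ℝ)) : ℝ × ℝ)
        + fderiv ℝ (fun p : ℝ × ℝ => ρ (p.1, p.2 + x p.1) * u (p.1, p.2 + x p.1)
            * φ (p.1, p.2 + x p.1)) q (((0:ℝ),(1:ℝ)) : ℝ × ℝ))
      =ᵐ[volume.restrict R] (fun q => D2 q + D3 q) := by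
    rw [Filter.EventuallyEq, ae_restrict_iff' hRmeas]
    filter_upwards [haeR] with q hq hqR
    exact hdivval q (hq hqR).1 (hq hqR).2
  have hIi : IntegrableOn (fun q : ℝ × ℝ =>
      fderiv ℝ (fun p : ℝ × ℝ => ρ (p.1, p.2 + x p.1) * φ (p.1, p.2 + x p.1)) q
        (((1:ℝ),(0:ℝ)) : ℝ × ℝ)
      + fderiv ℝ (fun p : ℝ × ℝ => ρ (p.1, p.2 + x p.1) * u (p.1, p.2 + x p.1)
          * φ (p.1, p.2 + x p.1)) q (((0:ℝ),(1:ℝ)) : ℝ × ℝ))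
      (Icc ((a, 0) : ℝ × ℝ) ((b, d₂) : ℝ × ℝ)) := by
    rw [hRIcc]
    exact (hD2i.add hD3i).congr haediv.symm
  have hdivthm := integral_divergence_prod_Icc_of_hasFDerivAt_off_countable_of_le
    (fun p : ℝ × ℝ => ρ (p.1, p.2 + x p.1) * φ (p.1, p.2 + x p.1))
    (fun p : ℝ × ℝ => ρ (p.1, p.2 + x p.1) * u (p.1, p.2 + x p.1) * φ (p.1, p.2 + x p.1))
    (fun q => fderiv ℝ (fun p : ℝ × ℝ => ρ (p.1, p.2 + x p.1) * φ (p.1, p.2 + x p.1)) q)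
    (fun q => fderiv ℝ (fun p : ℝ × ℝ => ρ (p.1, p.2 + x p.1) * u (p.1, p.2 + x p.1)
      * φ (p.1, p.2 + x p.1)) q)
    ((a, 0) : ℝ × ℝ) ((b, d₂) : ℝ × ℝ) (Prod.mk_le_mk.2 ⟨hab.le, hd₂⟩)
    ∅ countable_empty hFc hGc hdiffF hdiffG hIi
  have hbdry1 : (∫ t in a..b, ρ (t, d₂ + x t) * u (t, d₂ + x t) * φ (t, d₂ + x t)) = 0 := by
    have hzz : EqOn (fun t => ρ (t, d₂ + x t) * u (t, d₂ + x t) * φ (t, d₂ + x t))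
        (fun _ => (0:ℝ)) (uIcc a b) := by
      intro t ht
      rw [uIcc_of_le hab.le] at ht
      have hnm : ((t, d₂ + x t) : ℝ × ℝ) ∉ tsupport φ := by
        intro hmem
        exact absurd (hd₂x t ht) (not_lt.2 (hsupp hmem).2.2.le)
      show ρ (t, d₂ + x t) * u (t, d₂ + x t) * φ (t, d₂ + x t) = 0
      rw [image_eq_zero_of_notMem_tsupport hnm, mul_zero]
    rw [intervalIntegral.integral_congr hzz, intervalIntegral.integral_zero]
  have hbdry2 : (∫ z in (0:ℝ)..d₂, ρ (b, z + x b) * φ (b, z + x b)) = 0 := by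
    have hzz : EqOn (fun z => ρ (b, z + x b) * φ (b, z + x b)) (fun _ => (0:ℝ)) (uIcc 0 d₂) := by
      intro z hz
      have hnm : ((b, z + x b) : ℝ × ℝ) ∉ tsupport φ := by
        intro hmem
        exact absurd (hsupp hmem).1.2 (lt_irrefl b)
      show ρ (b, z + x b) * φ (b, z + x b) = 0
      rw [image_eq_zero_of_notMem_tsupport hnm, mul_zero]
    rw [intervalIntegral.integral_congr hzz, intervalIntegral.integral_zero]
  have hbdry3 : (∫ z in (0:ℝ)..d₂, ρ (a, z + x a) * φ (a, z + x a)) = 0 := by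
    have hzz : EqOn (fun z => ρ (a, z + x a) * φ (a, z + x a)) (fun _ => (0:ℝ)) (uIcc 0 d₂) := by
      intro z hz
      have hnm : ((a, z + x a) : ℝ × ℝ) ∉ tsupport φ := by
        intro hmem
        exact absurd (hsupp hmem).1.1 (lt_irrefl a)
      show ρ (a, z + x a) * φ (a, z + x a) = 0
      rw [image_eq_zero_of_notMem_tsupport hnm, mul_zero]
    rw [intervalIntegral.integral_congr hzz, intervalIntegral.integral_zero]
  have hkey1 : (∫ q in R, D2 q) + (∫ q in R, D3 q)
      = -∫ t in a..b, ρ (t, x t) * u (t, x t) * φ (t, x t) := by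
    have e1 : ∫ q in Icc ((a, 0) : ℝ × ℝ) ((b, d₂) : ℝ × ℝ), (fderiv ℝ
        (fun p : ℝ × ℝ => ρ (p.1, p.2 + x p.1) * φ (p.1, p.2 + x p.1)) q
          (((1:ℝ),(0:ℝ)) : ℝ × ℝ)
        + fderiv ℝ (fun p : ℝ × ℝ => ρ (p.1, p.2 + x p.1) * u (p.1, p.2 + x p.1)
            * φ (p.1, p.2 + x p.1)) q (((0:ℝ),(1:ℝ)) : ℝ × ℝ))
        = (∫ q in R, D2 q) + (∫ q in R, D3 q) := by
      rw [hRIcc, integral_congr_ae haediv]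
      exact integral_add hD2i hD3i
    dsimp only at hdivthm
    rw [e1] at hdivthm
    rw [hbdry1, hbdry2, hbdry3, zero_sub, add_zero, sub_zero] at hdivthm
    rw [hdivthm]
    congr 1
    apply intervalIntegral.integral_congr
    intro t ht
    simp only [zero_add]
  have hD3iprod : IntegrableOn D3 (Icc a b ×ˢ Icc 0 d₂) ((volume : Measure ℝ).prod volume) := by
    rw [← Measure.volume_eq_prod, ← hRdef]
    exact hD3i
  have hfub3 : ∫ q in R, D3 q = ∫ t in Icc a b, (∫ z in Icc 0 d₂, D3 (t, z)) := by
    rw [hRdef, Measure.volume_eq_prod]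
    exact setIntegral_prod D3 hD3iprod
  have hinner3 : ∀ t ∈ Icc a b, (∫ z in Icc 0 d₂, D3 (t, z))
      = -(dx t * (ρ (t, x t) * φ (t, x t))) := by
    intro t ht
    by_cases htin : t ∈ Ioo a b
    · have hcur : ContinuousOn (fun z : ℝ => ((t, z + x t) : ℝ × ℝ)) (Icc 0 d₂) :=
        continuousOn_const.prodMk (continuousOn_id.add continuousOn_const)
      have hmapsz : ∀ z ∈ Icc 0 d₂, ((t, z + x t) : ℝ × ℝ) ∈ s' := by
        intro z hz
        refine ⟨ht, ?_⟩
        show x t ≤ z + x t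
        linarith [hz.1]
      have hgcont : ContinuousOn (fun z : ℝ => ρ (t, z + x t) * φ (t, z + x t)) (Icc 0 d₂) :=
        (hρc.comp hcur hmapsz).mul (hφcont.comp_continuousOn hcur)
      have hgder : ∀ z ∈ Ioo 0 d₂, HasDerivAt (fun z : ℝ => ρ (t, z + x t) * φ (t, z + x t))
          ((Cρ (t, z + x t)) (((0:ℝ),(1:ℝ)) : ℝ × ℝ) * φ (t, z + x t)
            + ρ (t, z + x t) * px φ (t, z + x t)) z := by
        intro z hz
        have hyz : x t < z + x t := by linarith [hz.1]
        have hρP : DifferentiableAt ℝ ρ (t, z + x t) := hρd (t, z + x t) htin hyz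
        have hcurve : HasDerivAt (fun z : ℝ => ((t, z + x t) : ℝ × ℝ))
            (((0:ℝ), (1:ℝ)) : ℝ × ℝ) z :=
          (hasDerivAt_const z t).prodMk ((hasDerivAt_id z).add_const (x t))
        have h1 : HasDerivAt (fun z : ℝ => ρ (t, z + x t))
            (fderiv ℝ ρ (t, z + x t) (((0:ℝ),(1:ℝ)) : ℝ × ℝ)) z :=
          hρP.hasFDerivAt.comp_hasDerivAt z hcurve
        have h2 : HasDerivAt (fun z : ℝ => φ (t, z + x t)) (px φ (t, z + x t)) z := by
          rw [px_eq (hφd (t, z + x t))]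
          exact (hφd (t, z + x t)).hasFDerivAt.comp_hasDerivAt z hcurve
        have h4 := h1.mul h2
        rw [hfw (t, z + x t) htin hyz]
        exact h4
      have hgint : IntervalIntegrable (fun z : ℝ => (Cρ (t, z + x t)) (((0:ℝ),(1:ℝ)) : ℝ × ℝ)
          * φ (t, z + x t) + ρ (t, z + x t) * px φ (t, z + x t)) volume 0 d₂ := by
        apply ContinuousOn.intervalIntegrable
        rw [uIcc_of_le hd₂]
        exact (((hCρc.comp hcur hmapsz).clm_apply continuousOn_const).mul
          (hφcont.comp_continuousOn hcur)).add ((hρc.comp hcur hmapsz).mul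
          (hpxφc.comp_continuousOn hcur))
      have hftc := intervalIntegral.integral_eq_sub_of_hasDeriv_right_of_le hd₂ hgcont
        (fun z hz => (hgder z hz).hasDerivWithinAt) hgint
      have hcz : φ (t, d₂ + x t) = 0 := by
        apply image_eq_zero_of_notMem_tsupport
        intro hmem
        exact absurd (hd₂x t ht) (not_lt.2 (hsupp hmem).2.2.le)
      have hIccIoc : (∫ z in Icc 0 d₂, D3 (t, z)) = ∫ z in (0:ℝ)..d₂, D3 (t, z) := by
        rw [intervalIntegral.integral_of_le hd₂,
          setIntegral_congr_set (Ioc_ae_eq_Icc (μ := (volume : Measure ℝ)))]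
      rw [hIccIoc]
      have hD3eq : (fun z : ℝ => D3 (t, z)) = fun z : ℝ =>
          dx t * ((Cρ (t, z + x t)) (((0:ℝ),(1:ℝ)) : ℝ × ℝ) * φ (t, z + x t)
            + ρ (t, z + x t) * px φ (t, z + x t)) := rfl
      rw [hD3eq, intervalIntegral.integral_const_mul, hftc]
      simp only [zero_add, hcz, mul_zero, zero_sub]
      ring
    · have hnmem : ∀ y : ℝ, ((t, y) : ℝ × ℝ) ∉ tsupport φ :=
        fun y hmem => htin (hsupp hmem).1
      have h0 : ∀ z : ℝ, D3 (t, z) = 0 := by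
        intro z
        show dx t * ((Cρ (t, z + x t)) (((0:ℝ),(1:ℝ)) : ℝ × ℝ) * φ (t, z + x t)
          + ρ (t, z + x t) * px φ (t, z + x t)) = 0
        rw [image_eq_zero_of_notMem_tsupport (hnmem _), px_zero (hnmem _), mul_zero, mul_zero,
          add_zero, mul_zero]
      have hφ0 : φ (t, x t) = 0 := image_eq_zero_of_notMem_tsupport (hnmem _)
      simp only [h0, hφ0, mul_zero]
      simp
  have hD3val : ∫ q in R, D3 q = ∫ t in a..b, -(dx t * (ρ (t, x t) * φ (t, x t))) := by
    rw [hfub3, setIntegral_congr_fun measurableSet_Icc hinner3,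
      intervalIntegral.integral_of_le hab.le,
      setIntegral_congr_set (Ioc_ae_eq_Icc (μ := (volume : Measure ℝ)))]
  have hEmeas : MeasurableSet {q : ℝ × ℝ | q.1 ∈ Icc a b ∧ x q.1 ≤ q.2 ∧ q.2 ∈ Ioo c d} := by
    have hEeq : {q : ℝ × ℝ | q.1 ∈ Icc a b ∧ x q.1 ≤ q.2 ∧ q.2 ∈ Ioo c d}
        = s' ∩ ((univ : Set ℝ) ×ˢ Ioo c d) := by
      ext q
      constructor
      · rintro ⟨h1, h2, h3⟩
        exact ⟨⟨h1, h2⟩, ⟨trivial, h3⟩⟩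
      · rintro ⟨⟨h1, h2⟩, ⟨-, h4⟩⟩
        exact ⟨h1, h2, h4⟩
    rw [hEeq]
    exact hs'cl.measurableSet.inter (MeasurableSet.univ.prod measurableSet_Ioo)
  have hEs' : {q : ℝ × ℝ | q.1 ∈ Icc a b ∧ x q.1 ≤ q.2 ∧ q.2 ∈ Ioo c d} ⊆ s' :=
    fun q hq => ⟨hq.1, hq.2.1⟩
  have hEW : {q : ℝ × ℝ | q.1 ∈ Icc a b ∧ x q.1 ≤ q.2 ∧ q.2 ∈ Ioo c d}
      ⊆ Icc a b ×ˢ Icc c d := fun q hq => ⟨hq.1, Ioo_subset_Icc_self hq.2.2⟩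
  have hf₀c : ContinuousOn (fun q : ℝ × ℝ => ρ q * pt φ q + ρ q * u q * px φ q) s' :=
    (hρc.mul (hptφc.continuousOn)).add ((hρc.mul huc).mul (hpxφc.continuousOn))
  have hEi : IntegrableOn (fun q : ℝ × ℝ => ρ q * pt φ q + ρ q * u q * px φ q)
      {q : ℝ × ℝ | q.1 ∈ Icc a b ∧ x q.1 ≤ q.2 ∧ q.2 ∈ Ioo c d} :=
    integrableOn_piece hs'cl (isCompact_Icc.prod isCompact_Icc) hf₀c hEmeas hEs' hEW
  have hEindint : Integrable
      ({q : ℝ × ℝ | q.1 ∈ Icc a b ∧ x q.1 ≤ q.2 ∧ q.2 ∈ Ioo c d}.indicator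
        (fun q : ℝ × ℝ => ρ q * pt φ q + ρ q * u q * px φ q))
      ((volume : Measure ℝ).prod volume) := by
    rw [← Measure.volume_eq_prod]
    exact (integrable_indicator_iff hEmeas).2 hEi
  have hfubE : ∫ q in {q : ℝ × ℝ | q.1 ∈ Icc a b ∧ x q.1 ≤ q.2 ∧ q.2 ∈ Ioo c d},
      (ρ q * pt φ q + ρ q * u q * px φ q)
      = ∫ t : ℝ, (∫ z : ℝ, {q : ℝ × ℝ | q.1 ∈ Icc a b ∧ x q.1 ≤ q.2 ∧ q.2 ∈ Ioo c d}.indicator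
          (fun q : ℝ × ℝ => ρ q * pt φ q + ρ q * u q * px φ q) (t, z)) := by
    rw [← integral_indicator hEmeas, Measure.volume_eq_prod]
    exact integral_prod _ hEindint
  have hindt : ∀ t : ℝ, (∫ z : ℝ, {q : ℝ × ℝ | q.1 ∈ Icc a b ∧ x q.1 ≤ q.2 ∧ q.2 ∈ Ioo c d}.indicator
        (fun q : ℝ × ℝ => ρ q * pt φ q + ρ q * u q * px φ q) (t, z))
      = (Icc a b).indicator
        (fun t => ∫ y in Ici (x t) ∩ Ioo c d, (ρ (t, y) * pt φ (t, y)
          + ρ (t, y) * u (t, y) * px φ (t, y))) t := by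
    intro t
    by_cases ht : t ∈ Icc a b
    · rw [indicator_of_mem ht]
      have heq : (fun z => {q : ℝ × ℝ | q.1 ∈ Icc a b ∧ x q.1 ≤ q.2 ∧ q.2 ∈ Ioo c d}.indicator
            (fun q : ℝ × ℝ => ρ q * pt φ q + ρ q * u q * px φ q) (t, z))
          = (Ici (x t) ∩ Ioo c d).indicator
            (fun y => ρ (t, y) * pt φ (t, y) + ρ (t, y) * u (t, y) * px φ (t, y)) := by
        funext z
        by_cases hz : z ∈ Ici (x t) ∩ Ioo c d
        · rw [indicator_of_mem hz, indicator_of_mem]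
          exact ⟨ht, hz.1, hz.2⟩
        · rw [indicator_of_notMem hz, indicator_of_notMem]
          intro hmem
          exact hz ⟨hmem.2.1, hmem.2.2⟩
      rw [heq, integral_indicator (measurableSet_Ici.inter measurableSet_Ioo)]
    · rw [indicator_of_notMem ht]
      have heq : (fun z => {q : ℝ × ℝ | q.1 ∈ Icc a b ∧ x q.1 ≤ q.2 ∧ q.2 ∈ Ioo c d}.indicator
            (fun q : ℝ × ℝ => ρ q * pt φ q + ρ q * u q * px φ q) (t, z)) = (fun _ => (0:ℝ)) := by
        funext z
        exact indicator_of_notMem (fun hmem => ht hmem.1) _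
      rw [heq, integral_zero]
  have hsliceval : ∀ t ∈ Icc a b, (∫ y in Ici (x t) ∩ Ioo c d,
        (ρ (t, y) * pt φ (t, y) + ρ (t, y) * u (t, y) * px φ (t, y)))
      = ∫ z in Icc 0 d₂, D2 (t, z) := by
    intro t ht
    have hsub1 : Ici (x t) ∩ Ioo c d ⊆ Ico (x t) (d₂ + x t) := by
      intro y hy
      exact ⟨hy.1, by linarith [hd₂x t ht, hy.2.2]⟩
    have hzero : ∀ y ∈ Ico (x t) (d₂ + x t) \ (Ici (x t) ∩ Ioo c d),
        (ρ (t, y) * pt φ (t, y) + ρ (t, y) * u (t, y) * px φ (t, y)) = 0 := by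
      intro y hy
      have hns : ((t, y) : ℝ × ℝ) ∉ tsupport φ := by
        intro hmem
        exact hy.2 ⟨hy.1.1, (hsupp hmem).2⟩
      rw [pt_zero hns, px_zero hns, mul_zero, mul_zero, add_zero]
    have h1 : (∫ y in Ico (x t) (d₂ + x t),
          (ρ (t, y) * pt φ (t, y) + ρ (t, y) * u (t, y) * px φ (t, y)))
        = ∫ y in Ici (x t) ∩ Ioo c d,
          (ρ (t, y) * pt φ (t, y) + ρ (t, y) * u (t, y) * px φ (t, y)) :=
      setIntegral_eq_of_subset_of_forall_diff_eq_zero measurableSet_Ico hsub1 hzero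
    rw [← h1]
    have hle : x t ≤ d₂ + x t := by linarith
    rw [setIntegral_congr_set (Ico_ae_eq_Ioc (μ := (volume : Measure ℝ))),
      ← intervalIntegral.integral_of_le hle]
    have h2 := intervalIntegral.integral_comp_add_right (a := (0:ℝ)) (b := d₂)
      (fun y => ρ (t, y) * pt φ (t, y) + ρ (t, y) * u (t, y) * px φ (t, y)) (x t)
    rw [zero_add] at h2
    rw [← h2, intervalIntegral.integral_of_le hd₂,
      setIntegral_congr_set (Ioc_ae_eq_Icc (μ := (volume : Measure ℝ)))]
  have hEval : ∫ q in {q : ℝ × ℝ | q.1 ∈ Icc a b ∧ x q.1 ≤ q.2 ∧ q.2 ∈ Ioo c d},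
      (ρ q * pt φ q + ρ q * u q * px φ q) = ∫ q in R, D2 q := by
    have hD2iprod : IntegrableOn D2 (Icc a b ×ˢ Icc 0 d₂) ((volume : Measure ℝ).prod volume) := by
      rw [← Measure.volume_eq_prod, ← hRdef]
      exact hD2i
    have hfubD2 : ∫ q in R, D2 q = ∫ t in Icc a b, (∫ z in Icc 0 d₂, D2 (t, z)) := by
      rw [hRdef, Measure.volume_eq_prod]
      exact setIntegral_prod D2 hD2iprod
    rw [hfubE, hfubD2]
    have hh : (fun t : ℝ => ∫ z : ℝ, {q : ℝ × ℝ | q.1 ∈ Icc a b ∧ x q.1 ≤ q.2 ∧ q.2 ∈ Ioo c d}.indicator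
          (fun q : ℝ × ℝ => ρ q * pt φ q + ρ q * u q * px φ q) (t, z))
        = (Icc a b).indicator (fun t => ∫ y in Ici (x t) ∩ Ioo c d,
          (ρ (t, y) * pt φ (t, y) + ρ (t, y) * u (t, y) * px φ (t, y))) := funext hindt
    rw [hh, integral_indicator measurableSet_Icc]
    exact setIntegral_congr_fun measurableSet_Icc hsliceval
  have hcurve2 : ContinuousOn (fun t : ℝ => ((t, x t) : ℝ × ℝ)) (Icc a b) :=
    continuousOn_id.prodMk hxc
  have hmaps2 : ∀ t ∈ Icc a b, ((t, x t) : ℝ × ℝ) ∈ s' := fun t ht => ⟨ht, le_refl _⟩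
  have hABi1 : IntervalIntegrable (fun t => -(ρ (t, x t) * u (t, x t) * φ (t, x t))) volume a b := by
    apply ContinuousOn.intervalIntegrable
    rw [uIcc_of_le hab.le]
    exact (((hρc.comp hcurve2 hmaps2).mul (huc.comp hcurve2 hmaps2)).mul
      (hφcont.comp_continuousOn hcurve2)).neg
  have hABi2 : IntervalIntegrable (fun t => -(dx t * (ρ (t, x t) * φ (t, x t)))) volume a b := by
    apply ContinuousOn.intervalIntegrable
    rw [uIcc_of_le hab.le]
    exact ((hdxc.mono hIccIcc).mul ((hρc.comp hcurve2 hmaps2).mul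
      (hφcont.comp_continuousOn hcurve2))).neg
  have h5 : (∫ q in R, D2 q) = -(∫ t in a..b, ρ (t, x t) * u (t, x t) * φ (t, x t))
      - ∫ q in R, D3 q := by
    rw [← hkey1]
    ring
  rw [hEval, h5, hD3val,
    ← intervalIntegral.integral_neg (f := fun t => ρ (t, x t) * u (t, x t) * φ (t, x t)),
    ← intervalIntegral.integral_sub hABi1 hABi2]
  apply intervalIntegral.integral_congr
  intro t ht
  rw [uIcc_of_le hab.le] at ht
  show -(ρ (t, x t) * u (t, x t) * φ (t, x t)) - -(dx t * (ρ (t, x t) * φ (t, x t)))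
    = (deriv x t * ρ (t, x t) - ρ (t, x t) * u (t, x t)) * φ (t, x t)
  rw [hderiv_eq t ht]
  ring

/-- A δ-shock whose weight satisfies the first generalized Rankine–Hugoniot condition
`d/dt (w √(1+ẋ²)) = ẋ[ρ] − [ρu]` satisfies the measure-theoretic mass equation. -/
theorem delta_shock_mass_identity
    (p₀ μ T : ℝ) (hp₀ : 0 < p₀) (hμ : 0 < μ) (hT : 0 < T)
    (x w : ℝ → ℝ)
    (hx : ContDiffOn ℝ 1 x (Icc 0 T)) (hw : ContDiffOn ℝ 1 w (Icc 0 T))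
    (ρm um ρp up : ℝ × ℝ → ℝ)
    (hρm : ContDiffOn ℝ 1 ρm (closure {q : ℝ × ℝ | 0 < q.1 ∧ q.1 < T ∧ q.2 < x q.1}))
    (hum : ContDiffOn ℝ 1 um (closure {q : ℝ × ℝ | 0 < q.1 ∧ q.1 < T ∧ q.2 < x q.1}))
    (hρp : ContDiffOn ℝ 1 ρp (closure {q : ℝ × ℝ | 0 < q.1 ∧ q.1 < T ∧ x q.1 < q.2}))
    (hup : ContDiffOn ℝ 1 up (closure {q : ℝ × ℝ | 0 < q.1 ∧ q.1 < T ∧ x q.1 < q.2}))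
    (hbdd : ∃ M : ℝ,
      (∀ q ∈ closure {q : ℝ × ℝ | 0 < q.1 ∧ q.1 < T ∧ q.2 < x q.1},
        |ρm q| ≤ M ∧ |um q| ≤ M) ∧
      (∀ q ∈ closure {q : ℝ × ℝ | 0 < q.1 ∧ q.1 < T ∧ x q.1 < q.2},
        |ρp q| ≤ M ∧ |up q| ≤ M))
    (hρmpos : ∀ q ∈ closure {q : ℝ × ℝ | 0 < q.1 ∧ q.1 < T ∧ q.2 < x q.1}, 0 < ρm q)
    (hρppos : ∀ q ∈ closure {q : ℝ × ℝ | 0 < q.1 ∧ q.1 < T ∧ x q.1 < q.2}, 0 < ρp q)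
    (massm : ∀ q ∈ {q : ℝ × ℝ | 0 < q.1 ∧ q.1 < T ∧ q.2 < x q.1},
      pt ρm q + px (fun q => ρm q * um q) q = 0)
    (momentumm : ∀ q ∈ {q : ℝ × ℝ | 0 < q.1 ∧ q.1 < T ∧ q.2 < x q.1},
      pt (fun q => ρm q * um q) q
        + px (fun q => ρm q * um q ^ 2 + p₀ - μ ^ 2 / ρm q) q = 0)
    (massp : ∀ q ∈ {q : ℝ × ℝ | 0 < q.1 ∧ q.1 < T ∧ x q.1 < q.2},
      pt ρp q + px (fun q => ρp q * up q) q = 0)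
    (momentump : ∀ q ∈ {q : ℝ × ℝ | 0 < q.1 ∧ q.1 < T ∧ x q.1 < q.2},
      pt (fun q => ρp q * up q) q
        + px (fun q => ρp q * up q ^ 2 + p₀ - μ ^ 2 / ρp q) q = 0)
    -- first generalized Rankine–Hugoniot condition
    (RH1 : ∀ t ∈ Ioo (0:ℝ) T,
      HasDerivAt (fun s => w s * Real.sqrt (1 + deriv x s ^ 2))
        (deriv x t * (ρp (t, x t) - ρm (t, x t))
          - (ρp (t, x t) * up (t, x t) - ρm (t, x t) * um (t, x t))) t) :
    ∀ φ : ℝ × ℝ → ℝ, ContDiff ℝ (⊤ : ℕ∞) φ → HasCompactSupport φ →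
      tsupport φ ⊆ Ioo (0:ℝ) T ×ˢ (univ : Set ℝ) →
      (∫ q : ℝ × ℝ, (glue x ρm ρp q * pt φ q
          + glue x ρm ρp q * glue x um up q * px φ q))
        + (∫ t in (0:ℝ)..T, w t * Real.sqrt (1 + deriv x t ^ 2)
            * (pt φ (t, x t) + deriv x t * px φ (t, x t))) = 0 := by
  intro φ hφsm hφcs hφsupp
  -- choose a time window [a, b] ⊆ (0, T) containing the time-support of φ strictly
  have hKc : IsCompact (tsupport φ) := hφcs
  set A : Set ℝ := (Prod.fst '' tsupport φ) ∪ {T/2} with hAdef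
  have hAc : IsCompact A := (hKc.image continuous_fst).union isCompact_singleton
  have hAne : A.Nonempty := ⟨T/2, Or.inr rfl⟩
  have hAsub : A ⊆ Ioo 0 T := by
    rintro t (⟨q, hq, rfl⟩ | ht)
    · exact (hφsupp hq).1
    · rw [mem_singleton_iff] at ht
      subst ht
      constructor <;> linarith
  have hαmem : sInf A ∈ A := hAc.sInf_mem hAne
  have hβmem : sSup A ∈ A := hAc.sSup_mem hAne
  have hα := hAsub hαmem
  have hβ := hAsub hβmem
  set a : ℝ := sInf A / 2 with hadef
  set b : ℝ := (sSup A + T) / 2 with hbdef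
  have h0a : 0 < a := by rw [hadef]; linarith [hα.1]
  have haα : a < sInf A := by rw [hadef]; linarith [hα.1]
  have hαβ : sInf A ≤ sSup A := csInf_le_csSup hAne hAc.bddBelow hAc.bddAbove
  have hβb : sSup A < b := by rw [hbdef]; linarith [hβ.2]
  have hbT : b < T := by rw [hbdef]; linarith [hβ.2]
  have hab : a < b := by linarith
  have hKt : ∀ q ∈ tsupport φ, q.1 ∈ Ioo a b := by
    intro q hq
    have h1 : sInf A ≤ q.1 := csInf_le hAc.bddBelow (Or.inl ⟨q, hq, rfl⟩)
    have h2 : q.1 ≤ sSup A := le_csSup hAc.bddAbove (Or.inl ⟨q, hq, rfl⟩)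
    exact ⟨by linarith, by linarith⟩
  -- choose a space window (c, d) containing the space-support of φ
  set B : Set ℝ := (Prod.snd '' tsupport φ) ∪ {0} with hBdef
  have hBc : IsCompact B := (hKc.image continuous_snd).union isCompact_singleton
  have hBne : B.Nonempty := ⟨0, Or.inr rfl⟩
  set c : ℝ := sInf B - 1 with hcdef
  set d : ℝ := sSup B + 1 with hddef
  have hKy : ∀ q ∈ tsupport φ, q.2 ∈ Ioo c d := by
    intro q hq
    have h1 : sInf B ≤ q.2 := csInf_le hBc.bddBelow (Or.inl ⟨q, hq, rfl⟩)
    have h2 : q.2 ≤ sSup B := le_csSup hBc.bddAbove (Or.inl ⟨q, hq, rfl⟩)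
    constructor
    · rw [hcdef]; linarith
    · rw [hddef]; linarith
  have hsupp2 : tsupport φ ⊆ Ioo a b ×ˢ Ioo c d := fun q hq => ⟨hKt q hq, hKy q hq⟩
  -- bound for x on [a, b] and the vertical extents
  have hIccIcc : Icc a b ⊆ Icc (0:ℝ) T := Icc_subset_Icc (le_of_lt h0a) (le_of_lt hbT)
  have hIccIoo : Icc a b ⊆ Ioo (0:ℝ) T :=
    fun t ht => ⟨lt_of_lt_of_le h0a ht.1, lt_of_le_of_lt ht.2 hbT⟩
  have hxc : ContinuousOn x (Icc a b) := hx.continuousOn.mono hIccIcc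
  obtain ⟨M₁, hM₁⟩ := isCompact_Icc.exists_bound_of_continuousOn hxc
  set c₂ : ℝ := min (c - M₁ - 1) (-1) with hc₂def
  set d₂ : ℝ := max (d + M₁ + 1) 1 with hd₂def
  have hc₂0 : c₂ ≤ 0 := le_trans (min_le_right _ _) (by norm_num)
  have hd₂0 : (0:ℝ) ≤ d₂ := le_trans (by norm_num) (le_max_right _ _)
  have hc₂x : ∀ t ∈ Icc a b, c₂ + x t < c := by
    intro t ht
    have h1 : c₂ ≤ c - M₁ - 1 := min_le_left _ _
    have h2 : x t ≤ M₁ := le_trans (le_abs_self _) (hM₁ t ht)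
    linarith
  have hd₂x : ∀ t ∈ Icc a b, d < d₂ + x t := by
    intro t ht
    have h1 : d + M₁ + 1 ≤ d₂ := le_max_left _ _
    have h2 : -M₁ ≤ x t := by
      have := hM₁ t ht
      have h3 : |x t| ≤ M₁ := this
      linarith [neg_abs_le (x t), abs_le.1 h3]
    linarith
  -- restricted smoothness of the states
  have hρm' : ContDiffOn ℝ 1 ρm {q : ℝ × ℝ | q.1 ∈ Icc a b ∧ q.2 ≤ x q.1} :=
    hρm.mono (subset_closure_lt h0a hbT)
  have hum' : ContDiffOn ℝ 1 um {q : ℝ × ℝ | q.1 ∈ Icc a b ∧ q.2 ≤ x q.1} :=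
    hum.mono (subset_closure_lt h0a hbT)
  have hρp' : ContDiffOn ℝ 1 ρp {q : ℝ × ℝ | q.1 ∈ Icc a b ∧ x q.1 ≤ q.2} :=
    hρp.mono (subset_closure_gt h0a hbT)
  have hup' : ContDiffOn ℝ 1 up {q : ℝ × ℝ | q.1 ∈ Icc a b ∧ x q.1 ≤ q.2} :=
    hup.mono (subset_closure_gt h0a hbT)
  have hmassm' : ∀ q : ℝ × ℝ, q.1 ∈ Ioo a b → q.2 < x q.1 →
      pt ρm q + px (fun p => ρm p * um p) q = 0 := by
    intro q h1 h2
    exact massm q ⟨by linarith [h1.1], by linarith [h1.2], h2⟩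
  have hmassp' : ∀ q : ℝ × ℝ, q.1 ∈ Ioo a b → x q.1 < q.2 →
      pt ρp q + px (fun p => ρp p * up p) q = 0 := by
    intro q h1 h2
    exact massp q ⟨by linarith [h1.1], by linarith [h1.2], h2⟩
  have hminus := side_minus T a b c d c₂ x ρm um φ h0a hab hbT hc₂0 hx hρm' hum'
    hmassm' hφsm hsupp2 hc₂x
  have hplus := side_plus T a b c d d₂ x ρp up φ h0a hab hbT hd₂0 hx hρp' hup'
    hmassp' hφsm hsupp2 hd₂x
  -- glue decomposition of the bulk integral
  have hφ1 : ContDiff ℝ 1 φ := hφsm.of_le (by simp)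
  have hφd : Differentiable ℝ φ := hφ1.differentiable one_ne_zero
  have hφcont : Continuous φ := hφ1.continuous
  have hptφc : Continuous (pt φ) := by
    have h1 : pt φ = fun q => fderiv ℝ φ q (((1:ℝ), (0:ℝ)) : ℝ × ℝ) :=
      funext fun q => pt_eq (hφd q)
    rw [h1]
    exact (hφ1.continuous_fderiv one_ne_zero).clm_apply continuous_const
  have hpxφc : Continuous (px φ) := by
    have h1 : px φ = fun q => fderiv ℝ φ q (((0:ℝ), (1:ℝ)) : ℝ × ℝ) :=
      funext fun q => px_eq (hφd q)
    rw [h1]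
    exact (hφ1.continuous_fderiv one_ne_zero).clm_apply continuous_const
  have hEmmeas : MeasurableSet {q : ℝ × ℝ | q.1 ∈ Icc a b ∧ q.2 < x q.1 ∧ q.2 ∈ Ioo c d} := by
    have hEeq : {q : ℝ × ℝ | q.1 ∈ Icc a b ∧ q.2 < x q.1 ∧ q.2 ∈ Ioo c d}
        = ({q : ℝ × ℝ | q.1 ∈ Icc a b ∧ q.2 ≤ x q.1}
            \ {q : ℝ × ℝ | q.1 ∈ Icc a b ∧ x q.1 ≤ q.2})
          ∩ ((univ : Set ℝ) ×ˢ Ioo c d) := by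
      ext q
      constructor
      · rintro ⟨h1, h2, h3⟩
        exact ⟨⟨⟨h1, le_of_lt h2⟩, fun hcon => absurd h2 (not_lt.2 hcon.2)⟩, ⟨trivial, h3⟩⟩
      · rintro ⟨⟨⟨h1, h2⟩, h3⟩, ⟨-, h4⟩⟩
        refine ⟨h1, ?_, h4⟩
        rcases lt_or_eq_of_le h2 with h | h
        · exact h
        · exact absurd ⟨h1, le_of_eq h.symm⟩ h3
    rw [hEeq]
    exact (((isClosed_sub hxc).measurableSet.diff (isClosed_sup hxc).measurableSet).inter
      (MeasurableSet.univ.prod measurableSet_Ioo))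
  have hEpmeas : MeasurableSet {q : ℝ × ℝ | q.1 ∈ Icc a b ∧ x q.1 ≤ q.2 ∧ q.2 ∈ Ioo c d} := by
    have hEeq : {q : ℝ × ℝ | q.1 ∈ Icc a b ∧ x q.1 ≤ q.2 ∧ q.2 ∈ Ioo c d}
        = {q : ℝ × ℝ | q.1 ∈ Icc a b ∧ x q.1 ≤ q.2} ∩ ((univ : Set ℝ) ×ˢ Ioo c d) := by
      ext q
      constructor
      · rintro ⟨h1, h2, h3⟩
        exact ⟨⟨h1, h2⟩, ⟨trivial, h3⟩⟩
      · rintro ⟨⟨h1, h2⟩, ⟨-, h4⟩⟩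
        exact ⟨h1, h2, h4⟩
    rw [hEeq]
    exact (isClosed_sup hxc).measurableSet.inter (MeasurableSet.univ.prod measurableSet_Ioo)
  have hfmc : ContinuousOn (fun q : ℝ × ℝ => ρm q * pt φ q + ρm q * um q * px φ q)
      {q : ℝ × ℝ | q.1 ∈ Icc a b ∧ q.2 ≤ x q.1} :=
    (hρm'.continuousOn.mul hptφc.continuousOn).add
      ((hρm'.continuousOn.mul hum'.continuousOn).mul hpxφc.continuousOn)
  have hfpc : ContinuousOn (fun q : ℝ × ℝ => ρp q * pt φ q + ρp q * up q * px φ q)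
      {q : ℝ × ℝ | q.1 ∈ Icc a b ∧ x q.1 ≤ q.2} :=
    (hρp'.continuousOn.mul hptφc.continuousOn).add
      ((hρp'.continuousOn.mul hup'.continuousOn).mul hpxφc.continuousOn)
  have hIOnm : IntegrableOn (fun q : ℝ × ℝ => ρm q * pt φ q + ρm q * um q * px φ q)
      {q : ℝ × ℝ | q.1 ∈ Icc a b ∧ q.2 < x q.1 ∧ q.2 ∈ Ioo c d} :=
    integrableOn_piece (isClosed_sub hxc) (isCompact_Icc.prod isCompact_Icc) hfmc hEmmeas
      (fun q hq => ⟨hq.1, le_of_lt hq.2.1⟩) (fun q hq => ⟨hq.1, Ioo_subset_Icc_self hq.2.2⟩)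
  have hIOnp : IntegrableOn (fun q : ℝ × ℝ => ρp q * pt φ q + ρp q * up q * px φ q)
      {q : ℝ × ℝ | q.1 ∈ Icc a b ∧ x q.1 ≤ q.2 ∧ q.2 ∈ Ioo c d} :=
    integrableOn_piece (isClosed_sup hxc) (isCompact_Icc.prod isCompact_Icc) hfpc hEpmeas
      (fun q hq => ⟨hq.1, hq.2.1⟩) (fun q hq => ⟨hq.1, Ioo_subset_Icc_self hq.2.2⟩)
  have hintm : Integrable ({q : ℝ × ℝ | q.1 ∈ Icc a b ∧ q.2 < x q.1 ∧ q.2 ∈ Ioo c d}.indicator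
      (fun q : ℝ × ℝ => ρm q * pt φ q + ρm q * um q * px φ q)) :=
    (integrable_indicator_iff hEmmeas).2 hIOnm
  have hintp : Integrable ({q : ℝ × ℝ | q.1 ∈ Icc a b ∧ x q.1 ≤ q.2 ∧ q.2 ∈ Ioo c d}.indicator
      (fun q : ℝ × ℝ => ρp q * pt φ q + ρp q * up q * px φ q)) :=
    (integrable_indicator_iff hEpmeas).2 hIOnp
  have hindzero : ∀ (s : Set (ℝ × ℝ)) (g h : ℝ × ℝ → ℝ) (q : ℝ × ℝ), q ∉ tsupport φ →
      s.indicator (fun p => g p * pt φ p + g p * h p * px φ p) q = 0 := by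
    intro s g h q hq
    by_cases hm : q ∈ s
    · rw [indicator_of_mem hm, pt_zero hq, px_zero hq, mul_zero, mul_zero, add_zero]
    · rw [indicator_of_notMem hm]
  have hIeq : ∀ q : ℝ × ℝ,
      glue x ρm ρp q * pt φ q + glue x ρm ρp q * glue x um up q * px φ q
      = {q : ℝ × ℝ | q.1 ∈ Icc a b ∧ q.2 < x q.1 ∧ q.2 ∈ Ioo c d}.indicator
          (fun p => ρm p * pt φ p + ρm p * um p * px φ p) q
        + {q : ℝ × ℝ | q.1 ∈ Icc a b ∧ x q.1 ≤ q.2 ∧ q.2 ∈ Ioo c d}.indicator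
          (fun p => ρp p * pt φ p + ρp p * up p * px φ p) q := by
    intro q
    by_cases hq : q ∈ tsupport φ
    · have hqm := hsupp2 hq
      have ht : q.1 ∈ Icc a b := Ioo_subset_Icc_self hqm.1
      have hy : q.2 ∈ Ioo c d := hqm.2
      by_cases hlt : q.2 < x q.1
      · have hmem1 : q ∈ {q : ℝ × ℝ | q.1 ∈ Icc a b ∧ q.2 < x q.1 ∧ q.2 ∈ Ioo c d} :=
          ⟨ht, hlt, hy⟩
        have hnot2 : q ∉ {q : ℝ × ℝ | q.1 ∈ Icc a b ∧ x q.1 ≤ q.2 ∧ q.2 ∈ Ioo c d} :=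
          fun hm => absurd hlt (not_lt.2 hm.2.1)
        rw [indicator_of_mem hmem1, indicator_of_notMem hnot2]
        simp only [glue, if_pos hlt]
        ring
      · have hnot1 : q ∉ {q : ℝ × ℝ | q.1 ∈ Icc a b ∧ q.2 < x q.1 ∧ q.2 ∈ Ioo c d} :=
          fun hm => hlt hm.2.1
        have hmem2 : q ∈ {q : ℝ × ℝ | q.1 ∈ Icc a b ∧ x q.1 ≤ q.2 ∧ q.2 ∈ Ioo c d} :=
          ⟨ht, not_lt.1 hlt, hy⟩
        rw [indicator_of_notMem hnot1, indicator_of_mem hmem2]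
        simp only [glue, if_neg hlt]
        ring
    · rw [pt_zero hq, px_zero hq, hindzero _ _ _ _ hq, hindzero _ _ _ _ hq]
      ring
  have hbulk : (∫ q : ℝ × ℝ, (glue x ρm ρp q * pt φ q
        + glue x ρm ρp q * glue x um up q * px φ q))
      = (∫ q in {q : ℝ × ℝ | q.1 ∈ Icc a b ∧ q.2 < x q.1 ∧ q.2 ∈ Ioo c d},
          (ρm q * pt φ q + ρm q * um q * px φ q))
        + (∫ q in {q : ℝ × ℝ | q.1 ∈ Icc a b ∧ x q.1 ≤ q.2 ∧ q.2 ∈ Ioo c d},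
          (ρp q * pt φ q + ρp q * up q * px φ q)) := by
    rw [integral_congr_ae (Filter.Eventually.of_forall hIeq), integral_add hintm hintp,
      integral_indicator hEmmeas, integral_indicator hEpmeas]
  -- curve integral: reduce to [a, b] and integrate by parts
  have hT0 : (0:ℝ) < T := hT
  set dx : ℝ → ℝ := fun t => derivWithin x (Icc 0 T) t with hdxdef
  have hdxc : ContinuousOn dx (Icc 0 T) :=
    hx.continuousOn_derivWithin (uniqueDiffOn_Icc hT0) le_rfl
  have hxder : ∀ t ∈ Icc a b, HasDerivAt x (dx t) t := by
    intro t ht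
    have h1 : DifferentiableWithinAt ℝ x (Icc 0 T) t := (hx.differentiableOn one_ne_zero) t (hIccIcc ht)
    exact h1.hasDerivWithinAt.hasDerivAt (Icc_mem_nhds (hIccIoo ht).1 (hIccIoo ht).2)
  have hderiv_eq : ∀ t ∈ Icc a b, deriv x t = dx t := fun t ht => (hxder t ht).deriv
  have hcurveK : ∀ t : ℝ, t ∉ Ioo a b → ((t, x t) : ℝ × ℝ) ∉ tsupport φ :=
    fun t hnt hmem => hnt (hKt _ hmem)
  have hgzero : ∀ t : ℝ, t ∉ Ioo a b → w t * Real.sqrt (1 + deriv x t ^ 2)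
      * (pt φ (t, x t) + deriv x t * px φ (t, x t)) = 0 := by
    intro t hnt
    rw [pt_zero (hcurveK t hnt), px_zero (hcurveK t hnt), mul_zero, add_zero, mul_zero]
  have hi1 : IntervalIntegrable (fun t => w t * Real.sqrt (1 + deriv x t ^ 2)
      * (pt φ (t, x t) + deriv x t * px φ (t, x t))) volume 0 a := by
    rw [intervalIntegrable_iff]
    have h0 : IntegrableOn (fun _ : ℝ => (0:ℝ)) (uIoc 0 a) volume := integrableOn_zero
    refine h0.congr_fun (fun t ht => ?_) measurableSet_uIoc
    rw [uIoc_of_le h0a.le] at ht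
    exact (hgzero t (fun hc => absurd ht.2 (not_le.2 hc.1))).symm
  have hi3 : IntervalIntegrable (fun t => w t * Real.sqrt (1 + deriv x t ^ 2)
      * (pt φ (t, x t) + deriv x t * px φ (t, x t))) volume b T := by
    rw [intervalIntegrable_iff]
    have h0 : IntegrableOn (fun _ : ℝ => (0:ℝ)) (uIoc b T) volume := integrableOn_zero
    refine h0.congr_fun (fun t ht => ?_) measurableSet_uIoc
    rw [uIoc_of_le hbT.le] at ht
    exact (hgzero t (fun hc => absurd ht.1 (not_lt.2 hc.2.le))).symm
  have hcurve2 : ContinuousOn (fun t : ℝ => ((t, x t) : ℝ × ℝ)) (Icc a b) :=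
    continuousOn_id.prodMk hxc
  have hwc : ContinuousOn w (Icc a b) := hw.continuousOn.mono hIccIcc
  have hsqc : ContinuousOn (fun t => Real.sqrt (1 + dx t ^ 2)) (Icc a b) :=
    Real.continuous_sqrt.comp_continuousOn
      (continuousOn_const.add ((hdxc.mono hIccIcc).pow 2))
  have hgtilde : ContinuousOn (fun t => w t * Real.sqrt (1 + dx t ^ 2)
      * (pt φ (t, x t) + dx t * px φ (t, x t))) (Icc a b) :=
    ((hwc.mul hsqc).mul ((hptφc.comp_continuousOn hcurve2).add
      ((hdxc.mono hIccIcc).mul (hpxφc.comp_continuousOn hcurve2))))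
  have hgeq : EqOn (fun t => w t * Real.sqrt (1 + deriv x t ^ 2)
      * (pt φ (t, x t) + deriv x t * px φ (t, x t)))
      (fun t => w t * Real.sqrt (1 + dx t ^ 2)
      * (pt φ (t, x t) + dx t * px φ (t, x t))) (Icc a b) := by
    intro t ht
    simp only [hderiv_eq t ht]
  have hi2 : IntervalIntegrable (fun t => w t * Real.sqrt (1 + deriv x t ^ 2)
      * (pt φ (t, x t) + deriv x t * px φ (t, x t))) volume a b := by
    rw [intervalIntegrable_iff]
    have h1 : IntegrableOn (fun t => w t * Real.sqrt (1 + dx t ^ 2)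
        * (pt φ (t, x t) + dx t * px φ (t, x t))) (Icc a b) :=
      hgtilde.integrableOn_compact isCompact_Icc
    have h2 := h1.mono_set (s := uIoc a b)
      (by rw [uIoc_of_le hab.le]; exact Ioc_subset_Icc_self)
    apply h2.congr_fun ?_ measurableSet_uIoc
    intro t ht
    rw [uIoc_of_le hab.le] at ht
    exact (hgeq (Ioc_subset_Icc_self ht)).symm
  have hz1 : (∫ t in (0:ℝ)..a, w t * Real.sqrt (1 + deriv x t ^ 2)
      * (pt φ (t, x t) + deriv x t * px φ (t, x t))) = 0 := by
    have hzz : EqOn (fun t => w t * Real.sqrt (1 + deriv x t ^ 2)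
        * (pt φ (t, x t) + deriv x t * px φ (t, x t))) (fun _ => (0:ℝ)) (uIcc 0 a) := by
      intro t ht
      rw [uIcc_of_le h0a.le] at ht
      exact hgzero t (fun hc => absurd ht.2 (not_le.2 hc.1))
    rw [intervalIntegral.integral_congr hzz, intervalIntegral.integral_zero]
  have hz3 : (∫ t in b..T, w t * Real.sqrt (1 + deriv x t ^ 2)
      * (pt φ (t, x t) + deriv x t * px φ (t, x t))) = 0 := by
    have hzz : EqOn (fun t => w t * Real.sqrt (1 + deriv x t ^ 2)
        * (pt φ (t, x t) + deriv x t * px φ (t, x t))) (fun _ => (0:ℝ)) (uIcc b T) := by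
      intro t ht
      rw [uIcc_of_le hbT.le] at ht
      exact hgzero t (fun hc => absurd ht.1 (not_le.2 hc.2))
    rw [intervalIntegral.integral_congr hzz, intervalIntegral.integral_zero]
  have hsplit : (∫ t in (0:ℝ)..T, w t * Real.sqrt (1 + deriv x t ^ 2)
      * (pt φ (t, x t) + deriv x t * px φ (t, x t)))
      = ∫ t in a..b, w t * Real.sqrt (1 + deriv x t ^ 2)
      * (pt φ (t, x t) + deriv x t * px φ (t, x t)) := by
    have e1 := intervalIntegral.integral_add_adjacent_intervals hi1 hi2
    have e2 := intervalIntegral.integral_add_adjacent_intervals (hi1.trans hi2) hi3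
    rw [hz1] at e1
    rw [hz3] at e2
    linarith [e1, e2]
  -- integration by parts on [a, b]
  have hWder : ∀ t ∈ uIcc a b, HasDerivAt (fun s => w s * Real.sqrt (1 + deriv x s ^ 2))
      (dx t * (ρp (t, x t) - ρm (t, x t))
        - (ρp (t, x t) * up (t, x t) - ρm (t, x t) * um (t, x t))) t := by
    intro t ht
    rw [uIcc_of_le hab.le] at ht
    have h1 := RH1 t (hIccIoo ht)
    rwa [hderiv_eq t ht] at h1
  have hγ : ∀ t ∈ uIcc a b, HasDerivAt (fun s => φ (s, x s))
      (pt φ (t, x t) + dx t * px φ (t, x t)) t := by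
    intro t ht
    rw [uIcc_of_le hab.le] at ht
    have hc2 : HasDerivAt (fun s : ℝ => ((s, x s) : ℝ × ℝ)) (((1:ℝ), dx t) : ℝ × ℝ) t :=
      (hasDerivAt_id t).prodMk (hxder t ht)
    have h2 := (hφd (t, x t)).hasFDerivAt.comp_hasDerivAt t hc2
    have h3 : fderiv ℝ φ (t, x t) (((1:ℝ), dx t) : ℝ × ℝ)
        = pt φ (t, x t) + dx t * px φ (t, x t) := by
      rw [fderiv_apply_pair (hφd _) 1 (dx t)]
      ring
    rwa [h3] at h2
  have hρmcurve : ContinuousOn (fun t => ρm (t, x t)) (Icc a b) :=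
    hρm'.continuousOn.comp hcurve2 (fun t ht => ⟨ht, le_refl _⟩)
  have humcurve : ContinuousOn (fun t => um (t, x t)) (Icc a b) :=
    hum'.continuousOn.comp hcurve2 (fun t ht => ⟨ht, le_refl _⟩)
  have hρpcurve : ContinuousOn (fun t => ρp (t, x t)) (Icc a b) :=
    hρp'.continuousOn.comp hcurve2 (fun t ht => ⟨ht, le_refl _⟩)
  have hupcurve : ContinuousOn (fun t => up (t, x t)) (Icc a b) :=
    hup'.continuousOn.comp hcurve2 (fun t ht => ⟨ht, le_refl _⟩)
  have hφcurve : ContinuousOn (fun t => φ (t, x t)) (Icc a b) :=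
    hφcont.comp_continuousOn hcurve2
  have hu'int : IntervalIntegrable (fun t => dx t * (ρp (t, x t) - ρm (t, x t))
      - (ρp (t, x t) * up (t, x t) - ρm (t, x t) * um (t, x t))) volume a b := by
    apply ContinuousOn.intervalIntegrable
    rw [uIcc_of_le hab.le]
    exact ((hdxc.mono hIccIcc).mul (hρpcurve.sub hρmcurve)).sub
      ((hρpcurve.mul hupcurve).sub (hρmcurve.mul humcurve))
  have hv'int : IntervalIntegrable (fun t => pt φ (t, x t) + dx t * px φ (t, x t)) volume a b := by
    apply ContinuousOn.intervalIntegrable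
    rw [uIcc_of_le hab.le]
    exact (hptφc.comp_continuousOn hcurve2).add
      ((hdxc.mono hIccIcc).mul (hpxφc.comp_continuousOn hcurve2))
  have hIBP := intervalIntegral.integral_mul_deriv_eq_deriv_mul hWder hγ hu'int hv'int
  have hφa : φ (a, x a) = 0 :=
    image_eq_zero_of_notMem_tsupport (hcurveK a (fun hc => lt_irrefl a hc.1))
  have hφb : φ (b, x b) = 0 :=
    image_eq_zero_of_notMem_tsupport (hcurveK b (fun hc => lt_irrefl b hc.2))
  rw [hφa, hφb, mul_zero, mul_zero, sub_zero, zero_sub] at hIBP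
  -- hIBP : ∫ t in a..b, W t * (pt φ + dx * px φ) = - ∫ t in a..b, u' t * φ (t, x t)
  have hgcongr : (∫ t in a..b, w t * Real.sqrt (1 + deriv x t ^ 2)
      * (pt φ (t, x t) + deriv x t * px φ (t, x t)))
      = ∫ t in a..b, (fun s => w s * Real.sqrt (1 + deriv x s ^ 2)) t
        * (pt φ (t, x t) + dx t * px φ (t, x t)) := by
    apply intervalIntegral.integral_congr
    intro t ht
    rw [uIcc_of_le hab.le] at ht
    show w t * Real.sqrt (1 + deriv x t ^ 2) * (pt φ (t, x t) + deriv x t * px φ (t, x t))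
      = w t * Real.sqrt (1 + deriv x t ^ 2) * (pt φ (t, x t) + dx t * px φ (t, x t))
    rw [hderiv_eq t ht]
  -- rewrite the two side integrals using dx
  have hAcongr : (∫ t in a..b, (ρm (t, x t) * um (t, x t) - deriv x t * ρm (t, x t)) * φ (t, x t))
      = ∫ t in a..b, (ρm (t, x t) * um (t, x t) - dx t * ρm (t, x t)) * φ (t, x t) := by
    apply intervalIntegral.integral_congr
    intro t ht
    rw [uIcc_of_le hab.le] at ht
    show (ρm (t, x t) * um (t, x t) - deriv x t * ρm (t, x t)) * φ (t, x t)
      = (ρm (t, x t) * um (t, x t) - dx t * ρm (t, x t)) * φ (t, x t)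
    rw [hderiv_eq t ht]
  have hBcongr : (∫ t in a..b, (deriv x t * ρp (t, x t) - ρp (t, x t) * up (t, x t)) * φ (t, x t))
      = ∫ t in a..b, (dx t * ρp (t, x t) - ρp (t, x t) * up (t, x t)) * φ (t, x t) := by
    apply intervalIntegral.integral_congr
    intro t ht
    rw [uIcc_of_le hab.le] at ht
    show (deriv x t * ρp (t, x t) - ρp (t, x t) * up (t, x t)) * φ (t, x t)
      = (dx t * ρp (t, x t) - ρp (t, x t) * up (t, x t)) * φ (t, x t)
    rw [hderiv_eq t ht]
  have hAint : IntervalIntegrable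
      (fun t => (ρm (t, x t) * um (t, x t) - dx t * ρm (t, x t)) * φ (t, x t)) volume a b := by
    apply ContinuousOn.intervalIntegrable
    rw [uIcc_of_le hab.le]
    exact ((hρmcurve.mul humcurve).sub ((hdxc.mono hIccIcc).mul hρmcurve)).mul hφcurve
  have hBint : IntervalIntegrable
      (fun t => (dx t * ρp (t, x t) - ρp (t, x t) * up (t, x t)) * φ (t, x t)) volume a b := by
    apply ContinuousOn.intervalIntegrable
    rw [uIcc_of_le hab.le]
    exact (((hdxc.mono hIccIcc).mul hρpcurve).sub (hρpcurve.mul hupcurve)).mul hφcurve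
  have hCint : IntervalIntegrable
      (fun t => (dx t * (ρp (t, x t) - ρm (t, x t))
        - (ρp (t, x t) * up (t, x t) - ρm (t, x t) * um (t, x t))) * φ (t, x t)) volume a b :=
    hu'int.mul_continuousOn (by rw [uIcc_of_le hab.le]; exact hφcurve)
  rw [hbulk, hminus, hplus, hsplit, hgcongr, hIBP, hAcongr, hBcongr,
    ← intervalIntegral.integral_add hAint hBint, ← sub_eq_add_neg,
    ← intervalIntegral.integral_sub (hAint.add hBint) hCint]
  have hfin : EqOn (fun t => ((ρm (t, x t) * um (t, x t) - dx t * ρm (t, x t)) * φ (t, x t)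
      + (dx t * ρp (t, x t) - ρp (t, x t) * up (t, x t)) * φ (t, x t))
      - (dx t * (ρp (t, x t) - ρm (t, x t))
        - (ρp (t, x t) * up (t, x t) - ρm (t, x t) * um (t, x t))) * φ (t, x t))
      (fun _ => (0:ℝ)) (uIcc a b) := by
    intro t ht
    show ((ρm (t, x t) * um (t, x t) - dx t * ρm (t, x t)) * φ (t, x t)
      + (dx t * ρp (t, x t) - ρp (t, x t) * up (t, x t)) * φ (t, x t))
      - (dx t * (ρp (t, x t) - ρm (t, x t))
        - (ρp (t, x t) * up (t, x t) - ρm (t, x t) * um (t, x t))) * φ (t, x t) = 0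
    ring
  rw [intervalIntegral.integral_congr hfin, intervalIntegral.integral_zero]
end

section
/- Let p₀, μ > 0, T > 0, let x : [0,T] → ℝ be C¹, and let R > 0 with |x(t)| < R for all t. Let (ρ₋,u₋) be C¹ on {(t,y) ∈ [0,T] × ℝ : y ≤ x(t)} and (ρ₊,u₊) be C¹ on {(t,y) : y ≥ x(t)}, each with positive density and solving the Chaplygin gas system ∂_t ρ + ∂_x(ρu) = 0, ∂_t(ρu) + ∂_x(ρu² + p₀ − μ²/ρ) = 0 in the interior of its region, and suppose there are constants ρ̄ > 0, ū such that (ρ₋,u₋)(t,y) = (ρ̄,ū) for y ≤ −R and (ρ₊,u₊)(t,y) = (ρ̄,ū) for y ≥ R. Define the total mass S_ρ(t) := ∫_{−R}^{x(t)} ρ₋(t,y) dy + ∫_{x(t)}^{R} ρ₊(t,y) dy and write [h](t) := h₊(t,x(t)) − h₋(t,x(t)). Then for all t ∈ (0,T): dS_ρ/dt (t) = −ẋ(t)[ρ](t) + [ρu](t). Consequently, if w : [0,T] → ℝ is C¹ and satisfies the generalized Rankine–Hugoniot condition d/dt ( w(t) √(1 + ẋ(t)²) ) = ẋ(t)[ρ](t)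 − [ρu](t), then the generalized total mass S_ρ(t) + w(t) √(1 + ẋ(t)²) is constant in t. -/
open Set

/-! In the comoving coordinate `z = y - x(s)` each side of the shock becomes an integral over a
fixed window, which may be differentiated under the integral sign. By the mass equation the
`s`-derivative of `ρ(s, z + x(s))` is the `z`-derivative of `ẋ ρ - ρ u`, so the fundamental
theorem of calculus leaves only boundary terms. The window ends lie beyond `±R`, where both sides
carry the same constant flux `ρ̄ ū`, so these terms cancel, leaving `-ẋ[ρ] + [ρu]`. The generalized
Rankine–Hugoniot condition then says exactly that the generalized total mass has zero derivative. -/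

open Filter Topology MeasureTheory Metric

theorem DifferentiableAt.hasDerivAt_pt {f : ℝ × ℝ → ℝ} {q : ℝ × ℝ}
    (hf : DifferentiableAt ℝ f q) : HasDerivAt (fun s => f (s, q.2)) (pt f q) q.1 :=
  (hf.comp q.1 (differentiableAt_id.prodMk (differentiableAt_const q.2))).hasDerivAt

theorem DifferentiableAt.hasDerivAt_px {f : ℝ × ℝ → ℝ} {q : ℝ × ℝ}
    (hf : DifferentiableAt ℝ f q) : HasDerivAt (fun y => f (q.1, y)) (px f q) q.2 :=
  (hf.comp q.2 ((differentiableAt_const q.1).prodMk differentiableAt_id)).hasDerivAt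

theorem DifferentiableAt.hasDerivAt_comp_graph {f : ℝ × ℝ → ℝ} {g : ℝ → ℝ} {g' t : ℝ}
    (hf : DifferentiableAt ℝ f (t, g t)) (hg : HasDerivAt g g' t) :
    HasDerivAt (fun s => f (s, g s)) (pt f (t, g t) + g' * px f (t, g t)) t := by
  have hpt : pt f (t, g t) = fderiv ℝ f (t, g t) (1, 0) := hf.hasDerivAt_pt.unique
    (hf.hasFDerivAt.comp_hasDerivAt t ((hasDerivAt_id t).prodMk (hasDerivAt_const t (g t))))
  have hpx : px f (t, g t) = fderiv ℝ f (t, g t) (0, 1) := hf.hasDerivAt_px.unique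
    (hf.hasFDerivAt.comp_hasDerivAt (g t) ((hasDerivAt_const (g t) t).prodMk (hasDerivAt_id _)))
  refine (hf.hasFDerivAt.comp_hasDerivAt t ((hasDerivAt_id t).prodMk hg)).congr_deriv ?_
  rw [hpt, hpx, ← smul_eq_mul, ← map_smul, ← map_add]
  simp

theorem DifferentiableWithinAt.hasDerivAt_fderivWithin_fst {φ : ℝ × ℝ → ℝ} {U V : Set ℝ}
    {q : ℝ × ℝ} (hU : U ∈ 𝓝 q.1) (hq : q.2 ∈ V) (hφ : DifferentiableWithinAt ℝ φ (U ×ˢ V) q) :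
    HasDerivAt (fun s => φ (s, q.2)) (fderivWithin ℝ φ (U ×ˢ V) q (1, 0)) q.1 :=
  (hφ.hasFDerivWithinAt.comp_hasDerivWithinAt q.1
    ((hasDerivAt_id q.1).prodMk (hasDerivAt_const q.1 q.2)).hasDerivWithinAt
    fun _ hs => mk_mem_prod hs hq).hasDerivAt hU

theorem ContDiffOn.continuousOn_pt_prod {φ : ℝ × ℝ → ℝ} {U V : Set ℝ} (hU : IsOpen U)
    (hV : UniqueDiffOn ℝ V) (hφ : ContDiffOn ℝ 1 φ (U ×ˢ V)) : ContinuousOn (pt φ) (U ×ˢ V) :=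
  ((hφ.continuousOn_fderivWithin (hU.uniqueDiffOn.prod hV) le_rfl).clm_apply
    continuousOn_const).congr fun q hq =>
      ((hφ.differentiableOn one_ne_zero q hq).hasDerivAt_fderivWithin_fst
        (hU.mem_nhds hq.1) hq.2).deriv

theorem hasDerivAt_intervalIntegral_of_contDiffOn {φ : ℝ × ℝ → ℝ} {U : Set ℝ} {a b t : ℝ}
    (hU : IsOpen U) (ht : t ∈ U) (hab : a < b) (hφ : ContDiffOn ℝ 1 φ (U ×ˢ Icc a b)) :
    HasDerivAt (fun s => ∫ z in a..b, φ (s, z)) (∫ z in a..b, pt φ (t, z)) t := by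
  have hpt : ∀ s ∈ U, ∀ z ∈ Icc a b, HasDerivAt (fun s => φ (s, z)) (pt φ (s, z)) s :=
    fun s hs z hz => (((hφ.differentiableOn one_ne_zero (s, z) ⟨hs, hz⟩).hasDerivAt_fderivWithin_fst
      (hU.mem_nhds hs) hz).differentiableAt).hasDerivAt
  have hslice : ∀ {f : ℝ × ℝ → ℝ}, ContinuousOn f (U ×ˢ Icc a b) → ∀ s ∈ U,
      IntervalIntegrable (fun z => f (s, z)) volume a b := fun hf s hs =>
    (hf.comp (continuous_const.prodMk continuous_id).continuousOn
      fun z hz => ⟨hs, hz⟩).intervalIntegrable_of_Icc hab.le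
  have hpt_cont := hφ.continuousOn_pt_prod hU (uniqueDiffOn_Icc hab)
  obtain ⟨ε, hε, hεU⟩ := nhds_basis_closedBall.mem_iff.1 (hU.mem_nhds ht)
  obtain ⟨M, hM⟩ := ((isCompact_closedBall t ε).prod isCompact_Icc).exists_bound_of_continuousOn
    (hpt_cont.mono (prod_mono hεU subset_rfl))
  refine (intervalIntegral.hasDerivAt_integral_of_dominated_loc_of_deriv_le
    (F' := fun s z => pt φ (s, z)) (bound := fun _ => M) (ball_mem_nhds t hε) ?_ (hslice hφ.continuousOn t ht)
    (hslice hpt_cont t ht).def'.aestronglyMeasurable ?_ intervalIntegrable_const ?_).2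
  · filter_upwards [hU.mem_nhds ht] with s hs
    exact (hslice hφ.continuousOn s hs).def'.aestronglyMeasurable
  · refine ae_of_all _ fun z hz s hs => hM (s, z) ⟨ball_subset_closedBall hs, ?_⟩
    exact Ioc_subset_Icc_self (uIoc_of_le hab.le ▸ hz)
  · refine ae_of_all _ fun z hz s hs => hpt s (hεU (ball_subset_closedBall hs)) z ?_
    exact Ioc_subset_Icc_self (uIoc_of_le hab.le ▸ hz)

theorem hasDerivAt_integral_comoving_of_conservation {U : Set ℝ} {a b t : ℝ} {x : ℝ → ℝ}
    {ρ j : ℝ × ℝ → ℝ} (hU : IsOpen U) (ht : t ∈ U) (hab : a < b) (hx : ContDiffOn ℝ 1 x U)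
    (hρ : ContDiffOn ℝ 1 ρ {q | q.1 ∈ U ∧ q.2 - x q.1 ∈ Icc a b})
    (hj : DifferentiableOn ℝ j {q | q.1 ∈ U ∧ q.2 - x q.1 ∈ Icc a b})
    (hcons : ∀ q ∈ {q : ℝ × ℝ | q.1 ∈ U ∧ q.2 - x q.1 ∈ Ioo a b}, pt ρ q + px j q = 0) :
    HasDerivAt (fun s => ∫ z in a..b, ρ (s, z + x s))
      ((deriv x t * ρ (t, b + x t) - j (t, b + x t))
        - (deriv x t * ρ (t, a + x t) - j (t, a + x t))) t := by
  set φ : ℝ × ℝ → ℝ := fun q => ρ (q.1, q.2 + x q.1)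
  set θ : ℝ → ℝ := fun z => deriv x t * ρ (t, z + x t) - j (t, z + x t)
  have hmaps : ∀ s ∈ U, ∀ z ∈ Icc a b,
      (s, z + x s) ∈ {q : ℝ × ℝ | q.1 ∈ U ∧ q.2 - x q.1 ∈ Icc a b} :=
    fun s hs z hz => ⟨hs, by simpa using hz⟩
  have hφ : ContDiffOn ℝ 1 φ (U ×ˢ Icc a b) :=
    hρ.comp (contDiffOn_fst.prodMk (contDiffOn_snd.add (hx.comp contDiffOn_fst fun q hq => hq.1)))
      fun q hq => hmaps q.1 hq.1 q.2 hq.2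
  have hopen : IsOpen {q : ℝ × ℝ | q.1 ∈ U ∧ q.2 - x q.1 ∈ Ioo a b} := by
    have hshift : ContinuousOn (fun q : ℝ × ℝ => q.2 - x q.1) (Prod.fst ⁻¹' U) :=
      continuousOn_snd.sub (hx.continuousOn.comp continuousOn_fst fun _ hq => hq)
    exact hshift.isOpen_inter_preimage (hU.preimage continuous_fst) isOpen_Ioo
  have hx' : HasDerivAt x (deriv x t) t :=
    ((hx.differentiableOn one_ne_zero).differentiableAt (hU.mem_nhds ht)).hasDerivAt
  have hθ : ∀ z ∈ Ioo a b, HasDerivAt θ (pt φ (t, z)) z := by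
    intro z hz
    have hq : (t, z + x t) ∈ {q : ℝ × ℝ | q.1 ∈ U ∧ q.2 - x q.1 ∈ Ioo a b} :=
      ⟨ht, by simpa using hz⟩
    have hnhds : {q : ℝ × ℝ | q.1 ∈ U ∧ q.2 - x q.1 ∈ Icc a b} ∈ 𝓝 (t, z + x t) :=
      mem_of_superset (hopen.mem_nhds hq) fun q hq => ⟨hq.1, Ioo_subset_Icc_self hq.2⟩
    have hρq := (hρ.differentiableOn one_ne_zero).differentiableAt hnhds
    have hjq := hj.differentiableAt hnhds
    have hφt : pt φ (t, z) = pt ρ (t, z + x t) + deriv x t * px ρ (t, z + x t) :=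
      (hρq.hasDerivAt_comp_graph (hx'.const_add z)).deriv
    have hθ' := ((hρq.hasDerivAt_px.comp_add_const z (x t)).const_mul (deriv x t)).sub
      (hjq.hasDerivAt_px.comp_add_const z (x t))
    refine hθ'.congr_deriv ?_
    linarith [hcons _ hq]
  have hθ_cont : ContinuousOn θ (Icc a b) := by
    have hcurve : ContinuousOn (fun z => (t, z + x t)) (Icc a b) := by fun_prop
    exact (continuousOn_const.mul (hρ.continuousOn.comp hcurve (hmaps t ht))).sub
      (hj.continuousOn.comp hcurve (hmaps t ht))
  have hint : IntervalIntegrable (fun z => pt φ (t, z)) volume a b :=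
    ((hφ.continuousOn_pt_prod hU (uniqueDiffOn_Icc hab)).comp (by fun_prop)
      fun z hz => mk_mem_prod ht hz).intervalIntegrable_of_Icc hab.le
  have hFTC := intervalIntegral.integral_eq_sub_of_hasDeriv_right_of_le hab.le hθ_cont
    (fun z hz => (hθ z hz).hasDerivWithinAt) hint
  exact hFTC ▸ hasDerivAt_intervalIntegral_of_contDiffOn hU ht hab hφ

theorem intervalIntegral_of_eqOn_const {f : ℝ → ℝ} {a b c : ℝ} (hab : a ≤ b)
    (hf : EqOn f (fun _ => c) (Icc a b)) : ∫ y in a..b, f y = (b - a) * c := by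
  rw [intervalIntegral.integral_congr (uIcc_of_le hab ▸ hf), intervalIntegral.integral_const,
    smul_eq_mul]

theorem hasDerivAt_integral_to_curve {U : Set ℝ} {R ρbar jbar t : ℝ} {x : ℝ → ℝ}
    {ρ j : ℝ × ℝ → ℝ} (hU : IsOpen U) (ht : t ∈ U) (hx : ContDiffOn ℝ 1 x U)
    (hxR : ∀ s ∈ U, |x s| < R)
    (hρ : ContDiffOn ℝ 1 ρ {q | q.1 ∈ U ∧ q.2 ≤ x q.1})
    (hj : DifferentiableOn ℝ j {q | q.1 ∈ U ∧ q.2 ≤ x q.1})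
    (hcons : ∀ q ∈ {q : ℝ × ℝ | q.1 ∈ U ∧ q.2 < x q.1}, pt ρ q + px j q = 0)
    (hconst : ∀ s ∈ U, ∀ y ≤ -R, ρ (s, y) = ρbar ∧ j (s, y) = jbar) :
    HasDerivAt (fun s => ∫ y in -R..x s, ρ (s, y))
      (deriv x t * ρ (t, x t) - j (t, x t) + jbar) t := by
  have hR : 0 < R := (abs_nonneg _).trans_lt (hxR t ht)
  have hwindow : ∀ s ∈ U,
      ∫ z in -(2 * R)..0, ρ (s, z + x s) = (∫ y in -R..x s, ρ (s, y)) + (R - x s) * ρbar := by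
    intro s hs
    obtain ⟨hxs₁, hxs₂⟩ := abs_lt.1 (hxR s hs)
    have hslice : ContinuousOn (fun y => ρ (s, y)) (Iic (x s)) :=
      hρ.continuousOn.comp (by fun_prop) fun y hy => ⟨hs, hy⟩
    have hfar : ∫ y in -(2 * R) + x s..-R, ρ (s, y) = (R - x s) * ρbar := by
      rw [intervalIntegral_of_eqOn_const (by linarith) fun y hy => (hconst s hs y hy.2).1]
      ring
    rw [intervalIntegral.integral_comp_add_right (fun y => ρ (s, y)), zero_add,
      ← intervalIntegral.integral_add_adjacent_intervals (b := -R), hfar, add_comm]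
    · exact (hslice.mono fun y hy => hy.2.trans (by linarith)).intervalIntegrable_of_Icc
        (by linarith)
    · exact (hslice.mono fun y hy => hy.2).intervalIntegrable_of_Icc (by linarith)
  have hx' : HasDerivAt x (deriv x t) t :=
    ((hx.differentiableOn one_ne_zero).differentiableAt (hU.mem_nhds ht)).hasDerivAt
  have hstrip : {q : ℝ × ℝ | q.1 ∈ U ∧ q.2 - x q.1 ∈ Icc (-(2 * R)) 0} ⊆
      {q | q.1 ∈ U ∧ q.2 ≤ x q.1} :=
    fun q hq => ⟨hq.1, by linarith [hq.2.2]⟩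
  have hmoving := hasDerivAt_integral_comoving_of_conservation hU ht (by linarith) hx
    (hρ.mono hstrip) (hj.mono hstrip) fun q hq => hcons q ⟨hq.1, by linarith [hq.2.2]⟩
  have hbot := hconst t ht (-(2 * R) + x t) (by linarith [(abs_lt.1 (hxR t ht)).2])
  have hdiff := hmoving.fun_sub ((hx'.const_sub R).mul_const ρbar)
  refine (hdiff.congr_of_eventuallyEq ?_).congr_deriv ?_
  · filter_upwards [hU.mem_nhds ht] with s hs
    rw [hwindow s hs, add_sub_cancel_right]
  · rw [hbot.1, hbot.2, zero_add]
    ring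

theorem hasDerivAt_integral_from_curve {U : Set ℝ} {R ρbar jbar t : ℝ} {x : ℝ → ℝ}
    {ρ j : ℝ × ℝ → ℝ} (hU : IsOpen U) (ht : t ∈ U) (hx : ContDiffOn ℝ 1 x U)
    (hxR : ∀ s ∈ U, |x s| < R)
    (hρ : ContDiffOn ℝ 1 ρ {q | q.1 ∈ U ∧ x q.1 ≤ q.2})
    (hj : DifferentiableOn ℝ j {q | q.1 ∈ U ∧ x q.1 ≤ q.2})
    (hcons : ∀ q ∈ {q : ℝ × ℝ | q.1 ∈ U ∧ x q.1 < q.2}, pt ρ q + px j q = 0)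
    (hconst : ∀ s ∈ U, ∀ y, R ≤ y → ρ (s, y) = ρbar ∧ j (s, y) = jbar) :
    HasDerivAt (fun s => ∫ y in x s..R, ρ (s, y))
      (-(deriv x t * ρ (t, x t) - j (t, x t)) - jbar) t := by
  have hR : 0 < R := (abs_nonneg _).trans_lt (hxR t ht)
  have hwindow : ∀ s ∈ U,
      ∫ z in 0..2 * R, ρ (s, z + x s) = (∫ y in x s..R, ρ (s, y)) + (R + x s) * ρbar := by
    intro s hs
    obtain ⟨hxs₁, hxs₂⟩ := abs_lt.1 (hxR s hs)
    have hslice : ContinuousOn (fun y => ρ (s, y)) (Ici (x s)) :=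
      hρ.continuousOn.comp (by fun_prop) fun y hy => ⟨hs, hy⟩
    have hfar : ∫ y in R..2 * R + x s, ρ (s, y) = (R + x s) * ρbar := by
      rw [intervalIntegral_of_eqOn_const (by linarith) fun y hy => (hconst s hs y hy.1).1]
      ring
    rw [intervalIntegral.integral_comp_add_right (fun y => ρ (s, y)), zero_add,
      ← intervalIntegral.integral_add_adjacent_intervals (b := R), hfar]
    · exact (hslice.mono fun y hy => hy.1).intervalIntegrable_of_Icc (by linarith)
    · exact (hslice.mono fun y hy => (by linarith : x s ≤ R).trans hy.1).intervalIntegrable_of_Icc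
        (by linarith)
  have hx' : HasDerivAt x (deriv x t) t :=
    ((hx.differentiableOn one_ne_zero).differentiableAt (hU.mem_nhds ht)).hasDerivAt
  have hstrip : {q : ℝ × ℝ | q.1 ∈ U ∧ q.2 - x q.1 ∈ Icc 0 (2 * R)} ⊆
      {q | q.1 ∈ U ∧ x q.1 ≤ q.2} :=
    fun q hq => ⟨hq.1, by linarith [hq.2.1]⟩
  have hmoving := hasDerivAt_integral_comoving_of_conservation hU ht (by linarith) hx
    (hρ.mono hstrip) (hj.mono hstrip) fun q hq => hcons q ⟨hq.1, by linarith [hq.2.1]⟩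
  have htop := hconst t ht (2 * R + x t) (by linarith [(abs_lt.1 (hxR t ht)).1])
  have hdiff := hmoving.fun_sub ((hx'.const_add R).mul_const ρbar)
  refine (hdiff.congr_of_eventuallyEq ?_).congr_deriv ?_
  · filter_upwards [hU.mem_nhds ht] with s hs
    rw [hwindow s hs, add_sub_cancel_right]
  · rw [htop.1, htop.2, zero_add]
    ring

theorem generalized_mass_conservation_general
    (T : ℝ)
    (x : ℝ → ℝ) (hx : ContDiffOn ℝ 1 x (Icc 0 T))
    (R : ℝ) (hxR : ∀ t ∈ Icc (0:ℝ) T, |x t| < R)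
    (ρm um ρp up : ℝ × ℝ → ℝ)
    (hρm : ContDiffOn ℝ 1 ρm {q : ℝ × ℝ | q.1 ∈ Icc 0 T ∧ q.2 ≤ x q.1})
    (hum : ContDiffOn ℝ 1 um {q : ℝ × ℝ | q.1 ∈ Icc 0 T ∧ q.2 ≤ x q.1})
    (hρp : ContDiffOn ℝ 1 ρp {q : ℝ × ℝ | q.1 ∈ Icc 0 T ∧ x q.1 ≤ q.2})
    (hup : ContDiffOn ℝ 1 up {q : ℝ × ℝ | q.1 ∈ Icc 0 T ∧ x q.1 ≤ q.2})
    (massm : ∀ q ∈ {q : ℝ × ℝ | 0 < q.1 ∧ q.1 < T ∧ q.2 < x q.1},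
      pt ρm q + px (fun q => ρm q * um q) q = 0)
    (massp : ∀ q ∈ {q : ℝ × ℝ | 0 < q.1 ∧ q.1 < T ∧ x q.1 < q.2},
      pt ρp q + px (fun q => ρp q * up q) q = 0)
    (ρbar ubar : ℝ)
    (hconstm : ∀ t ∈ Icc (0:ℝ) T, ∀ y : ℝ, y ≤ -R → ρm (t, y) = ρbar ∧ um (t, y) = ubar)
    (hconstp : ∀ t ∈ Icc (0:ℝ) T, ∀ y : ℝ, R ≤ y → ρp (t, y) = ρbar ∧ up (t, y) = ubar) :
    (∀ t ∈ Ioo (0:ℝ) T,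
      HasDerivAt (fun s => (∫ y in (-R)..(x s), ρm (s, y)) + ∫ y in (x s)..R, ρp (s, y))
        (-(deriv x t) * (ρp (t, x t) - ρm (t, x t))
          + (ρp (t, x t) * up (t, x t) - ρm (t, x t) * um (t, x t))) t) ∧
    ∀ w : ℝ → ℝ, ContDiffOn ℝ 1 w (Icc 0 T) →
      (∀ t ∈ Ioo (0:ℝ) T,
        HasDerivAt (fun s => w s * Real.sqrt (1 + deriv x s ^ 2))
          (deriv x t * (ρp (t, x t) - ρm (t, x t))
            - (ρp (t, x t) * up (t, x t) - ρm (t, x t) * um (t, x t))) t) →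
      ∀ t₁ ∈ Ioo (0:ℝ) T, ∀ t₂ ∈ Ioo (0:ℝ) T,
        ((∫ y in (-R)..(x t₁), ρm (t₁, y)) + ∫ y in (x t₁)..R, ρp (t₁, y))
            + w t₁ * Real.sqrt (1 + deriv x t₁ ^ 2)
          = ((∫ y in (-R)..(x t₂), ρm (t₂, y)) + ∫ y in (x t₂)..R, ρp (t₂, y))
            + w t₂ * Real.sqrt (1 + deriv x t₂ ^ 2) := by
  have hIoo : Ioo (0:ℝ) T ⊆ Icc 0 T := Ioo_subset_Icc_self
  have hmass : ∀ t ∈ Ioo (0:ℝ) T,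
      HasDerivAt (fun s => (∫ y in (-R)..(x s), ρm (s, y)) + ∫ y in (x s)..R, ρp (s, y))
        (-(deriv x t) * (ρp (t, x t) - ρm (t, x t))
          + (ρp (t, x t) * up (t, x t) - ρm (t, x t) * um (t, x t))) t := by
    intro t ht
    have hleft := hasDerivAt_integral_to_curve isOpen_Ioo ht (hx.mono hIoo)
      (fun s hs => hxR s (hIoo hs)) (hρm.mono fun q hq => ⟨hIoo hq.1, hq.2⟩)
      (((hρm.mul hum).differentiableOn one_ne_zero).mono fun q hq => ⟨hIoo hq.1, hq.2⟩)
      (fun q hq => massm q ⟨hq.1.1, hq.1.2, hq.2⟩) fun s hs y hy => by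
        obtain ⟨hρ, hu⟩ := hconstm s (hIoo hs) y hy
        exact ⟨hρ, by rw [hρ, hu]⟩
    have hright := hasDerivAt_integral_from_curve isOpen_Ioo ht (hx.mono hIoo)
      (fun s hs => hxR s (hIoo hs)) (hρp.mono fun q hq => ⟨hIoo hq.1, hq.2⟩)
      (((hρp.mul hup).differentiableOn one_ne_zero).mono fun q hq => ⟨hIoo hq.1, hq.2⟩)
      (fun q hq => massp q ⟨hq.1.1, hq.1.2, hq.2⟩) fun s hs y hy => by
        obtain ⟨hρ, hu⟩ := hconstp s (hIoo hs) y hy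
        exact ⟨hρ, by rw [hρ, hu]⟩
    exact (hleft.fun_add hright).congr_deriv (by ring)
  refine ⟨hmass, fun w _ hRH t₁ ht₁ t₂ ht₂ => ?_⟩
  have hconserved : ∀ t ∈ Ioo (0:ℝ) T, HasDerivAt (fun s =>
      ((∫ y in (-R)..(x s), ρm (s, y)) + ∫ y in (x s)..R, ρp (s, y))
        + w s * Real.sqrt (1 + deriv x s ^ 2)) 0 t :=
    fun t ht => ((hmass t ht).fun_add (hRH t ht)).congr_deriv (by ring)
  exact isOpen_Ioo.is_const_of_deriv_eq_zero isPreconnected_Ioo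
    (fun t ht => (hconserved t ht).differentiableAt.differentiableWithinAt)
    (fun t ht => (hconserved t ht).deriv) ht₁ ht₂

/-- Theorem 4.1 (mass part): the balance law `Ṡ_ρ = −ẋ[ρ] + [ρu]` holds, and with the
first generalized Rankine–Hugoniot condition the generalized total mass
`S_ρ(t) + w(t)√(1+ẋ(t)²)` is conserved. -/
theorem generalized_mass_conservation
    (p₀ μ T : ℝ) (hp₀ : 0 < p₀) (hμ : 0 < μ) (hT : 0 < T)
    (x : ℝ → ℝ) (hx : ContDiffOn ℝ 1 x (Icc 0 T))
    (R : ℝ) (hR : 0 < R) (hxR : ∀ t ∈ Icc (0:ℝ) T, |x t| < R)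
    (ρm um ρp up : ℝ × ℝ → ℝ)
    (hρm : ContDiffOn ℝ 1 ρm {q : ℝ × ℝ | q.1 ∈ Icc 0 T ∧ q.2 ≤ x q.1})
    (hum : ContDiffOn ℝ 1 um {q : ℝ × ℝ | q.1 ∈ Icc 0 T ∧ q.2 ≤ x q.1})
    (hρp : ContDiffOn ℝ 1 ρp {q : ℝ × ℝ | q.1 ∈ Icc 0 T ∧ x q.1 ≤ q.2})
    (hup : ContDiffOn ℝ 1 up {q : ℝ × ℝ | q.1 ∈ Icc 0 T ∧ x q.1 ≤ q.2})
    (hρmpos : ∀ q ∈ {q : ℝ × ℝ | q.1 ∈ Icc 0 T ∧ q.2 ≤ x q.1}, 0 < ρm q)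
    (hρppos : ∀ q ∈ {q : ℝ × ℝ | q.1 ∈ Icc 0 T ∧ x q.1 ≤ q.2}, 0 < ρp q)
    (massm : ∀ q ∈ {q : ℝ × ℝ | 0 < q.1 ∧ q.1 < T ∧ q.2 < x q.1},
      pt ρm q + px (fun q => ρm q * um q) q = 0)
    (momentumm : ∀ q ∈ {q : ℝ × ℝ | 0 < q.1 ∧ q.1 < T ∧ q.2 < x q.1},
      pt (fun q => ρm q * um q) q
        + px (fun q => ρm q * um q ^ 2 + p₀ - μ ^ 2 / ρm q) q = 0)
    (massp : ∀ q ∈ {q : ℝ × ℝ | 0 < q.1 ∧ q.1 < T ∧ x q.1 < q.2},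
      pt ρp q + px (fun q => ρp q * up q) q = 0)
    (momentump : ∀ q ∈ {q : ℝ × ℝ | 0 < q.1 ∧ q.1 < T ∧ x q.1 < q.2},
      pt (fun q => ρp q * up q) q
        + px (fun q => ρp q * up q ^ 2 + p₀ - μ ^ 2 / ρp q) q = 0)
    (ρbar ubar : ℝ) (hρbar : 0 < ρbar)
    (hconstm : ∀ t ∈ Icc (0:ℝ) T, ∀ y : ℝ, y ≤ -R → ρm (t, y) = ρbar ∧ um (t, y) = ubar)
    (hconstp : ∀ t ∈ Icc (0:ℝ) T, ∀ y : ℝ, R ≤ y → ρp (t, y) = ρbar ∧ up (t, y) = ubar) :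
    (∀ t ∈ Ioo (0:ℝ) T,
      HasDerivAt (fun s => (∫ y in (-R)..(x s), ρm (s, y)) + ∫ y in (x s)..R, ρp (s, y))
        (-(deriv x t) * (ρp (t, x t) - ρm (t, x t))
          + (ρp (t, x t) * up (t, x t) - ρm (t, x t) * um (t, x t))) t) ∧
    ∀ w : ℝ → ℝ, ContDiffOn ℝ 1 w (Icc 0 T) →
      (∀ t ∈ Ioo (0:ℝ) T,
        HasDerivAt (fun s => w s * Real.sqrt (1 + deriv x s ^ 2))
          (deriv x t * (ρp (t, x t) - ρm (t, x t))
            - (ρp (t, x t) * up (t, x t) - ρm (t, x t) * um (t, x t))) t) →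
      ∀ t₁ ∈ Ioo (0:ℝ) T, ∀ t₂ ∈ Ioo (0:ℝ) T,
        ((∫ y in (-R)..(x t₁), ρm (t₁, y)) + ∫ y in (x t₁)..R, ρp (t₁, y))
            + w t₁ * Real.sqrt (1 + deriv x t₁ ^ 2)
          = ((∫ y in (-R)..(x t₂), ρm (t₂, y)) + ∫ y in (x t₂)..R, ρp (t₂, y))
            + w t₂ * Real.sqrt (1 + deriv x t₂ ^ 2) :=
  generalized_mass_conservation_general T x hx R hxR ρm um ρp up hρm hum hρp hup massm massp ρbar
    ubar hconstm hconstp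
end

section
/- Let p₀, μ > 0, T > 0, let x : [0,T] → ℝ be C¹, and let R > 0 with |x(t)| < R for all t. Let (ρ₋,u₋) be C¹ on {(t,y) ∈ [0,T] × ℝ : y ≤ x(t)} and (ρ₊,u₊) be C¹ on {(t,y) : y ≥ x(t)}, each with positive density and solving the Chaplygin gas system ∂_t ρ + ∂_x(ρu) = 0, ∂_t(ρu) + ∂_x(ρu² + p₀ − μ²/ρ) = 0 in the interior of its region, and suppose there are constants ρ̄ > 0, ū such that (ρ₋,u₋)(t,y) = (ρ̄,ū) for y ≤ −R and (ρ₊,u₊)(t,y) = (ρ̄,ū) for y ≥ R. Define the total momentum S_{ρu}(t) := ∫_{−R}^{x(t)} (ρ₋u₋)(t,y) dy + ∫_{x(t)}^{R} (ρ₊u₊)(t,y) dy and write [h](t) := h₊(t,x(t)) − h₋(t,x(t)). Then for all t ∈ (0,T): dS_{ρu}/dt (t) = −ẋ(t)[ρu](t) + [ρu² + p₀ − μ²/ρ](t). Consequently, if w : [0,T] → ℝ is C¹ and satisfies the generalized Rankine–Hugoniot condition d/dt ( w(t) ẋ(t) √(1 + ẋ(t)²) ) = ẋ(t)[ρu](t)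 − [ρu² + p₀ − μ²/ρ](t), then the generalized total momentum S_{ρu}(t) + w(t) ẋ(t) √(1 + ẋ(t)²) is constant in t. -/
open Set

/-!
Substituting `y = x(s) + z` turns each half of `S_{ρu}(s)` into an integral over a fixed
`z`-interval of a function that is `C¹` up to the boundary, plus a term coming from the constant
state, so it may be differentiated under the integral sign. Along `z ↦ (s, x(s) + z)` the momentum
equation gives `∂ₛ(ρu) = ∂ₜ(ρu) + ẋ ∂ᵧ(ρu) = ∂ᵧ(ẋ ρu - (ρu² + p))`, so the derivative is a
difference of boundary fluxes: at the shock these are the jumps in the statement, and at `±R`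
the flux of the constant state cancels against the derivative of the constant-state term.
With the generalized Rankine–Hugoniot condition the generalized momentum then has zero
derivative on `(0, T)`.
-/

open Filter Topology MeasureTheory intervalIntegral Interval

section PartialDerivatives

variable {f : ℝ × ℝ → ℝ} {q : ℝ × ℝ}

theorem pt_eq_fderiv (hf : DifferentiableAt ℝ f q) : pt f q = fderiv ℝ f q (1, 0) :=
  (hf.hasFDerivAt.comp_hasDerivAt q.1
    ((hasDerivAt_id q.1).prodMk (hasDerivAt_const q.1 q.2))).deriv

theorem px_eq_fderiv (hf : DifferentiableAt ℝ f q) : px f q = fderiv ℝ f q (0, 1) :=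
  (hf.hasFDerivAt.comp_hasDerivAt q.2
    ((hasDerivAt_const q.2 q.1).prodMk (hasDerivAt_id q.2))).deriv

theorem hasDerivAt_comp_add_px {t y z : ℝ} (hf : DifferentiableAt ℝ f (t, y + z)) :
    HasDerivAt (fun z => f (t, y + z)) (px f (t, y + z)) z := by
  have hslice : DifferentiableAt ℝ (fun y' => f (t, y')) (y + z) :=
    hf.comp (y + z) ((differentiableAt_const t).prodMk differentiableAt_id)
  exact hslice.hasDerivAt.comp_const_add y z

theorem hasDerivAt_comp_graph_add {x : ℝ → ℝ} {x' t z : ℝ} (hx : HasDerivAt x x' t)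
    (hf : DifferentiableAt ℝ f (t, x t + z)) :
    HasDerivAt (fun s => f (s, x s + z)) (pt f (t, x t + z) + x' * px f (t, x t + z)) t := by
  refine (hf.hasFDerivAt.comp_hasDerivAt t
    ((hasDerivAt_id t).prodMk (hx.add_const z))).congr_deriv ?_
  rw [pt_eq_fderiv hf, px_eq_fderiv hf, ← smul_eq_mul, ← map_smul, ← map_add]
  simp

end PartialDerivatives

theorem hasDerivAt_integral_of_contDiffOn_Icc_prod_Icc {F : ℝ × ℝ → ℝ} {a b c d t : ℝ}
    (hcd : c < d) (hF : ContDiffOn ℝ 1 F (Icc a b ×ˢ Icc c d)) (ht : t ∈ Ioo a b) :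
    IntervalIntegrable (fun z => pt F (t, z)) volume c d ∧
      HasDerivAt (fun s => ∫ z in c..d, F (s, z)) (∫ z in c..d, pt F (t, z)) t := by
  set K := Icc a b ×ˢ Icc c d
  have hK : UniqueDiffOn ℝ K := (uniqueDiffOn_Icc (ht.1.trans ht.2)).prod (uniqueDiffOn_Icc hcd)
  have hslice : ∀ s ∈ Ioo a b, ∀ z ∈ Icc c d,
      HasDerivAt (fun s => F (s, z)) (fderivWithin ℝ F K (s, z) (1, 0)) s := by
    intro s hs z hz
    have hcurve : HasDerivWithinAt (fun s : ℝ => (s, z)) ((1 : ℝ), (0 : ℝ)) (Icc a b) s :=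
      ((hasDerivAt_id s).prodMk (hasDerivAt_const s z)).hasDerivWithinAt
    exact ((hF.differentiableOn one_ne_zero _ ⟨Ioo_subset_Icc_self hs, hz⟩).hasFDerivWithinAt
      |>.comp_hasDerivWithinAt s hcurve fun s' hs' => ⟨hs', hz⟩).hasDerivAt
      (Icc_mem_nhds hs.1 hs.2)
  have hF' : ContinuousOn (fderivWithin ℝ F K) K := hF.continuousOn_fderivWithin hK le_rfl
  obtain ⟨M, hM⟩ := (isCompact_Icc.prod isCompact_Icc).exists_bound_of_continuousOn hF'
  have hbound : ∀ s ∈ Ioo a b, ∀ z ∈ Icc c d, ‖pt F (s, z)‖ ≤ M := fun s hs z hz => by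
    rw [pt, (hslice s hs z hz).deriv]
    calc _ ≤ ‖fderivWithin ℝ F K (s, z)‖ * ‖((1 : ℝ), (0 : ℝ))‖ :=
          ContinuousLinearMap.le_opNorm _ _
      _ ≤ M := by simpa using hM _ ⟨Ioo_subset_Icc_self hs, hz⟩
  have hΙ : Ι c d ⊆ Icc c d := by rw [uIoc_of_le hcd.le]; exact Ioc_subset_Icc_self
  have hsliceF : ∀ s ∈ Icc a b, ContinuousOn (fun z => F (s, z)) (Icc c d) := fun s hs =>
    hF.continuousOn.comp (by fun_prop) fun z hz => ⟨hs, hz⟩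
  have hpt : ContinuousOn (fun z => pt F (t, z)) (Icc c d) :=
    ((hF'.comp (by fun_prop) fun z hz => ⟨Ioo_subset_Icc_self ht, hz⟩).clm_apply
      continuousOn_const).congr fun z hz => (hslice t ht z hz).deriv
  refine hasDerivAt_integral_of_dominated_loc_of_deriv_le (F := fun s z => F (s, z))
    (F' := fun s z => pt F (s, z)) (bound := fun _ => M)
    (Ioo_mem_nhds ht.1 ht.2) ?_ ?_ ((hpt.mono hΙ).aestronglyMeasurable measurableSet_uIoc) ?_
    intervalIntegrable_const ?_
  · filter_upwards [Ioo_mem_nhds ht.1 ht.2] with s hs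
    exact ((hsliceF s (Ioo_subset_Icc_self hs)).mono hΙ).aestronglyMeasurable measurableSet_uIoc
  · exact (hsliceF t (Ioo_subset_Icc_self ht)).intervalIntegrable_of_Icc hcd.le
  · exact ae_of_all _ fun z hz s hs => hbound s hs z (hΙ hz)
  · exact ae_of_all _ fun z hz s hs => (hslice s hs z (hΙ hz)).differentiableAt.hasDerivAt

theorem hasDerivAt_integral_comp_graph_add_of_balance {a b c d t : ℝ} {x : ℝ → ℝ}
    {f P : ℝ × ℝ → ℝ} {S : Set (ℝ × ℝ)} (hcd : c < d) (hx : ContDiffOn ℝ 1 x (Icc a b))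
    (hf : ContDiffOn ℝ 1 f S) (hP : ContDiffOn ℝ 1 P S)
    (hmaps : ∀ s ∈ Icc a b, ∀ z ∈ Icc c d, (s, x s + z) ∈ S)
    (hS : ∀ z ∈ Ioo c d, S ∈ 𝓝 (t, x t + z))
    (hbal : ∀ z ∈ Ioo c d, pt f (t, x t + z) + px P (t, x t + z) = 0) (ht : t ∈ Ioo a b) :
    HasDerivAt (fun s => ∫ z in c..d, f (s, x s + z))
      ((deriv x t * f (t, x t + d) - P (t, x t + d))
        - (deriv x t * f (t, x t + c) - P (t, x t + c))) t := by
  set flux := fun z => deriv x t * f (t, x t + z) - P (t, x t + z)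
  have hgraph : ContDiffOn ℝ 1 (fun p : ℝ × ℝ => (p.1, x p.1 + p.2)) (Icc a b ×ˢ Icc c d) :=
    contDiffOn_fst.prodMk ((hx.comp contDiffOn_fst fun _ hp => hp.1).add contDiffOn_snd)
  have hF : ContDiffOn ℝ 1 (fun p : ℝ × ℝ => f (p.1, x p.1 + p.2)) (Icc a b ×ˢ Icc c d) :=
    hf.comp hgraph fun p hp => hmaps _ hp.1 _ hp.2
  obtain ⟨hint, hderiv⟩ := hasDerivAt_integral_of_contDiffOn_Icc_prod_Icc hcd hF ht
  have hxd : HasDerivAt x (deriv x t) t :=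
    ((hx.differentiableOn one_ne_zero).differentiableAt (Icc_mem_nhds ht.1 ht.2)).hasDerivAt
  have hflux : ∀ z ∈ Ioo c d, HasDerivAt flux (pt (fun p => f (p.1, x p.1 + p.2)) (t, z)) z := by
    intro z hz
    have hfz := (hf.differentiableOn one_ne_zero).differentiableAt (hS z hz)
    have hPz := (hP.differentiableOn one_ne_zero).differentiableAt (hS z hz)
    rw [pt, (hasDerivAt_comp_graph_add hxd hfz).deriv]
    refine (((hasDerivAt_comp_add_px hfz).const_mul (deriv x t)).sub
      (hasDerivAt_comp_add_px hPz)).congr_deriv ?_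
    linarith [hbal z hz]
  have hcont : ContinuousOn flux (Icc c d) := by
    have hmapsT : MapsTo (fun z => (t, x t + z)) (Icc c d) S :=
      fun z hz => hmaps t (Ioo_subset_Icc_self ht) z hz
    exact (continuousOn_const.mul (hf.continuousOn.comp (by fun_prop) hmapsT)).sub
      (hP.continuousOn.comp (by fun_prop) hmapsT)
  rwa [integral_eq_sub_of_hasDerivAt_of_le hcd.le hcont hflux hint] at hderiv

theorem setOf_mem_Icc_and_le_mem_nhds {a b : ℝ} {u v : ℝ × ℝ → ℝ} {q : ℝ × ℝ}
    (hq : q.1 ∈ Ioo a b) (hu : ContinuousAt u q) (hv : ContinuousAt v q) (huv : u q < v q) :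
    {p : ℝ × ℝ | p.1 ∈ Icc a b ∧ u p ≤ v p} ∈ 𝓝 q :=
  inter_mem (continuous_fst.continuousAt.preimage_mem_nhds (Icc_mem_nhds hq.1 hq.2))
    ((hu.eventually_lt hv huv).mono fun _ h => h.le)

section ConstantTail

variable {h : ℝ → ℝ} {X R c : ℝ}

theorem integral_from_neg_eq_shift_of_const (hX : |X| < R)
    (hh : ContinuousOn h (Icc (X - 2 * R) X)) (hc : ∀ y ≤ -R, h y = c) :
    ∫ y in (-R)..X, h y = (∫ z in (-(2 * R))..0, h (X + z)) + c * (X - R) := by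
  have hXR := abs_lt.mp hX
  have hint : ∀ y ∈ Icc (X - 2 * R) X, IntervalIntegrable h volume (X - 2 * R) y := fun y hy =>
    (hh.mono (uIcc_subset_Icc (left_mem_Icc.2 (by linarith)) hy)).intervalIntegrable
  have htail : EqOn h (fun _ => c) (uIcc (X - 2 * R) (-R)) := fun y hy => by
    rw [uIcc_of_le (by linarith)] at hy
    exact hc y hy.2
  have hsplit := integral_interval_sub_left (hint X (right_mem_Icc.2 (by linarith)))
    (hint (-R) ⟨by linarith, by linarith⟩)
  rw [integral_congr htail, intervalIntegral.integral_const, smul_eq_mul] at hsplit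
  rw [integral_comp_add_left h, add_zero, ← sub_eq_add_neg]
  linarith

theorem integral_to_eq_shift_of_const (hX : |X| < R)
    (hh : ContinuousOn h (Icc X (X + 2 * R))) (hc : ∀ y, R ≤ y → h y = c) :
    ∫ y in X..R, h y = (∫ z in (0 : ℝ)..(2 * R), h (X + z)) - c * (X + R) := by
  have hXR := abs_lt.mp hX
  have hint : ∀ y ∈ Icc X (X + 2 * R), IntervalIntegrable h volume X y := fun y hy =>
    (hh.mono (uIcc_subset_Icc (left_mem_Icc.2 (by linarith)) hy)).intervalIntegrable
  have htail : EqOn h (fun _ => c) (uIcc (X + 2 * R) R) := fun y hy => by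
    rw [uIcc_of_ge (by linarith)] at hy
    exact hc y hy.1
  have hsplit := integral_interval_sub_left (hint R ⟨by linarith, by linarith⟩)
    (hint (X + 2 * R) (right_mem_Icc.2 (by linarith)))
  rw [integral_congr htail, intervalIntegral.integral_const, smul_eq_mul] at hsplit
  rw [integral_comp_add_left h, add_zero]
  linarith

end ConstantTail

section Graph

variable {a b R c d t : ℝ} {x : ℝ → ℝ} {f P : ℝ × ℝ → ℝ}

theorem hasDerivAt_integral_below_graph (hx : ContDiffOn ℝ 1 x (Icc a b))
    (hxR : ∀ s ∈ Icc a b, |x s| < R)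
    (hf : ContDiffOn ℝ 1 f {q | q.1 ∈ Icc a b ∧ q.2 ≤ x q.1})
    (hP : ContDiffOn ℝ 1 P {q | q.1 ∈ Icc a b ∧ q.2 ≤ x q.1})
    (hbal : ∀ q : ℝ × ℝ, q.1 ∈ Ioo a b → q.2 < x q.1 → pt f q + px P q = 0)
    (hconst : ∀ s ∈ Icc a b, ∀ y ≤ -R, f (s, y) = c ∧ P (s, y) = d) (ht : t ∈ Ioo a b) :
    HasDerivAt (fun s => ∫ y in (-R)..(x s), f (s, y)) (deriv x t * f (t, x t) - P (t, x t) + d)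
      t := by
  have hxt := abs_lt.mp (hxR t (Ioo_subset_Icc_self ht))
  have hxd : HasDerivAt x (deriv x t) t :=
    ((hx.differentiableOn one_ne_zero).differentiableAt (Icc_mem_nhds ht.1 ht.2)).hasDerivAt
  have hshift := hasDerivAt_integral_comp_graph_add_of_balance (c := -(2 * R)) (d := 0)
    (neg_lt_zero.mpr (by linarith)) hx hf hP (fun s hs z hz => ⟨hs, by linarith [hz.2]⟩)
    (fun z hz => setOf_mem_Icc_and_le_mem_nhds ht continuous_snd.continuousAt
      (hxd.continuousAt.comp continuous_fst.continuousAt) (by simpa using hz.2))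
    (fun z hz => hbal _ ht (by simpa using hz.2)) ht
  have hrep : ∀ s ∈ Icc a b, ∫ y in (-R)..(x s), f (s, y)
      = (∫ z in (-(2 * R))..0, f (s, x s + z)) + c * (x s - R) := fun s hs =>
    integral_from_neg_eq_shift_of_const (hxR s hs)
      (hf.continuousOn.comp (by fun_prop) fun y hy => ⟨hs, hy.2⟩) fun y hy => (hconst s hs y hy).1
  refine ((hshift.add ((hxd.sub_const R).const_mul c)).congr_of_eventuallyEq
    (eventuallyEq_of_mem (Icc_mem_nhds ht.1 ht.2) hrep)).congr_deriv ?_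
  obtain ⟨hc, hd⟩ := hconst t (Ioo_subset_Icc_self ht) (x t + -(2 * R)) (by linarith)
  rw [hc, hd, add_zero]
  ring

theorem hasDerivAt_integral_above_graph (hx : ContDiffOn ℝ 1 x (Icc a b))
    (hxR : ∀ s ∈ Icc a b, |x s| < R)
    (hf : ContDiffOn ℝ 1 f {q | q.1 ∈ Icc a b ∧ x q.1 ≤ q.2})
    (hP : ContDiffOn ℝ 1 P {q | q.1 ∈ Icc a b ∧ x q.1 ≤ q.2})
    (hbal : ∀ q : ℝ × ℝ, q.1 ∈ Ioo a b → x q.1 < q.2 → pt f q + px P q = 0)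
    (hconst : ∀ s ∈ Icc a b, ∀ y, R ≤ y → f (s, y) = c ∧ P (s, y) = d) (ht : t ∈ Ioo a b) :
    HasDerivAt (fun s => ∫ y in (x s)..R, f (s, y)) (-deriv x t * f (t, x t) + P (t, x t) - d)
      t := by
  have hxt := abs_lt.mp (hxR t (Ioo_subset_Icc_self ht))
  have hxd : HasDerivAt x (deriv x t) t :=
    ((hx.differentiableOn one_ne_zero).differentiableAt (Icc_mem_nhds ht.1 ht.2)).hasDerivAt
  have hshift := hasDerivAt_integral_comp_graph_add_of_balance (c := 0) (d := 2 * R)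
    (by linarith) hx hf hP (fun s hs z hz => ⟨hs, by linarith [hz.1]⟩)
    (fun z hz => setOf_mem_Icc_and_le_mem_nhds ht
      (hxd.continuousAt.comp continuous_fst.continuousAt) continuous_snd.continuousAt
      (by simpa using hz.1))
    (fun z hz => hbal _ ht (by simpa using hz.1)) ht
  have hrep : ∀ s ∈ Icc a b, ∫ y in (x s)..R, f (s, y)
      = (∫ z in (0 : ℝ)..(2 * R), f (s, x s + z)) - c * (x s + R) := fun s hs =>
    integral_to_eq_shift_of_const (hxR s hs)
      (hf.continuousOn.comp (by fun_prop) fun y hy => ⟨hs, hy.1⟩) fun y hy => (hconst s hs y hy).1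
  refine ((hshift.sub ((hxd.add_const R).const_mul c)).congr_of_eventuallyEq
    (eventuallyEq_of_mem (Icc_mem_nhds ht.1 ht.2) hrep)).congr_deriv ?_
  obtain ⟨hc, hd⟩ := hconst t (Ioo_subset_Icc_self ht) (x t + 2 * R) (by linarith)
  rw [hc, hd, add_zero]
  ring

end Graph

theorem contDiffOn_chaplygin_momentum_flux {S : Set (ℝ × ℝ)} {ρ u : ℝ × ℝ → ℝ} (p₀ μ : ℝ)
    (hρ : ContDiffOn ℝ 1 ρ S) (hu : ContDiffOn ℝ 1 u S) (hpos : ∀ q ∈ S, 0 < ρ q) :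
    ContDiffOn ℝ 1 (fun q => ρ q * u q ^ 2 + p₀ - μ ^ 2 / ρ q) S :=
  ((hρ.mul (hu.pow 2)).add contDiffOn_const).sub
    (contDiffOn_const.div hρ fun q hq => (hpos q hq).ne')

theorem generalized_momentum_conservation_general
    (p₀ μ T : ℝ)
    (x : ℝ → ℝ) (hx : ContDiffOn ℝ 1 x (Icc 0 T))
    (R : ℝ) (hxR : ∀ t ∈ Icc (0:ℝ) T, |x t| < R)
    (ρm um ρp up : ℝ × ℝ → ℝ)
    (hρm : ContDiffOn ℝ 1 ρm {q : ℝ × ℝ | q.1 ∈ Icc 0 T ∧ q.2 ≤ x q.1})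
    (hum : ContDiffOn ℝ 1 um {q : ℝ × ℝ | q.1 ∈ Icc 0 T ∧ q.2 ≤ x q.1})
    (hρp : ContDiffOn ℝ 1 ρp {q : ℝ × ℝ | q.1 ∈ Icc 0 T ∧ x q.1 ≤ q.2})
    (hup : ContDiffOn ℝ 1 up {q : ℝ × ℝ | q.1 ∈ Icc 0 T ∧ x q.1 ≤ q.2})
    (hρmpos : ∀ q ∈ {q : ℝ × ℝ | q.1 ∈ Icc 0 T ∧ q.2 ≤ x q.1}, 0 < ρm q)
    (hρppos : ∀ q ∈ {q : ℝ × ℝ | q.1 ∈ Icc 0 T ∧ x q.1 ≤ q.2}, 0 < ρp q)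
    (momentumm : ∀ q ∈ {q : ℝ × ℝ | 0 < q.1 ∧ q.1 < T ∧ q.2 < x q.1},
      pt (fun q => ρm q * um q) q
        + px (fun q => ρm q * um q ^ 2 + p₀ - μ ^ 2 / ρm q) q = 0)
    (momentump : ∀ q ∈ {q : ℝ × ℝ | 0 < q.1 ∧ q.1 < T ∧ x q.1 < q.2},
      pt (fun q => ρp q * up q) q
        + px (fun q => ρp q * up q ^ 2 + p₀ - μ ^ 2 / ρp q) q = 0)
    (ρbar ubar : ℝ)
    (hconstm : ∀ t ∈ Icc (0:ℝ) T, ∀ y : ℝ, y ≤ -R → ρm (t, y) = ρbar ∧ um (t, y) = ubar)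
    (hconstp : ∀ t ∈ Icc (0:ℝ) T, ∀ y : ℝ, R ≤ y → ρp (t, y) = ρbar ∧ up (t, y) = ubar) :
    (∀ t ∈ Ioo (0:ℝ) T,
      HasDerivAt (fun s => (∫ y in (-R)..(x s), ρm (s, y) * um (s, y))
          + ∫ y in (x s)..R, ρp (s, y) * up (s, y))
        (-(deriv x t) * (ρp (t, x t) * up (t, x t) - ρm (t, x t) * um (t, x t))
          + ((ρp (t, x t) * up (t, x t) ^ 2 + p₀ - μ ^ 2 / ρp (t, x t))
            - (ρm (t, x t) * um (t, x t) ^ 2 + p₀ - μ ^ 2 / ρm (t, x t)))) t) ∧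
    ∀ w : ℝ → ℝ, ContDiffOn ℝ 1 w (Icc 0 T) →
      (∀ t ∈ Ioo (0:ℝ) T,
        HasDerivAt (fun s => w s * deriv x s * Real.sqrt (1 + deriv x s ^ 2))
          (deriv x t * (ρp (t, x t) * up (t, x t) - ρm (t, x t) * um (t, x t))
            - ((ρp (t, x t) * up (t, x t) ^ 2 + p₀ - μ ^ 2 / ρp (t, x t))
              - (ρm (t, x t) * um (t, x t) ^ 2 + p₀ - μ ^ 2 / ρm (t, x t)))) t) →
      ∀ t₁ ∈ Ioo (0:ℝ) T, ∀ t₂ ∈ Ioo (0:ℝ) T,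
        ((∫ y in (-R)..(x t₁), ρm (t₁, y) * um (t₁, y))
            + ∫ y in (x t₁)..R, ρp (t₁, y) * up (t₁, y))
            + w t₁ * deriv x t₁ * Real.sqrt (1 + deriv x t₁ ^ 2)
          = ((∫ y in (-R)..(x t₂), ρm (t₂, y) * um (t₂, y))
            + ∫ y in (x t₂)..R, ρp (t₂, y) * up (t₂, y))
            + w t₂ * deriv x t₂ * Real.sqrt (1 + deriv x t₂ ^ 2) := by
  have hbalance : ∀ t ∈ Ioo (0:ℝ) T,
      HasDerivAt (fun s => (∫ y in (-R)..(x s), ρm (s, y) * um (s, y))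
          + ∫ y in (x s)..R, ρp (s, y) * up (s, y))
        (-(deriv x t) * (ρp (t, x t) * up (t, x t) - ρm (t, x t) * um (t, x t))
          + ((ρp (t, x t) * up (t, x t) ^ 2 + p₀ - μ ^ 2 / ρp (t, x t))
            - (ρm (t, x t) * um (t, x t) ^ 2 + p₀ - μ ^ 2 / ρm (t, x t)))) t := by
    intro t ht
    have hminus := hasDerivAt_integral_below_graph hx hxR (hρm.mul hum)
      (contDiffOn_chaplygin_momentum_flux p₀ μ hρm hum hρmpos)
      (fun q hq hlt => momentumm q ⟨hq.1, hq.2, hlt⟩)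
      (fun s hs y hy => by simp only [hconstm s hs y hy]; exact ⟨rfl, rfl⟩) ht
    have hplus := hasDerivAt_integral_above_graph hx hxR (hρp.mul hup)
      (contDiffOn_chaplygin_momentum_flux p₀ μ hρp hup hρppos)
      (fun q hq hlt => momentump q ⟨hq.1, hq.2, hlt⟩)
      (fun s hs y hy => by simp only [hconstp s hs y hy]; exact ⟨rfl, rfl⟩) ht
    exact (hminus.fun_add hplus).congr_deriv (by ring)
  refine ⟨hbalance, fun w _ hRH t₁ ht₁ t₂ ht₂ => ?_⟩
  have hsum := fun t ht => (hbalance t ht).fun_add (hRH t ht)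
  exact isOpen_Ioo.is_const_of_deriv_eq_zero isPreconnected_Ioo
    (fun t ht => (hsum t ht).differentiableAt.differentiableWithinAt)
    (fun t ht => (hsum t ht).deriv.trans (by rw [Pi.zero_apply]; ring)) ht₁ ht₂

/-- Theorem 4.1 (momentum part): the balance law `Ṡ_{ρu} = −ẋ[ρu] + [ρu² + p(ρ)]` holds,
and with the second generalized Rankine–Hugoniot condition the generalized total momentum
`S_{ρu}(t) + w(t)ẋ(t)√(1+ẋ(t)²)` is conserved. -/
theorem generalized_momentum_conservation
    (p₀ μ T : ℝ) (hp₀ : 0 < p₀) (hμ : 0 < μ) (hT : 0 < T)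
    (x : ℝ → ℝ) (hx : ContDiffOn ℝ 1 x (Icc 0 T))
    (R : ℝ) (hR : 0 < R) (hxR : ∀ t ∈ Icc (0:ℝ) T, |x t| < R)
    (ρm um ρp up : ℝ × ℝ → ℝ)
    (hρm : ContDiffOn ℝ 1 ρm {q : ℝ × ℝ | q.1 ∈ Icc 0 T ∧ q.2 ≤ x q.1})
    (hum : ContDiffOn ℝ 1 um {q : ℝ × ℝ | q.1 ∈ Icc 0 T ∧ q.2 ≤ x q.1})
    (hρp : ContDiffOn ℝ 1 ρp {q : ℝ × ℝ | q.1 ∈ Icc 0 T ∧ x q.1 ≤ q.2})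
    (hup : ContDiffOn ℝ 1 up {q : ℝ × ℝ | q.1 ∈ Icc 0 T ∧ x q.1 ≤ q.2})
    (hρmpos : ∀ q ∈ {q : ℝ × ℝ | q.1 ∈ Icc 0 T ∧ q.2 ≤ x q.1}, 0 < ρm q)
    (hρppos : ∀ q ∈ {q : ℝ × ℝ | q.1 ∈ Icc 0 T ∧ x q.1 ≤ q.2}, 0 < ρp q)
    (massm : ∀ q ∈ {q : ℝ × ℝ | 0 < q.1 ∧ q.1 < T ∧ q.2 < x q.1},
      pt ρm q + px (fun q => ρm q * um q) q = 0)
    (momentumm : ∀ q ∈ {q : ℝ × ℝ | 0 < q.1 ∧ q.1 < T ∧ q.2 < x q.1},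
      pt (fun q => ρm q * um q) q
        + px (fun q => ρm q * um q ^ 2 + p₀ - μ ^ 2 / ρm q) q = 0)
    (massp : ∀ q ∈ {q : ℝ × ℝ | 0 < q.1 ∧ q.1 < T ∧ x q.1 < q.2},
      pt ρp q + px (fun q => ρp q * up q) q = 0)
    (momentump : ∀ q ∈ {q : ℝ × ℝ | 0 < q.1 ∧ q.1 < T ∧ x q.1 < q.2},
      pt (fun q => ρp q * up q) q
        + px (fun q => ρp q * up q ^ 2 + p₀ - μ ^ 2 / ρp q) q = 0)
    (ρbar ubar : ℝ) (hρbar : 0 < ρbar)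
    (hconstm : ∀ t ∈ Icc (0:ℝ) T, ∀ y : ℝ, y ≤ -R → ρm (t, y) = ρbar ∧ um (t, y) = ubar)
    (hconstp : ∀ t ∈ Icc (0:ℝ) T, ∀ y : ℝ, R ≤ y → ρp (t, y) = ρbar ∧ up (t, y) = ubar) :
    (∀ t ∈ Ioo (0:ℝ) T,
      HasDerivAt (fun s => (∫ y in (-R)..(x s), ρm (s, y) * um (s, y))
          + ∫ y in (x s)..R, ρp (s, y) * up (s, y))
        (-(deriv x t) * (ρp (t, x t) * up (t, x t) - ρm (t, x t) * um (t, x t))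
          + ((ρp (t, x t) * up (t, x t) ^ 2 + p₀ - μ ^ 2 / ρp (t, x t))
            - (ρm (t, x t) * um (t, x t) ^ 2 + p₀ - μ ^ 2 / ρm (t, x t)))) t) ∧
    ∀ w : ℝ → ℝ, ContDiffOn ℝ 1 w (Icc 0 T) →
      (∀ t ∈ Ioo (0:ℝ) T,
        HasDerivAt (fun s => w s * deriv x s * Real.sqrt (1 + deriv x s ^ 2))
          (deriv x t * (ρp (t, x t) * up (t, x t) - ρm (t, x t) * um (t, x t))
            - ((ρp (t, x t) * up (t, x t) ^ 2 + p₀ - μ ^ 2 / ρp (t, x t))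
              - (ρm (t, x t) * um (t, x t) ^ 2 + p₀ - μ ^ 2 / ρm (t, x t)))) t) →
      ∀ t₁ ∈ Ioo (0:ℝ) T, ∀ t₂ ∈ Ioo (0:ℝ) T,
        ((∫ y in (-R)..(x t₁), ρm (t₁, y) * um (t₁, y))
            + ∫ y in (x t₁)..R, ρp (t₁, y) * up (t₁, y))
            + w t₁ * deriv x t₁ * Real.sqrt (1 + deriv x t₁ ^ 2)
          = ((∫ y in (-R)..(x t₂), ρm (t₂, y) * um (t₂, y))
            + ∫ y in (x t₂)..R, ρp (t₂, y) * up (t₂, y))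
            + w t₂ * deriv x t₂ * Real.sqrt (1 + deriv x t₂ ^ 2) :=
  generalized_momentum_conservation_general p₀ μ T x hx R hxR ρm um ρp up hρm hum hρp hup hρmpos
    hρppos momentumm momentump ρbar ubar hconstm hconstp
end
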